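/- arXiv:math/0508041 — 7 statements merged into one kernel-verified Lean document; each statement's English description precedes it below -/
import Mathlib

section
/- For any permutation π of [n] and positive integers k, l, we have Ω(π; kl) = Σ_{στ = π} Ω(σ; k)·Ω(τ; l), where the sum is over all pairs of permutations σ, τ of [n] with στ = π, and Ω(π; m) = C(m + n - 1 - des(π), n) is the order polynomial of π. -/
open scoped Classical

noncomputable section

/-- The value of `π` at the 1-based position `i`, with the convention
`π(0) = π(n+1) = 0` and values in `{1, …, n}`. -/
def pval {n : ℕ} (π : Equiv.Perm (Fin n)) (i : ℕ) : ℕ :=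
  if h : 1 ≤ i ∧ i ≤ n then ((π ⟨i - 1, by omega⟩ : Fin n) : ℕ) + 1 else 0

/-- The descent set of `π`: positions `1 ≤ s ≤ n-1` with `π(s) > π(s+1)`. -/
def desSet {n : ℕ} (π : Equiv.Perm (Fin n)) : Finset ℕ :=
  (Finset.Ico 1 n).filter fun s => pval π (s + 1) < pval π s

/-- The descent number of `π`. -/
def des {n : ℕ} (π : Equiv.Perm (Fin n)) : ℕ := (desSet π).card

/-- The order polynomial `Ω(π; m) = C(m + n - 1 - des(π), n)`. -/
def ordPoly {n : ℕ} (π : Equiv.Perm (Fin n)) (m : ℕ) : ℕ :=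
  Nat.choose (m + n - 1 - des π) n

/-! Read along `π`, a word `f : Fin n → Fin m` whose stable sorting permutation is `π` is a
chain `f (π 0) ≤ ⋯ ≤ f (π (n-1))` whose steps at the descents of `π` are strict, so there are
`Ω(π; m)` such words: adding to each entry the number of weak steps before it turns these chains
bijectively into strictly increasing sequences in `Fin (m + n - 1 - des π)`.

Now `Fin (k * l)` is order isomorphic to `Fin l ×ₗ Fin k`, and a word of lexicographic pairs is
stably sorted by first sorting its `Fin k`-coordinates (permutation `σ`) and then stably sorting
its `Fin l`-coordinates read in that order (permutation `τ`). So its sorting permutation is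
`σ * τ`, and the word is recovered from its `Fin k`-word and its reordered `Fin l`-word, which
can be chosen independently. -/

open Finset

lemma card_filter_strictMono (n N : ℕ) :
    #{F : Fin n → Fin N | StrictMono F} = N.choose n :=
  calc _ = Fintype.card {F : Fin n → Fin N // StrictMono F} := (Fintype.card_subtype _).symm
    _ = Fintype.card {s : Finset (Fin N) // #s = n} := Fintype.card_congr
      { toFun := fun F => ⟨univ.map ⟨F.1, F.2.injective⟩, by simp⟩
        invFun := fun s => ⟨s.1.orderEmbOfFin s.2, (s.1.orderEmbOfFin s.2).strictMono⟩
        left_inv := fun F => Subtype.ext (orderEmbOfFin_unique _ (by simp) F.2).symm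
        right_inv := fun s => Subtype.ext <| coe_injective <| by simp }
    _ = N.choose n := by rw [Fintype.card_finset_len, Fintype.card_fin]

lemma Fin.val_le_of_strictMono {n : ℕ} {b : Fin (n + 1) → ℕ} (hb : StrictMono b)
    (p : Fin (n + 1)) : (p : ℕ) ≤ b p := by
  induction p using Fin.induction with
  | zero => simp
  | succ i ih =>
    have := hb i.castSucc_lt_succ
    simp only [Fin.val_succ, Fin.val_castSucc] at ih ⊢
    omega

section Chains

variable {n : ℕ} (D : Finset ℕ)

/-- Steps are numbered from `1`, as in `desSet`: step `s` compares positions `s - 1` and `s`. -/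
def IsChainStrictAt {α : Type*} [Preorder α] (a : Fin (n + 1) → α) : Prop :=
  ∀ i : Fin n, a i.castSucc ≤ a i.succ ∧ ((i.succ : ℕ) ∈ D → a i.castSucc < a i.succ)

def weakStepCount (p : ℕ) : ℕ := #(Icc 1 p \ D)

lemma weakStepCount_succ (p : ℕ) :
    weakStepCount D (p + 1) = weakStepCount D p + if p + 1 ∈ D then 0 else 1 := by
  rw [weakStepCount, weakStepCount, ← insert_Icc_right_eq_Icc_add_one (by omega)]
  split_ifs with h
  · rw [insert_sdiff_of_mem _ h, add_zero]
  · rw [insert_sdiff_of_notMem _ h, card_insert_of_notMem (by simp)]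

lemma weakStepCount_le (p : ℕ) : weakStepCount D p ≤ p :=
  (card_le_card sdiff_subset).trans (by simp)

lemma weakStepCount_of_subset (hD : D ⊆ Icc 1 n) : weakStepCount D n = n - #D := by
  rw [weakStepCount, card_sdiff_of_subset hD, Nat.card_Icc, Nat.add_sub_cancel]

lemma IsChainStrictAt.monotone {α : Type*} [Preorder α] {D : Finset ℕ} {a : Fin (n + 1) → α}
    (h : IsChainStrictAt D a) : Monotone a :=
  Fin.monotone_iff_le_succ.2 fun i => (h i).1

lemma isChainStrictAt_iff_strictMono (a : Fin (n + 1) → ℕ) :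
    IsChainStrictAt D a ↔ StrictMono fun p => a p + weakStepCount D p := by
  rw [Fin.strictMono_iff_lt_succ]
  refine forall_congr' fun i => ?_
  rw [Fin.val_succ, weakStepCount_succ, Fin.val_castSucc]
  split_ifs with h <;> simp only [h, true_implies, false_implies, and_true] <;> omega

lemma isChainStrictAt_sub_weakStepCount {b : Fin (n + 1) → ℕ} (hb : StrictMono b) :
    IsChainStrictAt D fun p => b p - weakStepCount D p := by
  have hle (p : Fin (n + 1)) : weakStepCount D p ≤ b p :=
    (weakStepCount_le D p).trans (Fin.val_le_of_strictMono hb p)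
  refine (isChainStrictAt_iff_strictMono D _).2 fun p q hpq => ?_
  have := hb hpq
  simp only [Nat.sub_add_cancel (hle p), Nat.sub_add_cancel (hle q), this]

theorem card_isChainStrictAt (hD : D ⊆ Icc 1 n) (m : ℕ) :
    #{a : Fin (n + 1) → Fin m | IsChainStrictAt D a} = (m + n - #D).choose (n + 1) := by
  have hlast := weakStepCount_of_subset D hD
  have hDn : #D ≤ n := by simpa using card_le_card hD
  have hle {b : Fin (n + 1) → Fin (m + n - #D)} (hb : StrictMono b) (p : Fin (n + 1)) :
      weakStepCount D p ≤ b p :=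
    (weakStepCount_le D p).trans (Fin.val_le_of_strictMono hb p)
  rw [← card_filter_strictMono]
  refine card_bij' (fun a ha p => ⟨a p + weakStepCount D p, ?_⟩)
    (fun b hb p => ⟨b p - weakStepCount D p, ?_⟩)
    (fun a ha => mem_filter.2 ⟨mem_univ _, ?_⟩) (fun b hb => mem_filter.2 ⟨mem_univ _, ?_⟩)
    (fun a _ => ?_) (fun b hb => ?_)
  · have hmono := ((isChainStrictAt_iff_strictMono D fun p => (a p : ℕ)).1
      (mem_filter.1 ha).2).monotone (Fin.le_last p)
    have hm := (a (Fin.last n)).isLt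
    simp only [Fin.val_last] at hmono
    omega
  · have hmono := (isChainStrictAt_sub_weakStepCount D (mem_filter.1 hb).2).monotone
      (Fin.le_last p)
    have hN := (b (Fin.last n)).isLt
    have hwb := hle (mem_filter.1 hb).2 (Fin.last n)
    simp only [Fin.val_last] at hmono hwb
    omega
  · exact (isChainStrictAt_iff_strictMono D _).1 (mem_filter.1 ha).2
  · exact isChainStrictAt_sub_weakStepCount D (mem_filter.1 hb).2
  · ext p
    simp
  · ext p
    have := hle (mem_filter.1 hb).2 p
    simp only
    omega

end Chains

lemma succ_mem_desSet_iff {n : ℕ} (π : Equiv.Perm (Fin (n + 1))) (i : Fin n) :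
    (i.succ : ℕ) ∈ desSet π ↔ π i.succ < π i.castSucc := by
  change _ ↔ π ⟨i + 1, by omega⟩ < π ⟨i, by omega⟩
  simp [desSet, pval]

lemma desSet_subset_Icc {n : ℕ} (π : Equiv.Perm (Fin (n + 1))) : desSet π ⊆ Icc 1 n :=
  filter_subset _ _

lemma sort_eq_iff_isChainStrictAt {α : Type*} [LinearOrder α] {n : ℕ}
    (π : Equiv.Perm (Fin (n + 1))) (f : Fin (n + 1) → α) :
    Tuple.sort f = π ↔ IsChainStrictAt (desSet π) (f ∘ π) := by
  rw [eq_comm, Tuple.eq_sort_iff', Fin.strictMono_iff_lt_succ]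
  refine forall_congr' fun i => ?_
  change toLex (f (π i.castSucc), π i.castSucc) < toLex (f (π i.succ), π i.succ) ↔
    f (π i.castSucc) ≤ f (π i.succ) ∧ (_ → f (π i.castSucc) < f (π i.succ))
  have hne : π i.castSucc ≠ π i.succ := π.injective.ne i.castSucc_lt_succ.ne
  rw [Prod.Lex.toLex_lt_toLex', succ_mem_desSet_iff]
  refine and_congr_right fun hle => ⟨fun h hdes => ?_, fun h heq => ?_⟩
  · exact hle.lt_of_ne fun heq => lt_asymm (h heq) hdes
  · exact hne.lt_or_gt.resolve_right fun hdes => (h hdes).ne heq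

def sortFiber (α : Type*) [LinearOrder α] [Fintype α] {n : ℕ} (π : Equiv.Perm (Fin n)) :
    Finset (Fin n → α) :=
  {f | Tuple.sort f = π}

theorem card_sortFiber_fin {n : ℕ} (π : Equiv.Perm (Fin n)) (m : ℕ) :
    #(sortFiber (Fin m) π) = ordPoly π m := by
  cases n with
  | zero => simp [sortFiber, ordPoly, Subsingleton.elim _ π]
  | succ n =>
    rw [ordPoly, des, show m + (n + 1) - 1 - #(desSet π) = m + n - #(desSet π) by omega,
      ← card_isChainStrictAt _ (desSet_subset_Icc π)]
    refine card_equiv (π.symm.arrowCongr (Equiv.refl _)) fun f => ?_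
    simp only [sortFiber, mem_filter, mem_univ, true_and, sort_eq_iff_isChainStrictAt]
    rfl

section LexSort

variable {α β : Type*} [LinearOrder α] [LinearOrder β] {n : ℕ}

lemma Tuple.sort_comp_strictMono {g : α → β} (hg : StrictMono g) (f : Fin n → α) :
    Tuple.sort (g ∘ f) = Tuple.sort f := by
  obtain ⟨hmono, hties⟩ := Tuple.eq_sort_iff.1 (rfl : Tuple.sort f = Tuple.sort f)
  exact (Tuple.eq_sort_iff.2
    ⟨hg.monotone.comp hmono, fun i j hij h => hties i j hij (hg.injective h)⟩).symm

lemma card_sortFiber_congr [Fintype α] [Fintype β] (e : α ≃o β) (π : Equiv.Perm (Fin n)) :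
    #(sortFiber α π) = #(sortFiber β π) :=
  card_equiv (Equiv.arrowCongr (Equiv.refl _) e.toEquiv) fun f => by
    change f ∈ sortFiber α π ↔ e ∘ f ∈ sortFiber β π
    simp [sortFiber, Tuple.sort_comp_strictMono e.strictMono]

variable (α β n) in
def sortLexEquiv : (Fin n → β) × (Fin n → α) ≃ (Fin n → α ×ₗ β) where
  toFun x i := toLex (x.2 ((Tuple.sort x.1)⁻¹ i), x.1 i)
  invFun H := (fun i => (ofLex (H i)).2,
    fun i => (ofLex (H (Tuple.sort (fun j => (ofLex (H j)).2) i))).1)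
  left_inv x := by ext <;> simp
  right_inv H := by ext i; simp

lemma sort_sortLexEquiv (x : (Fin n → β) × (Fin n → α)) :
    Tuple.sort (sortLexEquiv α β n x) = Tuple.sort x.1 * Tuple.sort x.2 := by
  obtain ⟨f, g⟩ := x
  set σ := Tuple.sort f
  set τ := Tuple.sort g
  have hf := Tuple.eq_sort_iff.1 (rfl : σ = Tuple.sort f)
  have hg := Tuple.eq_sort_iff.1 (rfl : τ = Tuple.sort g)
  have happly (i : Fin n) :
      sortLexEquiv α β n (f, g) ((σ * τ) i) = toLex (g (τ i), f (σ (τ i))) := by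
    simp [sortLexEquiv, σ]
  refine (Tuple.eq_sort_iff.2 ⟨fun a b hab => ?_, fun i j hij heq => ?_⟩).symm
  · simp only [Function.comp_apply, happly, Prod.Lex.toLex_le_toLex']
    refine ⟨hg.1 hab, fun heq => hf.1 ?_⟩
    rcases hab.eq_or_lt with rfl | hlt
    · exact le_rfl
    · exact (hg.2 a b hlt heq).le
  · simp only [happly, toLex_inj, Prod.mk.injEq] at heq
    exact hf.2 _ _ (hg.2 i j hij heq.1) heq.2

theorem card_sortFiber_lex [Fintype α] [Fintype β] (π : Equiv.Perm (Fin n)) :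
    #(sortFiber (α ×ₗ β) π) =
      ∑ p ∈ univ.filter (fun p : Equiv.Perm (Fin n) × Equiv.Perm (Fin n) => p.1 * p.2 = π),
        #(sortFiber β p.1) * #(sortFiber α p.2) := by
  rw [← card_equiv (sortLexEquiv α β n) (s := {x | Tuple.sort x.1 * Tuple.sort x.2 = π})
      (by simp [sortFiber, sort_sortLexEquiv]),
    card_eq_sum_card_fiberwise (f := fun x => (Tuple.sort x.1, Tuple.sort x.2))
      (t := univ.filter fun p => p.1 * p.2 = π) (by simp [Set.MapsTo])]
  refine sum_congr rfl fun p hp => ?_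
  rw [← card_product]
  congr 1
  ext x
  simp only [sortFiber, mem_filter, mem_univ, true_and, mem_product, Prod.ext_iff] at hp ⊢
  exact ⟨And.right, fun h => ⟨h.1 ▸ h.2 ▸ hp, h⟩⟩

end LexSort

theorem stmt1_general (n k l : ℕ) (π : Equiv.Perm (Fin n)) :
    ordPoly π (k * l) =
      ∑ p ∈ Finset.univ.filter
          (fun p : Equiv.Perm (Fin n) × Equiv.Perm (Fin n) => p.1 * p.2 = π),
        ordPoly p.1 k * ordPoly p.2 l := by
  simp_rw [← card_sortFiber_fin]
  rw [card_sortFiber_congr (monoEquivOfFin (Fin l ×ₗ Fin k) (by simp [mul_comm])),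
    card_sortFiber_lex]

theorem stmt1 (n k l : ℕ) (hk : 0 < k) (hl : 0 < l) (π : Equiv.Perm (Fin n)) :
    ordPoly π (k * l) =
      ∑ p ∈ Finset.univ.filter
          (fun p : Equiv.Perm (Fin n) × Equiv.Perm (Fin n) => p.1 * p.2 = π),
        ordPoly p.1 k * ordPoly p.2 l :=
  stmt1_general n k l π
end
end

section
/- In the rational group algebra of the symmetric group S_n, the elements e_1, ..., e_n defined as the coefficients of the structure polynomial φ(x) = Σ_{π ∈ S_n} C(x + n - 1 - des(π), n)·π = Σ_{i=1}^n e_i x^i are mutually orthogonal idempotents: e_i e_j = δ_{ij} e_i. -/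
open scoped Classical

noncomputable section

/-- The rational binomial coefficient `C(x, m)`, a polynomial of degree `m` in `x`. -/
def ratChoose (x : ℚ) (m : ℕ) : ℚ :=
  (∏ j ∈ Finset.range m, (x - (j : ℚ))) / (Nat.factorial m : ℚ)

/-!
For a finite linear order `α` of size `m`, `φ(m)` is the sum, over all words `w : Fin n → α`, of
the permutation that stably sorts `w`. Indeed, after composing with `π`, the words sorted by `π`
are the weakly increasing words that increase strictly at the descents of `π`; adding to the
`i`-th letter the number of non-descents before position `i` turns them into the strictly
increasing words over an alphabet of size `m + n - 1 - des π`, and there are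
`C(m + n - 1 - des π, n)` of those.

Sorting a word over the lexicographic product `β ×ₗ α` amounts to sorting it by its `α`-letters
and then stably by its `β`-letters, so `φ(a) φ(b) = φ(a b)` for all natural `a`, `b`. Comparing
coefficients in `∑ a ^ i b ^ j e_i e_j = ∑ (a b) ^ i e_i` gives `e_i e_j = δ_ij e_i`.
-/

open Finset

namespace Tuple

variable {n : ℕ} {α β : Type*} [LinearOrder α] [LinearOrder β]

theorem sort_eq_iff_strictMono (f : Fin n → α) (σ : Equiv.Perm (Fin n)) :
    sort f = σ ↔ StrictMono fun i => toLex (f (σ i), σ i) := by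
  rw [eq_comm, eq_sort_iff']
  rfl

theorem sort_comp_of_strictMono {e : α → β} (he : StrictMono e) (f : Fin n → α) :
    sort (e ∘ f) = sort f := by
  rw [sort_eq_iff_strictMono]
  intro i j hij
  have h := (sort_eq_iff_strictMono f _).1 rfl hij
  simp only [Prod.Lex.toLex_lt_toLex, Function.comp_apply, he.lt_iff_lt, he.injective.eq_iff] at h ⊢
  exact h

theorem sort_lex (f : Fin n → β) (g : Fin n → α) :
    sort (fun i => toLex (f i, g i)) = sort g * sort (f ∘ sort g) := by
  rw [sort_eq_iff_strictMono]
  intro i j hij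
  have hf := (sort_eq_iff_strictMono (f ∘ sort g) _).1 rfl hij
  simp only [Prod.Lex.toLex_lt_toLex, Function.comp_apply, Equiv.Perm.mul_apply] at hf ⊢
  rcases hf with hf | ⟨hf, hσ⟩
  · exact Or.inl (Or.inl hf)
  · have hg := (sort_eq_iff_strictMono g _).1 rfl hσ
    simp only [Prod.Lex.toLex_lt_toLex] at hg
    rcases hg with hg | ⟨hg, hτ⟩
    · exact Or.inl (Or.inr ⟨hf, hg⟩)
    · exact Or.inr ⟨Prod.ext hf hg, hτ⟩

end Tuple

/-- `sortSum n (Fin m)` is the structure polynomial `φ` evaluated at `m`. -/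
def sortSum (n : ℕ) (α : Type*) [LinearOrder α] [Fintype α] :
    MonoidAlgebra ℚ (Equiv.Perm (Fin n)) :=
  ∑ w : Fin n → α, MonoidAlgebra.of ℚ _ (Tuple.sort w)

section sortSum

variable {n : ℕ} {α β : Type*} [LinearOrder α] [Fintype α] [LinearOrder β] [Fintype β]

theorem sortSum_eq_of_card_eq (h : Fintype.card α = Fintype.card β) :
    sortSum n α = sortSum n β := by
  let e : α ≃o β :=
    (Fintype.orderIsoFinOfCardEq α h).symm.trans (Fintype.orderIsoFinOfCardEq β rfl)
  exact Fintype.sum_equiv ((Equiv.refl (Fin n)).arrowCongr e.toEquiv) _ _ fun w =>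
    congrArg _ (Tuple.sort_comp_of_strictMono e.strictMono w).symm

def lexWordEquiv (n : ℕ) (α β : Type*) [LinearOrder α] :
    (Fin n → β ×ₗ α) ≃ (Fin n → α) × (Fin n → β) where
  toFun z := (fun i => (ofLex (z i)).2,
    fun i => (ofLex (z (Tuple.sort (fun j => (ofLex (z j)).2) i))).1)
  invFun p i := toLex (p.2 ((Tuple.sort p.1)⁻¹ i), p.1 i)
  left_inv z := by
    funext i
    simp
  right_inv p := by
    ext i <;> simp

theorem sortSum_mul : sortSum n α * sortSum n β = sortSum n (β ×ₗ α) := by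
  rw [sortSum, sortSum, sum_mul_sum, ← Fintype.sum_prod_type']
  refine (Fintype.sum_equiv (lexWordEquiv n α β) _ _ fun z => ?_).symm
  rw [← map_mul]
  exact congrArg _ (Tuple.sort_lex (fun i => (ofLex (z i)).1) fun i => (ofLex (z i)).2)

theorem sortSum_fin_mul (a b : ℕ) :
    sortSum n (Fin a) * sortSum n (Fin b) = sortSum n (Fin (a * b)) := by
  rw [sortSum_mul]
  exact sortSum_eq_of_card_eq (by simp [mul_comm])

end sortSum

def strictMonoEquivOrderEmbedding (α β : Type*) [LinearOrder α] [Preorder β] :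
    {u : α → β // StrictMono u} ≃ (α ↪o β) where
  toFun u := OrderEmbedding.ofStrictMono u.1 u.2
  invFun f := ⟨f, f.strictMono⟩
  left_inv _ := rfl
  right_inv _ := rfl

theorem card_strictMono_fin (k M : ℕ) : #{u : Fin k → Fin M | StrictMono u} = M.choose k := by
  rw [← Fintype.card_subtype, ← Nat.card_eq_fintype_card,
    Nat.card_congr ((strictMonoEquivOrderEmbedding _ _).trans Set.powersetCard.ofFinEmbEquiv),
    Set.powersetCard.card, Nat.card_eq_fintype_card, Fintype.card_fin]

section Counting

variable {n : ℕ} (D : Finset (Fin n))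

def weakGapsBefore (i : Fin (n + 1)) : ℕ := #{k | k ∉ D ∧ k.castSucc < i}

@[simp]
theorem weakGapsBefore_zero : weakGapsBefore D 0 = 0 := by
  simp [weakGapsBefore]

theorem weakGapsBefore_succ (k : Fin n) :
    weakGapsBefore D k.succ = weakGapsBefore D k.castSucc + if k ∈ D then 0 else 1 := by
  have hlt (l : Fin n) : l.castSucc < k.succ ↔ l.castSucc < k.castSucc ∨ l = k := by
    simp only [Fin.lt_def, Fin.val_castSucc, Fin.val_succ, Fin.ext_iff]
    omega
  unfold weakGapsBefore
  split_ifs with hk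
  · rw [add_zero]
    congr 1
    ext l
    simp only [mem_filter, mem_univ, true_and, hlt]
    grind
  · rw [← card_insert_of_notMem (s := filter _ _) (a := k) (by simp)]
    congr 1
    ext l
    simp only [mem_filter, mem_univ, true_and, mem_insert, hlt]
    grind

theorem weakGapsBefore_last : weakGapsBefore D (Fin.last n) = n - #D := by
  simp [weakGapsBefore, Fin.castSucc_lt_last, filter_not, card_sdiff]

theorem monotone_weakGapsBefore : Monotone (weakGapsBefore D) := fun _ _ hij =>
  card_le_card fun l => by
    simp only [mem_filter, mem_univ, true_and]
    exact fun ⟨hl, hlt⟩ => ⟨hl, hlt.trans_le hij⟩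

theorem strictMono_add_weakGapsBefore_iff (g : Fin (n + 1) → ℕ) :
    StrictMono (fun i => g i + weakGapsBefore D i) ↔
      ∀ k, g k.castSucc ≤ g k.succ ∧ (k ∈ D → g k.castSucc < g k.succ) := by
  rw [Fin.strictMono_iff_lt_succ]
  refine forall_congr' fun k => ?_
  rw [weakGapsBefore_succ]
  by_cases hk : k ∈ D <;> simp only [hk, if_true, if_false, forall_const,
    false_implies, and_true] <;> omega

theorem weakGapsBefore_le_of_strictMono {u : Fin (n + 1) → ℕ} (hu : StrictMono u)
    (i : Fin (n + 1)) :
    weakGapsBefore D i ≤ u i := by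
  induction i using Fin.induction with
  | zero => simp
  | succ k ih =>
    have : u k.castSucc < u k.succ := hu Fin.castSucc_lt_succ
    rw [weakGapsBefore_succ]
    split_ifs <;> omega

theorem gap_sub_weakGapsBefore_of_strictMono {u : Fin (n + 1) → ℕ} (hu : StrictMono u)
    (k : Fin n) :
    u k.castSucc - weakGapsBefore D k.castSucc ≤ u k.succ - weakGapsBefore D k.succ ∧
      (k ∈ D →
        u k.castSucc - weakGapsBefore D k.castSucc < u k.succ - weakGapsBefore D k.succ) := by
  refine (strictMono_add_weakGapsBefore_iff D fun i => u i - weakGapsBefore D i).1 ?_ k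
  simpa only [Nat.sub_add_cancel (weakGapsBefore_le_of_strictMono D hu _)] using hu

theorem card_monotone_strictAt (m : ℕ) :
    #{v : Fin (n + 1) → Fin m | ∀ k, v k.castSucc ≤ v k.succ ∧ (k ∈ D → v k.castSucc < v k.succ)}
      = (m + (n - #D)).choose (n + 1) := by
  rw [← card_strictMono_fin]
  have hw (i : Fin (n + 1)) : weakGapsBefore D i ≤ n - #D :=
    weakGapsBefore_last D ▸ monotone_weakGapsBefore D (Fin.le_last i)
  have hsub {u : Fin (n + 1) → Fin (m + (n - #D))} (hu : StrictMono u) (i : Fin (n + 1)) :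
      u i - weakGapsBefore D i < m := by
    have hmono : Monotone fun i => u i - weakGapsBefore D i :=
      Fin.monotone_iff_le_succ.2 fun k => (gap_sub_weakGapsBefore_of_strictMono D hu k).1
    have : u i - weakGapsBefore D i ≤ u (Fin.last n) - weakGapsBefore D (Fin.last n) :=
      hmono (Fin.le_last i)
    have := (u (Fin.last n)).isLt
    have := weakGapsBefore_le_of_strictMono D (u := fun i => u i) hu (Fin.last n)
    have := weakGapsBefore_last D
    omega
  refine card_bij'
    (fun v _ i => ⟨v i + weakGapsBefore D i, by have := (v i).isLt; have := hw i; omega⟩)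
    (fun u hu i => ⟨u i - weakGapsBefore D i, hsub (mem_filter.1 hu).2 i⟩) ?_ ?_ ?_ ?_
  · intro v hv
    simp only [mem_filter, mem_univ, true_and] at hv ⊢
    exact (strictMono_add_weakGapsBefore_iff D fun i => v i).2 hv
  · intro u hu
    simp only [mem_filter, mem_univ, true_and] at hu ⊢
    exact gap_sub_weakGapsBefore_of_strictMono D hu
  · intro v _
    ext i
    simp
  · intro u hu
    ext i
    have := weakGapsBefore_le_of_strictMono D (u := fun i => u i) (mem_filter.1 hu).2 i
    simp only
    omega

end Counting

section Descents

variable {n : ℕ}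

def descents (π : Equiv.Perm (Fin (n + 1))) : Finset (Fin n) := {k | π k.succ < π k.castSucc}

theorem pval_val_add_one (π : Equiv.Perm (Fin n)) (i : Fin n) : pval π (i + 1) = π i + 1 := by
  simp [pval, i.isLt]

theorem pval_lt_pval_iff (π : Equiv.Perm (Fin (n + 1))) (k : Fin n) :
    pval π (k + 1 + 1) < pval π (k + 1) ↔ π k.succ < π k.castSucc := by
  rw [show (k : ℕ) + 1 + 1 = k.succ + 1 from rfl, show (k : ℕ) + 1 = k.castSucc + 1 from rfl,
    pval_val_add_one, pval_val_add_one, Fin.lt_def]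
  omega

theorem des_eq_card_descents (π : Equiv.Perm (Fin (n + 1))) : des π = #(descents π) := by
  suffices desSet π = (descents π).map ((Fin.succEmb n).trans Fin.valEmbedding) by
    rw [des, this, card_map]
  ext s
  simp only [desSet, descents, mem_filter, mem_Ico, mem_map, mem_univ, true_and,
    Function.Embedding.trans_apply, Fin.coe_succEmb, Fin.valEmbedding_apply, Fin.val_succ]
  constructor
  · rintro ⟨⟨hs1, hsn⟩, hlt⟩
    obtain ⟨k, rfl⟩ : ∃ k : Fin n, (k : ℕ) + 1 = s := ⟨⟨s - 1, by omega⟩, by simp; omega⟩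
    exact ⟨k, (pval_lt_pval_iff π k).1 hlt, rfl⟩
  · rintro ⟨k, hk, rfl⟩
    exact ⟨⟨by omega, by omega⟩, (pval_lt_pval_iff π k).2 hk⟩

theorem sort_eq_iff_gap {α : Type*} [LinearOrder α] (w : Fin (n + 1) → α)
    (π : Equiv.Perm (Fin (n + 1))) :
    Tuple.sort w = π ↔ ∀ k, w (π k.castSucc) ≤ w (π k.succ) ∧
      (k ∈ descents π → w (π k.castSucc) < w (π k.succ)) := by
  rw [Tuple.sort_eq_iff_strictMono, Fin.strictMono_iff_lt_succ]
  refine forall_congr' fun k => ?_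
  have hne : π k.castSucc ≠ π k.succ := π.injective.ne (Fin.castSucc_lt_succ).ne
  simp only [Prod.Lex.toLex_lt_toLex, descents, mem_filter, mem_univ, true_and]
  grind

theorem card_sort_eq (π : Equiv.Perm (Fin (n + 1))) (m : ℕ) :
    #{w : Fin (n + 1) → Fin m | Tuple.sort w = π} = (m + (n - des π)).choose (n + 1) := by
  rw [des_eq_card_descents, ← card_monotone_strictAt]
  refine card_nbij' (· ∘ π) (· ∘ ⇑π⁻¹) ?_ ?_ ?_ ?_
  · intro w hw
    simpa [sort_eq_iff_gap] using hw
  · intro v hv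
    simpa [sort_eq_iff_gap] using hv
  · intro w _
    ext i
    simp
  · intro v _
    ext i
    simp

end Descents

theorem sortSum_fin_eq (n m : ℕ) :
    sortSum (n + 1) (Fin m) =
      ∑ π, ((m + (n - des π)).choose (n + 1) : ℚ) • MonoidAlgebra.of ℚ _ π := by
  rw [sortSum, ← sum_fiberwise univ Tuple.sort]
  refine sum_congr rfl fun π _ => ?_
  rw [sum_congr rfl fun w hw => by rw [(mem_filter.1 hw).2], sum_const, card_sort_eq,
    Nat.cast_smul_eq_nsmul]

theorem ratChoose_natCast (a b : ℕ) : ratChoose a b = a.choose b := by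
  rw [ratChoose, Nat.cast_choose_eq_descPochhammer_div, descPochhammer_eval_eq_prod_range]

section PolynomialIdentities

variable {K : Type*} [Field K] [CharZero K]

theorem eq_zero_of_forall_natCast_sum_pow_smul {V : Type*} [AddCommGroup V] [Module K V]
    {s : Finset ℕ} {c : ℕ → V} (h : ∀ a : ℕ, ∑ i ∈ s, (a : K) ^ i • c i = 0) :
    ∀ i ∈ s, c i = 0 := by
  intro i hi
  rw [← Module.forall_dual_apply_eq_zero_iff K]
  intro φ
  let p : Polynomial K := ∑ j ∈ s, Polynomial.monomial j (φ (c j))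
  have hp : p = 0 := by
    refine Polynomial.eq_zero_of_infinite_isRoot _
      ((Set.infinite_range_of_injective Nat.cast_injective).mono ?_)
    rintro _ ⟨a, rfl⟩
    simpa [p, Polynomial.eval_finsetSum, mul_comm] using congrArg φ (h a)
  simpa [p, Polynomial.finsetSum_coeff, Polynomial.coeff_monomial, hi] using
    congrArg (Polynomial.coeff · i) hp

theorem mul_eq_ite_of_forall_natCast_mul {A : Type*} [Ring A] [Algebra K A] {s : Finset ℕ}
    {e : ℕ → A}
    (h : ∀ a b : ℕ, (∑ i ∈ s, (a : K) ^ i • e i) * (∑ i ∈ s, (b : K) ^ i • e i) =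
      ∑ i ∈ s, ((a * b : ℕ) : K) ^ i • e i) :
    ∀ i ∈ s, ∀ j ∈ s, e i * e j = if i = j then e i else 0 := by
  have he_mul (b : ℕ) : ∀ i ∈ s, e i * (∑ j ∈ s, (b : K) ^ j • e j) - (b : K) ^ i • e i = 0 := by
    refine eq_zero_of_forall_natCast_sum_pow_smul (K := K) fun a => ?_
    simp only [smul_sub, sum_sub_distrib, ← smul_mul_assoc, ← sum_mul, h, smul_smul, Nat.cast_mul,
      mul_pow, sub_self]
  intro i hi
  refine fun j hj => sub_eq_zero.1 <| eq_zero_of_forall_natCast_sum_pow_smul (K := K)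
    (c := fun j => e i * e j - if i = j then e i else 0) (fun b => ?_) j hj
  refine Eq.trans ?_ (he_mul b i hi)
  simp only [smul_sub, sum_sub_distrib, mul_sum, mul_smul_comm, smul_ite, smul_zero, sum_ite_eq,
    if_pos hi]

end PolynomialIdentities

theorem stmt2 (n : ℕ) (e : ℕ → MonoidAlgebra ℚ (Equiv.Perm (Fin n)))
    (he : ∀ x : ℚ,
      ∑ π : Equiv.Perm (Fin n),
        ratChoose (x + (n : ℚ) - 1 - (des π : ℚ)) n •
          MonoidAlgebra.of ℚ (Equiv.Perm (Fin n)) π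
        = ∑ i ∈ Finset.Icc 1 n, x ^ i • e i) :
    ∀ i ∈ Finset.Icc 1 n, ∀ j ∈ Finset.Icc 1 n,
      e i * e j = if i = j then e i else 0 := by
  obtain _ | n := n
  · simp
  have hφ (m : ℕ) : sortSum (n + 1) (Fin m) = ∑ i ∈ Icc 1 (n + 1), (m : ℚ) ^ i • e i := by
    rw [sortSum_fin_eq, ← he]
    refine sum_congr rfl fun π _ => ?_
    have : des π ≤ n := des_eq_card_descents π ▸ card_le_univ _ |>.trans_eq (Fintype.card_fin n)
    rw [← ratChoose_natCast]
    push_cast [this]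
    ring_nf
  refine mul_eq_ite_of_forall_natCast_mul (K := ℚ) fun a b => ?_
  rw [← hφ, ← hφ, ← hφ, sortSum_fin_mul]
end
end

section
/- The linear span in Q[B_n] of the elements E_{B,i} (the sum of all signed permutations of [n] with exactly i-1 type B descents, for i = 1,...,n+1) is a commutative subalgebra of Q[B_n] of dimension n+1. -/
/-!
A word of height `m` is an odd function `w : ℤ → ℤ` with values in `[-m, m]`, supported on
`[-n, n]`. Ranking `[-n, n]` lexicographically by `(w j, j)` gives the unique signed permutation `π`
that sorts `w`. Along `π` the values `0 = w (π 0) ≤ w (π 1) ≤ ⋯ ≤ w (π n) ≤ m` increase strictly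
exactly at the descents of `π`, so the number of words of height `m` sorted by `π` depends only on
`des_B π`, vanishes for `des_B π > m` and is `1` for `des_B π = m`. Hence the elements
`A_m = ∑_π #{words of height m sorted by π} • π` are unitriangular in the `E_{B,i}` and span the
same space.

Writing a word of height `(2l+1)m + l` in balanced base `2l+1`, its low digit is a word of
height `l` sorted by some `σ`, and its high digit read along `σ` is a word of height `m` sorted
by `σ⁻¹π`. This bijection gives `A_l A_m = A_{(2l+1)m+l}`, which is symmetric in `l` and `m`
since `2((2l+1)m + l) + 1 = (2l+1)(2m+1)`. So the span is a commutative subalgebra; its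
dimension is `n + 1` because the `E_{B,i}` have disjoint nonempty supports.
-/

open scoped Classical

noncomputable section

/-- A signed permutation of `{±1, …, ±n}`: a bijection `π : ℤ → ℤ` with
`π(-i) = -π(i)` that fixes every integer of absolute value greater than `n`. -/
def IsSignedPerm (n : ℕ) (π : Equiv.Perm ℤ) : Prop :=
  (∀ i : ℤ, π (-i) = -π i) ∧ ∀ i : ℤ, (n : ℤ) < |i| → π i = i

/-- The hyperoctahedral group `B_n`, realized as a subgroup of `Equiv.Perm ℤ`. -/
def Bgroup (n : ℕ) : Subgroup (Equiv.Perm ℤ) where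
  carrier := {π | IsSignedPerm n π}
  one_mem' := ⟨fun i => by simp, fun i _ => rfl⟩
  mul_mem' := fun {a b} ha hb =>
    ⟨fun i => by simp only [Equiv.Perm.mul_apply, hb.1 i, ha.1 (b i)],
     fun i hi => by simp only [Equiv.Perm.mul_apply, hb.2 i hi, ha.2 i hi]⟩
  inv_mem' := fun {a} ha =>
    ⟨fun i => by rw [Equiv.Perm.inv_eq_iff_eq, ha.1]; simp,
     fun i hi => by rw [Equiv.Perm.inv_eq_iff_eq]; exact (ha.2 i hi).symm⟩

/-- The type B descent set of `π`: positions `0 ≤ s ≤ n-1` with `π(s) > π(s+1)`. -/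
def desSetB (n : ℕ) (π : Equiv.Perm ℤ) : Finset ℕ :=
  (Finset.range n).filter fun s => π ((s : ℤ) + 1) < π (s : ℤ)

/-- The type B descent number. -/
def desB (n : ℕ) (π : Equiv.Perm ℤ) : ℕ := (desSetB n π).card

theorem Int.mul_add_lt_mul_add_iff {q a a' b b' : ℤ} (h : |b - b'| < q) :
    q * a + b < q * a' + b' ↔ a < a' ∨ a = a' ∧ b < b' := by
  rw [abs_lt] at h
  rcases lt_trichotomy a a' with ha | rfl | ha
  · have : q * (a + 1) ≤ q * a' := mul_le_mul_of_nonneg_left ha (by linarith)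
    exact iff_of_true (by linarith) (Or.inl ha)
  · simp
  · have : q * (a' + 1) ≤ q * a := mul_le_mul_of_nonneg_left ha (by linarith)
    exact iff_of_false (by linarith) (by rintro (h' | ⟨rfl, -⟩) <;> order)

theorem Int.mul_add_eq_mul_add_iff {q a a' b b' : ℤ} (h : |b - b'| < q) :
    q * a + b = q * a' + b' ↔ a = a' ∧ b = b' := by
  have h' : |b' - b| < q := by rwa [abs_sub_comm]
  refine ⟨fun heq => ?_, by rintro ⟨rfl, rfl⟩; rfl⟩
  have h1 := (Int.mul_add_lt_mul_add_iff h).not.1 heq.not_lt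
  have h2 := (Int.mul_add_lt_mul_add_iff h').not.1 heq.not_gt
  omega

theorem Int.abs_sub_lt_of_abs_le {a b : ℤ} {l : ℕ} (ha : |a| ≤ l) (hb : |b| ≤ l) :
    |a - b| < 2 * l + 1 := by
  rw [abs_le] at ha hb; rw [abs_lt]; omega

theorem Submodule.mul_mem_span_of_mul_mem {R A : Type*} [CommSemiring R] [Semiring A] [Algebra R A]
    {s : Set A} (hs : ∀ x ∈ s, ∀ y ∈ s, x * y ∈ s) {a b : A}
    (ha : a ∈ Submodule.span R s) (hb : b ∈ Submodule.span R s) : a * b ∈ Submodule.span R s := by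
  have := Submodule.mul_mem_mul ha hb
  rw [Submodule.span_mul_span] at this
  exact Submodule.span_mono (Set.mul_subset_iff.2 hs) this

theorem Submodule.commute_of_mem_span {R A : Type*} [CommSemiring R] [Semiring A] [Algebra R A]
    {s : Set A} (hs : ∀ x ∈ s, ∀ y ∈ s, Commute x y) {a b : A}
    (ha : a ∈ Submodule.span R s) (hb : b ∈ Submodule.span R s) : Commute a b :=
  Commute.span_left (fun x hx => Commute.span_right (hs x hx) b hb) a ha

namespace BDescent

variable {n : ℕ}

def window (n : ℕ) : Finset ℤ := Finset.Icc (-(n : ℤ)) n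

theorem mem_window {j : ℤ} : j ∈ window n ↔ |j| ≤ n := by
  rw [window, Finset.mem_Icc, abs_le]

theorem card_window : (window n).card = 2 * n + 1 := by
  rw [window, Int.card_Icc]; omega

namespace Bgroup

variable {π : Equiv.Perm ℤ}

theorem apply_neg (hπ : π ∈ Bgroup n) (i : ℤ) : π (-i) = -π i := hπ.1 i

theorem apply_of_lt_abs (hπ : π ∈ Bgroup n) {i : ℤ} (hi : (n : ℤ) < |i|) : π i = i := hπ.2 i hi

theorem apply_zero (hπ : π ∈ Bgroup n) : π 0 = 0 := by
  have := apply_neg hπ 0; rw [neg_zero] at this; omega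

theorem symm_mem (hπ : π ∈ Bgroup n) : π.symm ∈ Bgroup n := (Bgroup n).inv_mem hπ

theorem abs_apply_le (hπ : π ∈ Bgroup n) {i : ℤ} (hi : |i| ≤ n) : |π i| ≤ n := by
  by_contra! h
  have := π.injective (apply_of_lt_abs hπ h)
  rw [this] at h; omega

theorem mem_window_apply (hπ : π ∈ Bgroup n) {i : ℤ} (hi : i ∈ window n) : π i ∈ window n :=
  mem_window.2 (abs_apply_le hπ (mem_window.1 hi))

theorem image_window (hπ : π ∈ Bgroup n) : (window n).image π = window n :=
  Finset.eq_of_subset_of_card_le (fun _ hx => by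
      obtain ⟨i, hi, rfl⟩ := Finset.mem_image.1 hx; exact mem_window_apply hπ hi)
    (Finset.card_image_of_injective _ π.injective).ge

end Bgroup

instance : Finite (Bgroup n) := by
  refine Finite.of_injective (fun π : Bgroup n => fun i : window n =>
    (⟨π.1 i, Bgroup.mem_window_apply π.2 i.2⟩ : window n)) fun π π' h => ?_
  ext j
  by_cases hj : |j| ≤ n
  · exact congrArg Subtype.val (congrFun h ⟨j, mem_window.2 hj⟩)
  · rw [Bgroup.apply_of_lt_abs π.2 (by omega), Bgroup.apply_of_lt_abs π'.2 (by omega)]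

noncomputable instance : Fintype (Bgroup n) := Fintype.ofFinite _

structure IsWord (n m : ℕ) (w : ℤ → ℤ) : Prop where
  map_neg : ∀ j, w (-j) = -w j
  abs_apply_le : ∀ j, |w j| ≤ m
  apply_of_lt_abs : ∀ j, (n : ℤ) < |j| → w j = 0

theorem IsWord.apply_zero {m : ℕ} {w : ℤ → ℤ} (hw : IsWord n m w) : w 0 = 0 := by
  have := hw.map_neg 0; rw [neg_zero] at this; omega

def key (n : ℕ) (w : ℤ → ℤ) (j : ℤ) : ℤ := (2 * n + 1) * w j + j

section Key

variable {w : ℤ → ℤ} {a b : ℤ}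

theorem key_lt_key_iff (ha : |a| ≤ n) (hb : |b| ≤ n) :
    key n w a < key n w b ↔ w a < w b ∨ w a = w b ∧ a < b :=
  Int.mul_add_lt_mul_add_iff (Int.abs_sub_lt_of_abs_le ha hb)

theorem key_injOn (ha : |a| ≤ n) (hb : |b| ≤ n) (h : key n w a = key n w b) : a = b :=
  ((Int.mul_add_eq_mul_add_iff (Int.abs_sub_lt_of_abs_le ha hb)).1 h).2

theorem key_neg (hw : ∀ j, w (-j) = -w j) (j : ℤ) : key n w (-j) = -key n w j := by
  simp only [key, hw]; ring

end Key

/-- `π` sorts `w`: `k ↦ (w (π k), π k)` increases lexicographically on `[-n, n]`. -/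
def Sorts (n : ℕ) (w : ℤ → ℤ) (π : Equiv.Perm ℤ) : Prop :=
  StrictMonoOn (fun k => key n w (π k)) (window n)

section Rank

variable {w : ℤ → ℤ}

def rank (n : ℕ) (w : ℤ → ℤ) (j : ℤ) : ℤ :=
  if |j| ≤ n then ((window n).filter fun j' => key n w j' < key n w j).card - n else j

theorem rank_of_abs_le {j : ℤ} (hj : |j| ≤ n) :
    rank n w j = ((window n).filter fun j' => key n w j' < key n w j).card - n := if_pos hj

theorem rank_of_lt_abs {j : ℤ} (hj : (n : ℤ) < |j|) : rank n w j = j := if_neg (by omega)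

theorem abs_rank_le {j : ℤ} (hj : |j| ≤ n) : |rank n w j| ≤ n := by
  have hsub : ((window n).filter fun j' => key n w j' < key n w j) ⊆ (window n).erase j :=
    fun x hx => Finset.mem_erase.2
      ⟨by rintro rfl; exact lt_irrefl _ (Finset.mem_filter.1 hx).2, Finset.filter_subset _ _ hx⟩
  have hcard := Finset.card_le_card hsub
  rw [Finset.card_erase_of_mem (mem_window.2 hj), card_window] at hcard
  rw [rank_of_abs_le hj, abs_le]
  omega

theorem rank_lt_rank {a b : ℤ} (ha : |a| ≤ n) (hb : |b| ≤ n) (h : key n w a < key n w b) :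
    rank n w a < rank n w b := by
  have hss : ((window n).filter fun j' => key n w j' < key n w a) ⊂
      ((window n).filter fun j' => key n w j' < key n w b) :=
    Finset.ssubset_iff_of_subset (fun x hx => by
      rw [Finset.mem_filter] at hx ⊢; exact ⟨hx.1, hx.2.trans h⟩) |>.2
      ⟨a, Finset.mem_filter.2 ⟨mem_window.2 ha, h⟩,
        fun hx => lt_irrefl _ (Finset.mem_filter.1 hx).2⟩
  rw [rank_of_abs_le ha, rank_of_abs_le hb]
  have := Finset.card_lt_card hss
  omega

theorem rank_injective (w : ℤ → ℤ) : Function.Injective (rank n w) := by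
  intro a b h
  by_cases ha : |a| ≤ n <;> by_cases hb : |b| ≤ n
  · by_contra hab
    rcases lt_or_gt_of_ne (mt (key_injOn (w := w) ha hb) hab) with hlt | hlt
    · exact (rank_lt_rank ha hb hlt).ne h
    · exact (rank_lt_rank hb ha hlt).ne' h
  · have := abs_rank_le (w := w) ha
    rw [h, rank_of_lt_abs (by omega)] at this; omega
  · have := abs_rank_le (w := w) hb
    rw [← h, rank_of_lt_abs (by omega)] at this; omega
  · rwa [rank_of_lt_abs (by omega), rank_of_lt_abs (by omega)] at h

theorem rank_surjective (w : ℤ → ℤ) : Function.Surjective (rank n w) := by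
  intro y
  by_cases hy : |y| ≤ n
  · have himg : (window n).image (rank n w) = window n :=
      Finset.eq_of_subset_of_card_le (fun _ hx => by
          obtain ⟨a, ha, rfl⟩ := Finset.mem_image.1 hx
          exact mem_window.2 (abs_rank_le (mem_window.1 ha)))
        (Finset.card_image_of_injective _ (rank_injective w)).ge
    obtain ⟨a, -, ha⟩ := Finset.mem_image.1 (himg ▸ mem_window.2 hy)
    exact ⟨a, ha⟩
  · exact ⟨y, rank_of_lt_abs (by omega)⟩

theorem card_key_lt_add_card_lt_key {j : ℤ} (hj : |j| ≤ n) :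
    ((window n).filter fun j' => key n w j' < key n w j).card +
      ((window n).filter fun j' => key n w j < key n w j').card = 2 * n := by
  set above := (window n).filter fun j' => key n w j < key n w j'
  have hsplit : (window n).filter (fun j' => ¬ key n w j' < key n w j) = insert j above := by
    ext x
    simp only [above, Finset.mem_filter, Finset.mem_insert, not_lt]
    constructor
    · rintro ⟨hx, hle⟩
      rcases hle.eq_or_lt with heq | hlt
      · exact Or.inl (key_injOn (mem_window.1 hx) hj heq.symm)
      · exact Or.inr ⟨hx, hlt⟩
    · rintro (rfl | ⟨hx, hlt⟩)
      · exact ⟨mem_window.2 hj, le_rfl⟩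
      · exact ⟨hx, hlt.le⟩
  have hcard := Finset.card_filter_add_card_filter_not (s := window n)
    (p := fun j' => key n w j' < key n w j)
  have hj_above : j ∉ above := by simp [above]
  rw [hsplit, Finset.card_insert_of_notMem hj_above, card_window] at hcard
  omega

theorem rank_neg (hw : ∀ j, w (-j) = -w j) (j : ℤ) : rank n w (-j) = -rank n w j := by
  by_cases hj : |j| ≤ n
  · have hj' : |-j| ≤ n := by rwa [abs_neg]
    have hcard := card_key_lt_add_card_lt_key (w := w) hj
    set above := (window n).filter fun j' => key n w j < key n w j'
    have hneg : ((window n).filter fun j' => key n w j' < key n w (-j)) = above.image (- ·) := by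
      ext x
      simp only [above, Finset.mem_filter, Finset.mem_image, mem_window]
      constructor
      · rintro ⟨hx, hlt⟩
        refine ⟨-x, ⟨by rwa [abs_neg], ?_⟩, neg_neg x⟩
        rw [key_neg hw] at hlt ⊢; omega
      · rintro ⟨y, ⟨hy, hlt⟩, rfl⟩
        refine ⟨by rwa [abs_neg], ?_⟩
        rw [key_neg hw, key_neg hw]; omega
    rw [rank_of_abs_le hj', rank_of_abs_le hj, hneg, Finset.card_image_of_injective _ neg_injective]
    omega
  · rw [rank_of_lt_abs (by rw [abs_neg]; omega), rank_of_lt_abs (by omega)]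

end Rank

section Sorting

variable {w : ℤ → ℤ}

def sortPerm (n : ℕ) (w : ℤ → ℤ) : Equiv.Perm ℤ :=
  (Equiv.ofBijective (rank n w) ⟨rank_injective w, rank_surjective w⟩).symm

theorem rank_sortPerm (k : ℤ) : rank n w (sortPerm n w k) = k :=
  Equiv.ofBijective_apply_symm_apply _ _ k

theorem sortPerm_mem (hw : ∀ j, w (-j) = -w j) : sortPerm n w ∈ Bgroup n :=
  ⟨fun i => rank_injective w (by rw [rank_sortPerm, rank_neg hw, rank_sortPerm]),
   fun i hi => rank_injective w (by rw [rank_sortPerm, rank_of_lt_abs hi])⟩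

theorem sorts_sortPerm (hw : ∀ j, w (-j) = -w j) : Sorts n w (sortPerm n w) := by
  intro k hk k' hk' hlt
  have hmem := sortPerm_mem (n := n) hw
  have ha := Bgroup.abs_apply_le hmem (mem_window.1 hk)
  have hb := Bgroup.abs_apply_le hmem (mem_window.1 hk')
  rcases lt_trichotomy (key n w (sortPerm n w k)) (key n w (sortPerm n w k')) with h | h | h
  · exact h
  · exact absurd ((sortPerm n w).injective (key_injOn ha hb h)) hlt.ne
  · have := rank_lt_rank hb ha h
    rw [rank_sortPerm, rank_sortPerm] at this
    exact absurd hlt this.not_gt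

theorem Sorts.rank_apply {π : Equiv.Perm ℤ} (hπ : π ∈ Bgroup n) (hs : Sorts n w π) {k : ℤ}
    (hk : |k| ≤ n) : rank n w (π k) = k := by
  have hfilter : ((window n).filter fun j => key n w j < key n w (π k)) =
      ((window n).filter fun k' => k' < k).image π := by
    conv_lhs => rw [← Bgroup.image_window hπ]
    rw [Finset.filter_image]
    congr 1
    exact Finset.filter_congr fun k' hk' => hs.lt_iff_lt hk' (mem_window.2 hk)
  have hIco : (window n).filter (fun k' => k' < k) = Finset.Ico (-(n : ℤ)) k := by
    ext x; simp only [window, Finset.mem_filter, Finset.mem_Icc, Finset.mem_Ico]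
    rw [abs_le] at hk; omega
  rw [rank_of_abs_le (Bgroup.abs_apply_le hπ hk), hfilter,
    Finset.card_image_of_injective _ π.injective, hIco, Int.card_Ico]
  rw [abs_le] at hk; omega

theorem Sorts.eq_sortPerm {π : Equiv.Perm ℤ} (hπ : π ∈ Bgroup n) (hs : Sorts n w π) :
    π = sortPerm n w := by
  ext k
  by_cases hk : |k| ≤ n
  · exact rank_injective w (by rw [hs.rank_apply hπ hk, rank_sortPerm])
  · rw [Bgroup.apply_of_lt_abs hπ (by omega)]
    exact rank_injective w (by rw [rank_sortPerm, rank_of_lt_abs (by omega)])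

end Sorting

section Descents

variable {w : ℤ → ℤ} {π : Equiv.Perm ℤ}

def desCount (π : Equiv.Perm ℤ) (i : ℕ) : ℕ :=
  ((Finset.range i).filter fun s : ℕ => π ((s : ℤ) + 1) < π (s : ℤ)).card

theorem desCount_zero : desCount π 0 = 0 := rfl

theorem desCount_succ (i : ℕ) :
    (desCount π (i + 1) : ℤ) = desCount π i + if π ((i : ℤ) + 1) < π i then 1 else 0 := by
  unfold desCount
  rw [Finset.range_add_one, Finset.filter_insert]
  split_ifs with h
  · rw [Finset.card_insert_of_notMem (by simp)]; push_cast; ring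
  · simp

theorem desCount_le_desB {i : ℕ} (hi : i ≤ n) : desCount π i ≤ desB n π :=
  Finset.card_le_card (Finset.filter_subset_filter _ (Finset.range_subset_range.2 hi))

theorem sorts_step_iff (hπ : π ∈ Bgroup n) {i : ℕ} (hi : i < n) :
    key n w (π i) < key n w (π ((i : ℤ) + 1)) ↔
      w (π i) + (if π ((i : ℤ) + 1) < π i then 1 else 0) ≤ w (π ((i : ℤ) + 1)) := by
  have hne : π i ≠ π ((i : ℤ) + 1) := fun h => by have := π.injective h; omega
  rw [key_lt_key_iff (Bgroup.abs_apply_le hπ (by rw [abs_le]; omega))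
    (Bgroup.abs_apply_le hπ (by rw [abs_le]; omega))]
  split_ifs <;> omega

/-- The steps on the negative half of the window follow from those on `0, …, n` by oddness. -/
theorem sorts_iff (hw : ∀ j, w (-j) = -w j) (hπ : π ∈ Bgroup n) :
    Sorts n w π ↔ ∀ i < n,
      w (π i) + (if π ((i : ℤ) + 1) < π i then 1 else 0) ≤ w (π ((i : ℤ) + 1)) := by
  constructor
  · intro hs i hi
    exact (sorts_step_iff hπ hi).1 <| hs (mem_window.2 (by rw [abs_le]; omega))
      (mem_window.2 (by rw [abs_le]; omega)) (lt_add_one _)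
  · intro h
    have hstep : ∀ i : ℕ, i < n → key n w (π i) < key n w (π ((i : ℤ) + 1)) :=
      fun i hi => (sorts_step_iff hπ hi).2 (h i hi)
    have hodd : ∀ k, key n w (π (-k)) = -key n w (π k) := fun k => by
      rw [Bgroup.apply_neg hπ, key_neg hw]
    refine strictMonoOn_of_lt_succ (by rw [window, Finset.coe_Icc]; exact Set.ordConnected_Icc)
      fun a _ ha ha' => ?_
    simp only [Finset.mem_coe, mem_window, Order.succ_eq_add_one] at ha ha' ⊢
    rcases le_or_gt 0 a with h0 | h0
    · lift a to ℕ using h0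
      exact hstep a (by rw [abs_le] at ha'; omega)
    · obtain ⟨i, rfl⟩ : ∃ i : ℕ, a = -((i : ℤ) + 1) := ⟨(-(a + 1)).toNat, by omega⟩
      rw [show -((i : ℤ) + 1) + 1 = -i by ring, hodd, hodd]
      have := hstep i (by rw [abs_le] at ha; omega)
      omega

end Descents

section OddExtension

variable {f : ℕ → ℤ}

def oddExt (f : ℕ → ℤ) (k : ℤ) : ℤ := if 0 ≤ k then f k.toNat else -f (-k).toNat

theorem oddExt_natCast (f : ℕ → ℤ) (i : ℕ) : oddExt f i = f i := by simp [oddExt]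

theorem oddExt_neg (hf : f 0 = 0) (k : ℤ) : oddExt f (-k) = -oddExt f k := by
  unfold oddExt
  rcases lt_trichotomy k 0 with h | rfl | h
  · rw [if_pos (by omega), if_neg (by omega), neg_neg]
  · simp [hf]
  · rw [if_neg (by omega), if_pos h.le, neg_neg]

theorem oddExt_comp_natCast {g : ℤ → ℤ} (hg : ∀ k, g (-k) = -g k) :
    oddExt (fun i => g i) = g := by
  funext k
  unfold oddExt
  dsimp only
  split_ifs with h
  · rw [Int.toNat_of_nonneg h]
  · rw [Int.toNat_of_nonneg (by omega), hg, neg_neg]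

theorem abs_oddExt_le {m : ℤ} (hf : ∀ i, |f i| ≤ m) (k : ℤ) : |oddExt f k| ≤ m := by
  unfold oddExt; split_ifs
  · exact hf _
  · rw [abs_neg]; exact hf _

theorem oddExt_eq_zero (hf : ∀ i, n < i → f i = 0) {k : ℤ} (hk : (n : ℤ) < |k|) :
    oddExt f k = 0 := by
  unfold oddExt; split_ifs
  · rw [hf _ (by rw [abs_of_nonneg ‹_›] at hk; omega)]
  · rw [hf _ (by rw [abs_of_neg (by omega)] at hk; omega), neg_zero]

end OddExtension

section Fibers

variable {m : ℕ} {w : ℤ → ℤ} {π : Equiv.Perm ℤ}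

def SortedWords (n m : ℕ) (π : Equiv.Perm ℤ) : Type :=
  {w : ℤ → ℤ // IsWord n m w ∧ Sorts n w π}

instance : Finite (SortedWords n m π) := by
  refine Finite.of_injective (fun w : SortedWords n m π => fun j : window n =>
    (⟨w.1 j, Finset.mem_Icc.2 (abs_le.1 (w.2.1.abs_apply_le j))⟩ : Finset.Icc (-(m : ℤ)) m))
    fun w w' h => Subtype.ext (funext fun j => ?_)
  by_cases hj : |j| ≤ n
  · exact congrArg Subtype.val (congrFun h ⟨j, mem_window.2 hj⟩)
  · rw [w.2.1.apply_of_lt_abs j (by omega), w'.2.1.apply_of_lt_abs j (by omega)]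

def MonoSeq (n r : ℕ) : Type :=
  {y : ℕ → ℤ // y 0 = 0 ∧ MonotoneOn y (Set.Iic n) ∧ y n ≤ r ∧ ∀ i, n < i → y i = 0}

theorem MonoSeq.apply_mem_Icc {r : ℕ} (y : MonoSeq n r) {i : ℕ} (hi : i ≤ n) :
    y.1 i ∈ Set.Icc 0 (r : ℤ) := by
  obtain ⟨h0, hmono, hn, -⟩ := y.2
  have h1 := hmono (Set.mem_Iic.2 (Nat.zero_le n)) (Set.mem_Iic.2 hi) (Nat.zero_le i)
  have h2 := hmono (Set.mem_Iic.2 hi) (Set.mem_Iic.2 le_rfl) hi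
  exact ⟨by omega, by omega⟩

/-- Subtracting the descents met so far turns the strict steps of `w` along `π` at descents of `π`
into weak ones. -/
def seqOfWord (n : ℕ) (π : Equiv.Perm ℤ) (w : ℤ → ℤ) (i : ℕ) : ℤ :=
  if i ≤ n then w (π i) - desCount π i else 0

def wordOfSeq (n : ℕ) (π : Equiv.Perm ℤ) (y : ℕ → ℤ) (j : ℤ) : ℤ :=
  oddExt (fun i => if i ≤ n then y i + desCount π i else 0) (π.symm j)

theorem wordOfSeq_apply (y : ℕ → ℤ) {i : ℕ} (hi : i ≤ n) :
    wordOfSeq n π y (π i) = y i + desCount π i := by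
  rw [wordOfSeq, Equiv.symm_apply_apply, oddExt_natCast, if_pos hi]

theorem seqOfWord_zero (hπ : π ∈ Bgroup n) (hw : IsWord n m w) : seqOfWord n π w 0 = 0 := by
  rw [seqOfWord, if_pos (Nat.zero_le n), Nat.cast_zero, Bgroup.apply_zero hπ, hw.apply_zero,
    desCount_zero, Nat.cast_zero, sub_zero]

theorem monotoneOn_seqOfWord (hπ : π ∈ Bgroup n) (hw : IsWord n m w) (hs : Sorts n w π) :
    MonotoneOn (seqOfWord n π w) (Set.Iic n) := by
  refine monotoneOn_of_le_succ Set.ordConnected_Iic fun i _ hi hi' => ?_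
  simp only [Set.mem_Iic, Order.succ_eq_add_one] at hi hi' ⊢
  have := (sorts_iff hw.map_neg hπ).1 hs i (by omega)
  rw [seqOfWord, seqOfWord, if_pos hi, if_pos hi', Nat.cast_add_one, desCount_succ]
  split_ifs at this ⊢ <;> omega

theorem desB_le_of_sorts (hπ : π ∈ Bgroup n) (hw : IsWord n m w) (hs : Sorts n w π) :
    desB n π ≤ m := by
  have h := monotoneOn_seqOfWord hπ hw hs (Set.mem_Iic.2 (Nat.zero_le n)) (Set.mem_Iic.2 le_rfl)
    (Nat.zero_le n)
  rw [seqOfWord_zero hπ hw, seqOfWord, if_pos le_rfl] at h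
  have := (abs_le.1 (hw.abs_apply_le (π n))).2
  change (0 : ℤ) ≤ w (π n) - desB n π at h
  omega

theorem wordOfSeq_isWord (hπ : π ∈ Bgroup n) (hd : desB n π ≤ m)
    (y : MonoSeq n (m - desB n π)) : IsWord n m (wordOfSeq n π y.1) where
  map_neg j := by
    rw [wordOfSeq, wordOfSeq, Bgroup.apply_neg (Bgroup.symm_mem hπ)]
    exact oddExt_neg (by rw [if_pos (Nat.zero_le n), y.2.1, desCount_zero]; rfl) _
  abs_apply_le j := by
    refine abs_oddExt_le (fun i => ?_) _
    split_ifs with hi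
    · obtain ⟨h0, hr⟩ := y.apply_mem_Icc hi
      have := desCount_le_desB (π := π) hi
      rw [abs_le]; push_cast [hd] at *; omega
    · simp
  apply_of_lt_abs j hj := by
    rw [wordOfSeq, Bgroup.apply_of_lt_abs (Bgroup.symm_mem hπ) hj]
    exact oddExt_eq_zero (fun i hi => if_neg (by omega)) hj

theorem wordOfSeq_sorts (hπ : π ∈ Bgroup n) (hd : desB n π ≤ m)
    (y : MonoSeq n (m - desB n π)) : Sorts n (wordOfSeq n π y.1) π := by
  refine (sorts_iff (wordOfSeq_isWord hπ hd y).map_neg hπ).2 fun i hi => ?_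
  have hmono := y.2.2.1 (Set.mem_Iic.2 hi.le) (Set.mem_Iic.2 hi) (Nat.le_succ i)
  have hsucc := wordOfSeq_apply (π := π) y.1 (Nat.succ_le_of_lt hi)
  rw [Nat.cast_add_one, desCount_succ] at hsucc
  rw [wordOfSeq_apply y.1 hi.le, hsucc]
  split_ifs <;> omega

theorem seqOfWord_self_le (hw : IsWord n m w) (hd : desB n π ≤ m) :
    seqOfWord n π w n ≤ (m - desB n π : ℕ) := by
  rw [seqOfWord, if_pos le_rfl, Nat.cast_sub hd]
  have := (abs_le.1 (hw.abs_apply_le (π n))).2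
  change w (π n) - desB n π ≤ m - desB n π
  omega

theorem wordOfSeq_seqOfWord (hπ : π ∈ Bgroup n) (hw : IsWord n m w) :
    wordOfSeq n π (seqOfWord n π w) = w := by
  have hseq : (fun i => if i ≤ n then seqOfWord n π w i + desCount π i else 0) =
      fun i : ℕ => w (π i) := by
    funext i
    by_cases hi : i ≤ n
    · rw [if_pos hi, seqOfWord, if_pos hi, sub_add_cancel]
    · rw [if_neg hi, Bgroup.apply_of_lt_abs hπ (by rw [Nat.abs_cast]; omega),
        hw.apply_of_lt_abs _ (by rw [Nat.abs_cast]; omega)]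
  funext j
  rw [wordOfSeq, hseq, oddExt_comp_natCast (g := fun k => w (π k))
    (fun k => by rw [Bgroup.apply_neg hπ, hw.map_neg])]
  exact congrArg w (π.apply_symm_apply j)

theorem seqOfWord_wordOfSeq {r : ℕ} (y : MonoSeq n r) :
    seqOfWord n π (wordOfSeq n π y.1) = y.1 := by
  funext i
  by_cases hi : i ≤ n
  · rw [seqOfWord, if_pos hi, wordOfSeq_apply _ hi, add_sub_cancel_right]
  · rw [seqOfWord, if_neg hi, y.2.2.2.2 i (by omega)]

def sortedWordsEquiv (hπ : π ∈ Bgroup n) (hd : desB n π ≤ m) :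
    SortedWords n m π ≃ MonoSeq n (m - desB n π) where
  toFun w := ⟨seqOfWord n π w.1, seqOfWord_zero hπ w.2.1, monotoneOn_seqOfWord hπ w.2.1 w.2.2,
    seqOfWord_self_le w.2.1 hd, fun i hi => if_neg (by omega)⟩
  invFun y := ⟨wordOfSeq n π y.1, wordOfSeq_isWord hπ hd y, wordOfSeq_sorts hπ hd y⟩
  left_inv w := Subtype.ext (wordOfSeq_seqOfWord hπ w.2.1)
  right_inv y := Subtype.ext (seqOfWord_wordOfSeq y)

def wordCount (n m : ℕ) (π : Equiv.Perm ℤ) : ℕ := Nat.card (SortedWords n m π)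

def coeffOfDes (n m k : ℕ) : ℕ := if k ≤ m then Nat.card (MonoSeq n (m - k)) else 0

theorem wordCount_eq_coeffOfDes (hπ : π ∈ Bgroup n) :
    wordCount n m π = coeffOfDes n m (desB n π) := by
  unfold wordCount coeffOfDes
  split_ifs with hd
  · exact Nat.card_congr (sortedWordsEquiv hπ hd)
  · have : IsEmpty (SortedWords n m π) := ⟨fun w => hd (desB_le_of_sorts hπ w.2.1 w.2.2)⟩
    exact Nat.card_of_isEmpty

theorem coeffOfDes_self : coeffOfDes n m m = 1 := by
  rw [coeffOfDes, if_pos le_rfl, Nat.sub_self, Nat.card_eq_one_iff_unique]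
  have hzero : ∀ (y : MonoSeq n 0) i, y.1 i = 0 := fun y i => by
    by_cases hi : i ≤ n
    · obtain ⟨h0, hr⟩ := y.apply_mem_Icc hi
      push_cast at hr; omega
    · exact y.2.2.2.2 i (by omega)
  exact ⟨⟨fun y y' => Subtype.ext (funext fun i => by rw [hzero, hzero])⟩,
    ⟨⟨0, rfl, monotoneOn_const, le_rfl, fun _ _ => rfl⟩⟩⟩

theorem coeffOfDes_of_lt {k : ℕ} (h : m < k) : coeffOfDes n m k = 0 := if_neg (by omega)

end Fibers

section Stacking

variable {l m : ℕ}

theorem IsWord.comp {w : ℤ → ℤ} {σ : Equiv.Perm ℤ} (hw : IsWord n m w) (hσ : σ ∈ Bgroup n) :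
    IsWord n m (w ∘ σ) where
  map_neg j := by simp only [Function.comp, Bgroup.apply_neg hσ, hw.map_neg]
  abs_apply_le j := hw.abs_apply_le _
  apply_of_lt_abs j hj := by
    simp only [Function.comp, Bgroup.apply_of_lt_abs hσ hj, hw.apply_of_lt_abs j hj]

def lowDigit (l : ℕ) (z : ℤ) : ℤ := Int.bmod z (2 * l + 1)

def highDigit (l : ℕ) (z : ℤ) : ℤ := Int.bdiv z (2 * l + 1)

theorem mul_highDigit_add_lowDigit (z : ℤ) : (2 * l + 1) * highDigit l z + lowDigit l z = z := by
  have := Int.bdiv_add_bmod z (2 * l + 1)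
  push_cast at this
  exact this

theorem abs_lowDigit_le (z : ℤ) : |lowDigit l z| ≤ l := by
  have h1 := Int.le_bmod (x := z) (m := 2 * l + 1) (by omega)
  have h2 := Int.bmod_le (x := z) (m := 2 * l + 1) (by omega)
  push_cast at h1 h2
  rw [lowDigit, abs_le]
  omega

theorem digits_mul_add {a b : ℤ} (hb : |b| ≤ l) :
    highDigit l ((2 * l + 1) * a + b) = a ∧ lowDigit l ((2 * l + 1) * a + b) = b :=
  (Int.mul_add_eq_mul_add_iff (Int.abs_sub_lt_of_abs_le (abs_lowDigit_le _) hb)).1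
    (mul_highDigit_add_lowDigit _)

theorem abs_le_of_abs_mul_add_le {a b : ℤ} (hb : |b| ≤ l)
    (h : |(2 * l + 1) * a + b| ≤ (2 * l + 1) * m + l) : |a| ≤ m := by
  rw [abs_le] at hb h ⊢
  constructor <;> by_contra! ha
  · have := mul_le_mul_of_nonneg_left (show a ≤ -m - 1 by omega)
      (by positivity : (0 : ℤ) ≤ 2 * l + 1)
    linarith
  · have := mul_le_mul_of_nonneg_left (show m + 1 ≤ a by omega)
      (by positivity : (0 : ℤ) ≤ 2 * l + 1)
    linarith

theorem digits_neg (z : ℤ) :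
    highDigit l (-z) = -highDigit l z ∧ lowDigit l (-z) = -lowDigit l z := by
  have h : -z = (2 * l + 1) * -highDigit l z + -lowDigit l z := by
    conv_lhs => rw [← mul_highDigit_add_lowDigit (l := l) z]
    ring
  rw [h]
  exact digits_mul_add (by rw [abs_neg]; exact abs_lowDigit_le z)

theorem digits_zero : highDigit l 0 = 0 ∧ lowDigit l 0 = 0 := by
  simpa using digits_mul_add (l := l) (a := 0) (b := 0) (by simp)

variable {z : ℤ → ℤ}

theorem isWord_lowDigit_comp (hz : IsWord n ((2 * l + 1) * m + l) z) :
    IsWord n l (lowDigit l ∘ z) where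
  map_neg j := by simp only [Function.comp, hz.map_neg, (digits_neg _).2]
  abs_apply_le j := abs_lowDigit_le _
  apply_of_lt_abs j hj := by simp only [Function.comp, hz.apply_of_lt_abs j hj, digits_zero.2]

theorem isWord_highDigit_comp (hz : IsWord n ((2 * l + 1) * m + l) z) :
    IsWord n m (highDigit l ∘ z) where
  map_neg j := by simp only [Function.comp, hz.map_neg, (digits_neg _).1]
  abs_apply_le j := by
    refine abs_le_of_abs_mul_add_le (abs_lowDigit_le (l := l) (z j)) ?_
    rw [Function.comp_apply, mul_highDigit_add_lowDigit]
    exact_mod_cast hz.abs_apply_le j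
  apply_of_lt_abs j hj := by simp only [Function.comp, hz.apply_of_lt_abs j hj, digits_zero.1]

def stack (l : ℕ) (σ : Equiv.Perm ℤ) (u v : ℤ → ℤ) (x : ℤ) : ℤ :=
  (2 * l + 1) * u (σ.symm x) + v x

variable {σ π : Equiv.Perm ℤ} {u v : ℤ → ℤ}

theorem isWord_stack (hσ : σ ∈ Bgroup n) (hu : IsWord n m u) (hv : IsWord n l v) :
    IsWord n ((2 * l + 1) * m + l) (stack l σ u v) where
  map_neg j := by
    rw [stack, stack, Bgroup.apply_neg (Bgroup.symm_mem hσ), hu.map_neg, hv.map_neg]; ring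
  abs_apply_le j := by
    have hu' := abs_le.1 (hu.abs_apply_le (σ.symm j))
    have hv' := abs_le.1 (hv.abs_apply_le j)
    have hq : (0 : ℤ) ≤ 2 * l + 1 := by positivity
    have h1 := mul_le_mul_of_nonneg_left hu'.1 hq
    have h2 := mul_le_mul_of_nonneg_left hu'.2 hq
    rw [stack, abs_le]
    push_cast
    constructor <;> linarith
  apply_of_lt_abs j hj := by
    rw [stack, Bgroup.apply_of_lt_abs (Bgroup.symm_mem hσ) hj, hu.apply_of_lt_abs j hj,
      hv.apply_of_lt_abs j hj]
    ring

theorem key_stack_lt_iff (hv : ∀ x, |v x| ≤ l) {x x' : ℤ} (hx : |x| ≤ n) (hx' : |x'| ≤ n) :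
    key n (stack l σ u v) x < key n (stack l σ u v) x' ↔
      u (σ.symm x) < u (σ.symm x') ∨ u (σ.symm x) = u (σ.symm x') ∧ key n v x < key n v x' := by
  have hd := Int.abs_sub_lt_of_abs_le (hv x) (hv x')
  rw [key_lt_key_iff hx hx', key_lt_key_iff hx hx', stack, stack, Int.mul_add_lt_mul_add_iff hd,
    Int.mul_add_eq_mul_add_iff hd]
  tauto

theorem sorts_stack_iff (hσ : σ ∈ Bgroup n) (hπ : π ∈ Bgroup n) (hv : IsWord n l v)
    (hvσ : Sorts n v σ) : Sorts n (stack l σ u v) π ↔ Sorts n u (σ⁻¹ * π) := by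
  have hτ : σ⁻¹ * π ∈ Bgroup n := (Bgroup n).mul_mem ((Bgroup n).inv_mem hσ) hπ
  have H : ∀ k ∈ window n, ∀ k' ∈ window n,
      key n (stack l σ u v) (π k) < key n (stack l σ u v) (π k') ↔
        key n u ((σ⁻¹ * π) k) < key n u ((σ⁻¹ * π) k') := by
    intro k hk k' hk'
    have hv' : key n v (π k) < key n v (π k') ↔ (σ⁻¹ * π) k < (σ⁻¹ * π) k' := by
      rw [← σ.apply_symm_apply (π k), ← σ.apply_symm_apply (π k')]
      exact hvσ.lt_iff_lt (Bgroup.mem_window_apply hτ hk) (Bgroup.mem_window_apply hτ hk')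
    rw [key_stack_lt_iff hv.abs_apply_le (mem_window.1 (Bgroup.mem_window_apply hπ hk))
      (mem_window.1 (Bgroup.mem_window_apply hπ hk')), hv',
      key_lt_key_iff (mem_window.1 (Bgroup.mem_window_apply hτ hk))
      (mem_window.1 (Bgroup.mem_window_apply hτ hk'))]
    rfl
  exact ⟨fun h a ha b hb hab => (H a ha b hb).1 (h ha hb hab),
    fun h a ha b hb hab => (H a ha b hb).2 (h ha hb hab)⟩

end Stacking

section Convolution

variable {l m : ℕ} {π : Bgroup n}

def stackMap (l m : ℕ) (π : Bgroup n) :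
    (Σ σ : Bgroup n, SortedWords n l σ × SortedWords n m ((σ⁻¹ * π : Bgroup n) : Equiv.Perm ℤ)) →
      SortedWords n ((2 * l + 1) * m + l) π :=
  fun t => ⟨stack l t.1 t.2.2.1 t.2.1.1, isWord_stack t.1.2 t.2.2.2.1 t.2.1.2.1,
    (sorts_stack_iff t.1.2 π.2 t.2.1.2.1 t.2.1.2.2).2 t.2.2.2.2⟩

theorem stackMap_injective : Function.Injective (stackMap l m π) := by
  rintro ⟨σ, v, u⟩ ⟨σ', v', u'⟩ h
  have hz : stack l σ u.1 v.1 = stack l σ' u'.1 v'.1 := congrArg Subtype.val h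
  have hv : v.1 = v'.1 := funext fun x => by
    rw [← (digits_mul_add (v.2.1.abs_apply_le x)).2, ← (digits_mul_add (v'.2.1.abs_apply_le x)).2]
    exact congrArg (lowDigit l) (congrFun hz x)
  have hσ' := v'.2.2.eq_sortPerm σ'.2
  rw [← hv] at hσ'
  obtain rfl : σ = σ' := Subtype.ext ((v.2.2.eq_sortPerm σ.2).trans hσ'.symm)
  have hu : u.1 = u'.1 := funext fun x => by
    have := congrFun hz (σ.1 x)
    simp only [stack, Equiv.symm_apply_apply, hv, add_left_inj] at this
    exact mul_left_cancel₀ (by omega) this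
  exact congrArg (Sigma.mk σ) (Prod.ext (Subtype.ext hv) (Subtype.ext hu))

theorem stackMap_surjective : Function.Surjective (stackMap l m π) := by
  rintro ⟨z, hz, hzπ⟩
  have hv := isWord_lowDigit_comp hz
  have hσ : sortPerm n (lowDigit l ∘ z) ∈ Bgroup n := sortPerm_mem hv.map_neg
  have hvσ := sorts_sortPerm (n := n) hv.map_neg
  set σ := sortPerm n (lowDigit l ∘ z)
  have hstack : stack l σ (highDigit l ∘ z ∘ σ) (lowDigit l ∘ z) = z := funext fun x => by
    simp only [stack, Function.comp, Equiv.apply_symm_apply, mul_highDigit_add_lowDigit]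
  have hus := (sorts_stack_iff hσ π.2 hv hvσ).1 (hstack ▸ hzπ)
  exact ⟨⟨⟨σ, hσ⟩, ⟨_, hv, hvσ⟩, ⟨_, (isWord_highDigit_comp hz).comp hσ, hus⟩⟩, Subtype.ext hstack⟩

theorem sum_wordCount_mul_wordCount (π : Bgroup n) :
    ∑ σ : Bgroup n, wordCount n l σ * wordCount n m (σ⁻¹ * π : Bgroup n) =
      wordCount n ((2 * l + 1) * m + l) π := by
  rw [wordCount, ← Nat.card_eq_of_bijective _ ⟨stackMap_injective, stackMap_surjective⟩,
    Nat.card_sigma]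
  simp only [Nat.card_prod, wordCount]

end Convolution

section GroupAlgebra

variable (n)

/-- `A_m`: each word of height `m` contributes the signed permutation sorting it. -/
def wordSum (m : ℕ) : MonoidAlgebra ℚ (Bgroup n) :=
  ∑ π : Bgroup n, (wordCount n m π : ℚ) • MonoidAlgebra.of ℚ (Bgroup n) π

/-- `E_{B,k+1}` (note the index shift). -/
def desClassSum (k : ℕ) : MonoidAlgebra ℚ (Bgroup n) :=
  ∑ π : Bgroup n, if desB n π = k then MonoidAlgebra.of ℚ (Bgroup n) π else 0

theorem wordSum_mul_wordSum (l m : ℕ) :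
    wordSum n l * wordSum n m = wordSum n ((2 * l + 1) * m + l) := by
  have hexpand : wordSum n l * wordSum n m = ∑ σ : Bgroup n, ∑ π : Bgroup n,
      ((wordCount n l σ * wordCount n m (σ⁻¹ * π : Bgroup n) : ℕ) : ℚ) •
        MonoidAlgebra.of ℚ (Bgroup n) π := by
    rw [wordSum, wordSum, Finset.sum_mul_sum]
    refine Finset.sum_congr rfl fun σ _ => Fintype.sum_equiv (Equiv.mulLeft σ) _ _ fun τ => ?_
    rw [Equiv.coe_mulLeft, smul_mul_smul_comm, ← map_mul, inv_mul_cancel_left]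
    norm_cast
  rw [hexpand, Finset.sum_comm, wordSum]
  refine Finset.sum_congr rfl fun π _ => ?_
  rw [← sum_wordCount_mul_wordCount π, Nat.cast_sum, Finset.sum_smul]

theorem commute_wordSum (l m : ℕ) : Commute (wordSum n l) (wordSum n m) := by
  rw [Commute, SemiconjBy, wordSum_mul_wordSum, wordSum_mul_wordSum]
  congr 1
  ring

theorem sum_smul_of_eq_sum_smul_desClassSum (f : ℕ → ℚ) :
    ∑ π : Bgroup n, f (desB n π) • MonoidAlgebra.of ℚ (Bgroup n) π =
      ∑ k ∈ Finset.range (n + 1), f k • desClassSum n k := by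
  simp only [desClassSum, Finset.smul_sum, smul_ite, smul_zero]
  rw [Finset.sum_comm]
  refine Finset.sum_congr rfl fun π _ => ?_
  rw [Finset.sum_ite_eq, if_pos (Finset.mem_range.2 (Nat.lt_succ_of_le ?_))]
  exact (Finset.card_le_card (Finset.filter_subset _ _)).trans (Finset.card_range n).le

theorem wordSum_eq_sum (m : ℕ) :
    wordSum n m = ∑ k ∈ Finset.range (n + 1), (coeffOfDes n m k : ℚ) • desClassSum n k := by
  rw [← sum_smul_of_eq_sum_smul_desClassSum, wordSum]
  exact Finset.sum_congr rfl fun π _ => by rw [wordCount_eq_coeffOfDes π.2]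

theorem desClassSum_mem_span_wordSum {k : ℕ} (hk : k ≤ n) :
    desClassSum n k ∈ Submodule.span ℚ (Set.range (wordSum n)) := by
  induction k using Nat.strong_induction_on with
  | _ k ih =>
    have hsplit : wordSum n k =
        desClassSum n k + ∑ j ∈ Finset.range k, (coeffOfDes n k j : ℚ) • desClassSum n j := by
      rw [wordSum_eq_sum, ← Finset.sum_subset (Finset.range_subset_range.2 (Nat.succ_le_succ hk))
        fun j _ hj => by rw [coeffOfDes_of_lt (by simpa using hj), Nat.cast_zero, zero_smul],
        Finset.sum_range_succ, coeffOfDes_self, Nat.cast_one, one_smul, add_comm]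
    rw [eq_sub_of_add_eq hsplit.symm]
    exact Submodule.sub_mem _ (Submodule.subset_span ⟨k, rfl⟩) (Submodule.sum_mem _ fun j hj =>
      Submodule.smul_mem _ _ (ih j (Finset.mem_range.1 hj) (by simp at hj; omega)))

theorem span_desClassSum_eq_span_wordSum :
    Submodule.span ℚ (Set.range fun k : Fin (n + 1) => desClassSum n k) =
      Submodule.span ℚ (Set.range (wordSum n)) := by
  apply le_antisymm
  · exact Submodule.span_le.2 <| Set.range_subset_iff.2 fun k =>
      desClassSum_mem_span_wordSum n (Nat.lt_succ_iff.1 k.2)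
  · refine Submodule.span_le.2 <| Set.range_subset_iff.2 fun m => ?_
    rw [SetLike.mem_coe, wordSum_eq_sum]
    exact Submodule.sum_mem _ fun k hk => Submodule.smul_mem _ _
      (Submodule.subset_span ⟨⟨k, Finset.mem_range.1 hk⟩, rfl⟩)

theorem mul_mem_span_wordSum {a b : MonoidAlgebra ℚ (Bgroup n)}
    (ha : a ∈ Submodule.span ℚ (Set.range (wordSum n)))
    (hb : b ∈ Submodule.span ℚ (Set.range (wordSum n))) :
    a * b ∈ Submodule.span ℚ (Set.range (wordSum n)) ∧ a * b = b * a := by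
  refine ⟨Submodule.mul_mem_span_of_mul_mem ?_ ha hb, Submodule.commute_of_mem_span ?_ ha hb⟩
  · rintro _ ⟨l, rfl⟩ _ ⟨m, rfl⟩
    exact ⟨_, (wordSum_mul_wordSum n l m).symm⟩
  · rintro _ ⟨l, rfl⟩ _ ⟨m, rfl⟩
    exact commute_wordSum n l m

end GroupAlgebra

section Independence

def negPrefix (k : ℕ) : Equiv.Perm ℤ :=
  Function.Involutive.toPerm (fun x => if |x| ≤ k then -x else x) fun x => by
    by_cases h : |x| ≤ k <;> simp [h]

theorem negPrefix_apply (k : ℕ) (x : ℤ) : negPrefix k x = if |x| ≤ k then -x else x := rfl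

theorem negPrefix_mem {k : ℕ} (hk : k ≤ n) : negPrefix k ∈ Bgroup n :=
  ⟨fun i => by by_cases h : |i| ≤ k <;> simp [negPrefix_apply, h],
   fun i hi => by rw [negPrefix_apply, if_neg (by omega)]⟩

theorem desB_negPrefix {k : ℕ} (hk : k ≤ n) : desB n (negPrefix k) = k := by
  have : desSetB n (negPrefix k) = Finset.range k := by
    ext s
    have h1 : |(s : ℤ)| = s := Nat.abs_cast s
    have h2 : |(s : ℤ) + 1| = s + 1 := abs_of_nonneg (by positivity)
    rw [desSetB, Finset.mem_filter, Finset.mem_range, Finset.mem_range, negPrefix_apply,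
      negPrefix_apply, h1, h2]
    split_ifs <;> omega
  rw [desB, this, Finset.card_range]

variable (n)

theorem image_Icc_eq_range_desClassSum :
    (fun i => desClassSum n (i - 1)) '' Set.Icc 1 (n + 1) =
      Set.range fun k : Fin (n + 1) => desClassSum n k := by
  ext x
  simp only [Set.mem_image, Set.mem_range, Set.mem_Icc]
  constructor
  · rintro ⟨i, hi, rfl⟩
    exact ⟨⟨i - 1, by omega⟩, rfl⟩
  · rintro ⟨k, rfl⟩
    exact ⟨k + 1, by omega, rfl⟩

theorem coeff_desClassSum (k : ℕ) (π : Bgroup n) :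
    (desClassSum n k).coeff π = if desB n π = k then 1 else 0 := by
  rw [desClassSum, MonoidAlgebra.coeff_sum, Finset.sum_apply',
    Finset.sum_eq_single_of_mem π (Finset.mem_univ π) fun σ _ hσ => ?_]
  · split_ifs <;> simp [MonoidAlgebra.of_apply, MonoidAlgebra.coeff_single]
  · split_ifs <;> simp [MonoidAlgebra.of_apply, MonoidAlgebra.coeff_single, hσ]

theorem linearIndependent_desClassSum :
    LinearIndependent ℚ fun k : Fin (n + 1) => desClassSum n k := by
  refine Fintype.linearIndependent_iff.2 fun g hg j => ?_
  have hj : j.1 ≤ n := Nat.lt_succ_iff.1 j.2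
  have := congrArg (fun x => x.coeff ⟨negPrefix j, negPrefix_mem hj⟩) hg
  simp only [MonoidAlgebra.coeff_sum, Finset.sum_apply', MonoidAlgebra.coeff_smul_apply,
    coeff_desClassSum, desB_negPrefix hj, MonoidAlgebra.coeff_zero, Finsupp.coe_zero,
    Pi.zero_apply, smul_eq_mul, mul_ite, mul_one, mul_zero, Fin.val_inj] at this
  rwa [Finset.sum_ite_eq, if_pos (Finset.mem_univ j)] at this

end Independence

end BDescent

open BDescent in
theorem stmt4 (n : ℕ) :
    let E : ℕ → MonoidAlgebra ℚ ↥(Bgroup n) := fun i =>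
      ∑ᶠ π : ↥(Bgroup n),
        if desB n (π : Equiv.Perm ℤ) = i - 1
          then MonoidAlgebra.of ℚ ↥(Bgroup n) π else 0
    let S : Submodule ℚ (MonoidAlgebra ℚ ↥(Bgroup n)) :=
      Submodule.span ℚ (E '' Set.Icc 1 (n + 1))
    (∀ a ∈ S, ∀ b ∈ S, a * b ∈ S ∧ a * b = b * a) ∧
      Module.finrank ℚ ↥S = n + 1 := by
  intro E S
  have hE : E '' Set.Icc 1 (n + 1) = Set.range fun k : Fin (n + 1) => desClassSum n k := by
    rw [← image_Icc_eq_range_desClassSum]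
    exact congrArg (· '' _) (funext fun i => finsum_eq_sum_of_fintype _)
  have hS : S = Submodule.span ℚ (Set.range (wordSum n)) := by
    rw [← span_desClassSum_eq_span_wordSum, ← hE]
  refine ⟨fun a ha b hb => ?_, ?_⟩
  · rw [hS] at ha hb ⊢
    exact mul_mem_span_wordSum n ha hb
  · show Module.finrank ℚ (Submodule.span ℚ (E '' Set.Icc 1 (n + 1))) = n + 1
    rw [hE, finrank_span_eq_card (linearIndependent_desClassSum n), Fintype.card_fin]
end
end

section
/- The generating function Σ_{k ≥ 0} Ω'(π; k) t^k for the enriched order polynomial of a permutation π of [n] equals (1/2)·((1+t)^{n+1}/(1-t)^{n+1})·(4t/(1+t)^2)^{pe(π)+1}. In particular, Ω'(π; k) depends only on the number of interior peaks of π. -/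
open scoped Classical

noncomputable section

/-- `i` is a peak of `π` (with the convention `π(0) = π(n+1) = 0`). -/
def isPk {n : ℕ} (π : Equiv.Perm (Fin n)) (i : ℕ) : Prop :=
  pval π (i - 1) < pval π i ∧ pval π (i + 1) < pval π i

/-- Interior peak set: peaks `i` with `1 < i < n`. -/
def intPk {n : ℕ} (π : Equiv.Perm (Fin n)) : Finset ℕ :=
  (Finset.Ioo 1 n).filter (isPk π)

/-- Left peak set: peaks `i` with `1 ≤ i < n`. -/
def leftPk {n : ℕ} (π : Equiv.Perm (Fin n)) : Finset ℕ :=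
  (Finset.Ico 1 n).filter (isPk π)

/-- Right peak set: peaks `i` with `1 < i ≤ n`. -/
def rightPk {n : ℕ} (π : Equiv.Perm (Fin n)) : Finset ℕ :=
  (Finset.Ioc 1 n).filter (isPk π)

/-- Exterior peak set: peaks `i` with `1 ≤ i ≤ n`. -/
def extPk {n : ℕ} (π : Equiv.Perm (Fin n)) : Finset ℕ :=
  (Finset.Icc 1 n).filter (isPk π)

/-- Position of a nonzero integer `a` in the total order `-1 < 1 < -2 < 2 < ⋯`. -/
def ek (a : ℤ) : ℤ := if 0 < a then 2 * a - 1 else -2 * a - 2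

/-- `Ω'(π; k)`: the number of enriched `π`-partitions with parts in
`[k]' = {-1 < 1 < -2 < 2 < ⋯ < -k < k}`. -/
def enrichedCount {n : ℕ} (π : Equiv.Perm (Fin n)) (k : ℕ) : ℕ :=
  Nat.card {a : Fin n → ℤ //
    (∀ s, a s ≠ 0 ∧ |a s| ≤ (k : ℤ)) ∧
    ∀ (s : ℕ) (hs : s + 1 < n),
      if π ⟨s + 1, hs⟩ < π ⟨s, Nat.lt_of_succ_lt hs⟩ then
        ek (a ⟨s, Nat.lt_of_succ_lt hs⟩) < ek (a ⟨s + 1, hs⟩) ∨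
          (a ⟨s, Nat.lt_of_succ_lt hs⟩ = a ⟨s + 1, hs⟩ ∧ a ⟨s + 1, hs⟩ < 0)
      else
        ek (a ⟨s, Nat.lt_of_succ_lt hs⟩) < ek (a ⟨s + 1, hs⟩) ∨
          (a ⟨s, Nat.lt_of_succ_lt hs⟩ = a ⟨s + 1, hs⟩ ∧ 0 < a ⟨s + 1, hs⟩)}

/-- Position of an integer `a` in the total order `0 < -1 < 1 < -2 < 2 < ⋯`. -/
def el (a : ℤ) : ℤ := if 0 < a then 2 * a else if a = 0 then 0 else -2 * a - 1

/-- `Ω^{(ℓ)}(π; k)`: the number of left enriched `π`-partitions with parts in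
`[k]^{(ℓ)} = {0 < -1 < 1 < ⋯ < -k < k}`. -/
def leftEnrichedCount {n : ℕ} (π : Equiv.Perm (Fin n)) (k : ℕ) : ℕ :=
  Nat.card {a : Fin n → ℤ //
    (∀ s, |a s| ≤ (k : ℤ)) ∧
    ∀ (s : ℕ) (hs : s + 1 < n),
      if π ⟨s + 1, hs⟩ < π ⟨s, Nat.lt_of_succ_lt hs⟩ then
        el (a ⟨s, Nat.lt_of_succ_lt hs⟩) < el (a ⟨s + 1, hs⟩) ∨
          (a ⟨s, Nat.lt_of_succ_lt hs⟩ = a ⟨s + 1, hs⟩ ∧ a ⟨s + 1, hs⟩ < 0)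
      else
        el (a ⟨s, Nat.lt_of_succ_lt hs⟩) < el (a ⟨s + 1, hs⟩) ∨
          (a ⟨s, Nat.lt_of_succ_lt hs⟩ = a ⟨s + 1, hs⟩ ∧ 0 ≤ a ⟨s + 1, hs⟩)}

/-!
Code the parts `-1 < 1 < -2 < 2 < ⋯ < -k < k` by `0, 1, …, 2k - 1`. An enriched `π`-partition
becomes a weakly increasing code sequence in which a repeated code must be even (negative) on a
descent of `π` and odd (positive) on an ascent. The slots where the absolute value, `code / 2`,
jumps form a set `S` cutting the positions into `#S + 1` blocks. Inside a block the signs read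
`− ⋯ − + ⋯ +`, so its descent pattern is `D ⋯ D A ⋯ A`; hence `S` contains one of the two slots
around every interior peak. Conversely, for such `S` every sign of a block is forced except at one free
position, so `S` accounts for `2 ^ (#S + 1) * k.choose (#S + 1)` sequences. Summing over `S` with
`y = 2t / (1 - t)` gives `(1 - t)⁻¹ y (y ^ 2 + 2y) ^ pe (1 + y) ^ (n - 1 - 2 pe)`, which is the
stated rational function.
-/

namespace EnrichedPartition

open Finset

section Blocks

variable (S : Finset ℕ)

/-- Slot `s` lies between positions `s` and `s + 1`; the slots in `S` cut the positions into
blocks, numbered from `0`. -/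
def blockIdx (i : ℕ) : ℕ := #(S.filter (· < i))

variable {S}

theorem blockIdx_mono : Monotone (blockIdx S) := fun _ _ h =>
  card_le_card (monotone_filter_right S fun _ _ hx => lt_of_lt_of_le hx h)

theorem blockIdx_zero : blockIdx S 0 = 0 := by
  simp [blockIdx]

theorem blockIdx_succ (s : ℕ) : blockIdx S (s + 1) = blockIdx S s + if s ∈ S then 1 else 0 := by
  have : S.filter (· < s + 1) = S.filter (· < s) ∪ S.filter (· = s) := by
    ext x; simp only [mem_filter, mem_union, Nat.lt_succ_iff, le_iff_lt_or_eq]; tauto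
  rw [blockIdx, blockIdx, this, card_union_of_disjoint (disjoint_filter.2 fun _ _ h => h.ne),
    filter_eq']
  split_ifs <;> simp

theorem blockIdx_succ_of_mem {s : ℕ} (h : s ∈ S) : blockIdx S (s + 1) = blockIdx S s + 1 := by
  simp [blockIdx_succ, h]

theorem blockIdx_succ_of_notMem {s : ℕ} (h : s ∉ S) : blockIdx S (s + 1) = blockIdx S s := by
  simp [blockIdx_succ, h]

theorem blockIdx_le_card (i : ℕ) : blockIdx S i ≤ #S :=
  card_le_card (filter_subset _ _)

theorem notMem_of_blockIdx_eq {i t i' : ℕ} (hit : i ≤ t) (hti' : t < i')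
    (h : blockIdx S i = blockIdx S i') : t ∉ S := fun ht => by
  have := blockIdx_succ_of_mem ht
  have := blockIdx_mono (S := S) hit
  have := blockIdx_mono (S := S) (show t + 1 ≤ i' from hti')
  omega

theorem blockIdx_eq_of_le_of_le {i t i' : ℕ} (hit : i ≤ t) (hti' : t ≤ i')
    (h : blockIdx S i = blockIdx S i') : blockIdx S t = blockIdx S i :=
  le_antisymm (h ▸ blockIdx_mono hti') (blockIdx_mono hit)

theorem exists_blockIdx_eq {m : ℕ} (hS : S ⊆ range m) {j : ℕ} (hj : j ≤ #S) :
    ∃ i ≤ m, blockIdx S i = j := by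
  have ivt : ∀ N, ∀ j ≤ blockIdx S N, ∃ i ≤ N, blockIdx S i = j := by
    intro N
    induction N with
    | zero => intro j hj; exact ⟨0, le_rfl, by rw [blockIdx_zero] at hj ⊢; omega⟩
    | succ N ih =>
      intro j hj
      rcases eq_or_lt_of_le hj with rfl | hlt
      · exact ⟨N + 1, le_rfl, rfl⟩
      · have := blockIdx_succ (S := S) N
        obtain ⟨i, hi, rfl⟩ := ih j (by split_ifs at this <;> omega)
        exact ⟨i, by omega, rfl⟩
  have hm : blockIdx S m = #S := by
    rw [blockIdx, filter_true_of_mem fun x hx => mem_range.1 (hS hx)]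
  exact ivt m j (hm ▸ hj)

variable (S) in
def blockOf (i : ℕ) : Fin (#S + 1) := ⟨blockIdx S i, Nat.lt_succ_of_le (blockIdx_le_card i)⟩

theorem blockOf_lt_succ_of_mem {s : ℕ} (h : s ∈ S) : blockOf S s < blockOf S (s + 1) :=
  Fin.mk_lt_mk.2 (by rw [blockIdx_succ_of_mem h]; omega)

theorem blockOf_succ_of_notMem {s : ℕ} (h : s ∉ S) : blockOf S (s + 1) = blockOf S s :=
  Fin.ext (blockIdx_succ_of_notMem h)

end Blocks

section DescentWord

variable (n : ℕ) (d : ℕ → Bool) (S : Finset ℕ)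

/-- `d s = true` records a descent at slot `s`; a peak slot is an ascent followed by a descent. -/
def peakSlots : Finset ℕ := (range (n - 2)).filter fun s => d s = false ∧ d (s + 1) = true

def hittingSets : Finset (Finset ℕ) :=
  (range (n - 1)).powerset.filter fun S => ∀ s ∈ peakSlots n d, s ∈ S ∨ s + 1 ∈ S

/-- Within a block the signs read `− ⋯ − + ⋯ +`: an ascent of the block before `i` forces `+` at
`i`, a descent of the block at or after `i` forces `−`. -/
def AscBefore (i : ℕ) : Prop := ∃ s, s + 1 ≤ i ∧ blockIdx S s = blockIdx S i ∧ d s = false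

def DescFrom (i : ℕ) : Prop :=
  ∃ s, i ≤ s ∧ s + 1 < n ∧ blockIdx S (s + 1) = blockIdx S i ∧ d s = true

def IsFree (i : ℕ) : Prop := ¬AscBefore d S i ∧ ¬DescFrom n d S i

def freePos (j : ℕ) : ℕ :=
  if h : ∃ i < n, blockIdx S i = j ∧ IsFree n d S i then h.choose else 0

variable {n d S}

theorem subset_range_of_mem_hittingSets (hS : S ∈ hittingSets n d) : S ⊆ range (n - 1) :=
  mem_powerset.1 (mem_filter.1 hS).1

theorem exists_ascent_descent_adjacent {s t : ℕ} (hst : s < t) (hs : d s = false)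
    (ht : d t = true) : ∃ r, s ≤ r ∧ r < t ∧ d r = false ∧ d (r + 1) = true := by
  induction t, hst using Nat.le_induction with
  | base => exact ⟨s, le_rfl, Nat.lt_succ_self s, hs, ht⟩
  | succ t hst ih =>
    cases hdt : d t
    · exact ⟨t, by omega, Nat.lt_succ_self t, hdt, ht⟩
    · obtain ⟨r, hsr, hrt, hr⟩ := ih hdt
      exact ⟨r, hsr, by omega, hr⟩

/-- An ascent before a descent would enclose a peak slot, which a hitting set cuts. -/
theorem no_ascent_before_descent_in_block (hS : S ∈ hittingSets n d) {s t : ℕ} (hst : s < t)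
    (htn : t + 1 < n) (hs : d s = false) (ht : d t = true)
    (hblock : blockIdx S s = blockIdx S (t + 1)) : False := by
  obtain ⟨r, hsr, hrt, hr, hr1⟩ := exists_ascent_descent_adjacent hst hs ht
  have hpeak : r ∈ peakSlots n d := mem_filter.2 ⟨mem_range.2 (by omega), hr, hr1⟩
  rcases (mem_filter.1 hS).2 r hpeak with h | h
  · exact notMem_of_blockIdx_eq hsr (by omega) hblock h
  · exact notMem_of_blockIdx_eq (by omega) (by omega) hblock h

theorem not_ascBefore_of_descFrom (hS : S ∈ hittingSets n d) {i : ℕ} (hD : DescFrom n d S i) :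
    ¬AscBefore d S i := by
  rintro ⟨s, hsi, hs, hds⟩
  obtain ⟨t, hit, htn, ht, hdt⟩ := hD
  have hst : s < t := by omega
  exact no_ascent_before_descent_in_block hS hst htn hds hdt (hs.trans ht.symm)

theorem IsFree.le {i i' : ℕ} (hi : IsFree n d S i) (hi' : IsFree n d S i') (hi'n : i' < n)
    (h : blockIdx S i = blockIdx S i') : i' ≤ i := by
  by_contra! hlt
  have hsucc : blockIdx S (i + 1) = blockIdx S i := blockIdx_eq_of_le_of_le (by omega) hlt h
  cases hd : d i
  · exact hi'.1 ⟨i, hlt, h, hd⟩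
  · exact hi.2 ⟨i, le_rfl, by omega, hsucc, hd⟩

theorem IsFree.eq {i i' : ℕ} (hi : IsFree n d S i) (hi' : IsFree n d S i') (hin : i < n)
    (hi'n : i' < n) (h : blockIdx S i = blockIdx S i') : i = i' :=
  le_antisymm (hi'.le hi hin h.symm) (hi.le hi' hi'n h)

theorem exists_not_descFrom (hn : 1 ≤ n) (hS : S ∈ hittingSets n d) {j : ℕ} (hj : j ≤ #S) :
    ∃ i < n, blockIdx S i = j ∧ ¬DescFrom n d S i := by
  obtain ⟨i₀, hi₀, hbi₀⟩ := exists_blockIdx_eq (subset_range_of_mem_hittingSets hS) hj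
  set T := (range n).filter (blockIdx S · = j)
  have hT : T.Nonempty := ⟨i₀, mem_filter.2 ⟨mem_range.2 (by omega), hbi₀⟩⟩
  obtain ⟨hlast, hblock⟩ := mem_filter.1 (T.max'_mem hT)
  refine ⟨T.max' hT, mem_range.1 hlast, hblock, ?_⟩
  rintro ⟨s, hs, hsn, hbs, -⟩
  have := T.le_max' (s + 1) (mem_filter.2 ⟨mem_range.2 hsn, hbs.trans hblock⟩)
  omega

theorem exists_isFree (hn : 1 ≤ n) (hS : S ∈ hittingSets n d) {j : ℕ} (hj : j ≤ #S) :
    ∃ i < n, blockIdx S i = j ∧ IsFree n d S i := by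
  have h := exists_not_descFrom hn hS hj
  obtain ⟨hin, hbi, hD⟩ := Nat.find_spec h
  refine ⟨Nat.find h, hin, hbi, ⟨?_, hD⟩⟩
  rintro ⟨s, hsi, hbs, hds⟩
  set i := Nat.find h
  have hprev : blockIdx S (i - 1) = j :=
    (blockIdx_eq_of_le_of_le (by omega) (by omega) hbs).trans (hbs.trans hbi)
  have hD' : DescFrom n d S (i - 1) := by
    by_contra hnot
    exact Nat.find_min h (show i - 1 < i by omega) ⟨by omega, hprev, hnot⟩
  obtain ⟨t, hit, htn, hbt, hdt⟩ := hD'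
  have hti : t = i - 1 := by
    by_contra hne
    exact hD ⟨t, by omega, htn, by rw [hbt, hprev, hbi], hdt⟩
  subst hti
  have hst : s < i - 1 := lt_of_le_of_ne (by omega) fun h => by rw [h, hdt] at hds; cases hds
  exact no_ascent_before_descent_in_block hS hst htn hds hdt (by rw [hbs, hbt, hprev, hbi])

theorem freePos_spec (hn : 1 ≤ n) (hS : S ∈ hittingSets n d) {j : ℕ} (hj : j ≤ #S) :
    freePos n d S j < n ∧ blockIdx S (freePos n d S j) = j ∧ IsFree n d S (freePos n d S j) := by
  have h := exists_isFree hn hS hj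
  rw [freePos, dif_pos h]
  exact h.choose_spec

theorem IsFree.eq_freePos (hn : 1 ≤ n) (hS : S ∈ hittingSets n d) {i : ℕ} (hin : i < n)
    (hi : IsFree n d S i) : i = freePos n d S (blockIdx S i) := by
  obtain ⟨hpn, hpb, hp⟩ := freePos_spec hn hS (blockIdx_le_card (S := S) i)
  exact hi.eq hp hin hpn hpb.symm

end DescentWord

section Admissible

variable (n : ℕ) (d : ℕ → Bool)

/-- `f` codes an enriched partition for the descent word `d`, the parts `-1, 1, -2, 2, …` having
codes `0, 1, 2, 3, …`. -/
def IsAdmissible (f : ℕ → ℕ) : Prop :=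
  ∀ s, s + 1 < n → f s < f (s + 1) ∨ (f s = f (s + 1) ∧ f s % 2 = if d s then 0 else 1)

def breakSet (f : ℕ → ℕ) : Finset ℕ := (range (n - 1)).filter fun s => f s / 2 ≠ f (s + 1) / 2

variable {n d} {f : ℕ → ℕ}

theorem div_two_eq_succ_of_notMem_breakSet {s : ℕ} (hs : s + 1 < n) (h : s ∉ breakSet n f) :
    f s / 2 = f (s + 1) / 2 := by
  by_contra hne
  exact h (mem_filter.2 ⟨mem_range.2 (by omega), hne⟩)

theorem div_two_eq_of_blockIdx_eq {i i' : ℕ} (hi : i < n) (hi' : i' < n)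
    (h : blockIdx (breakSet n f) i = blockIdx (breakSet n f) i') : f i / 2 = f i' / 2 := by
  wlog hle : i ≤ i' generalizing i i'
  · exact (this hi' hi h.symm (by omega)).symm
  induction i', hle using Nat.le_induction with
  | base => rfl
  | succ t hit ih =>
    have ht := notMem_of_blockIdx_eq hit (Nat.lt_succ_self t) h
    rw [ih (by omega) ((blockIdx_eq_of_le_of_le hit (by omega) h).symm),
      div_two_eq_succ_of_notMem_breakSet hi' ht]

namespace IsAdmissible

theorem le_of_le (hf : IsAdmissible n d f) {i i' : ℕ} (h : i ≤ i') (hi' : i' < n) :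
    f i ≤ f i' := by
  induction i', h using Nat.le_induction with
  | base => exact le_rfl
  | succ t _ ih =>
    have := ih (by omega)
    rcases hf t hi' with h | h <;> omega

theorem div_two_lt_of_blockIdx_lt (hf : IsAdmissible n d f) {i i' : ℕ} (hi' : i' < n)
    (h : blockIdx (breakSet n f) i < blockIdx (breakSet n f) i') : f i / 2 < f i' / 2 := by
  have hle : i ≤ i' := by
    by_contra! hlt
    exact absurd (blockIdx_mono (S := breakSet n f) hlt.le) (not_le.2 h)
  induction i', hle using Nat.le_induction with
  | base => omega
  | succ t hit ih =>
    by_cases ht : t ∈ breakSet n f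
    · have hne := (mem_filter.1 ht).2
      have := hf.le_of_le hit (by omega)
      have := hf.le_of_le (show t ≤ t + 1 by omega) hi'
      omega
    · rw [← div_two_eq_succ_of_notMem_breakSet hi' ht]
      exact ih (by omega) (by rwa [blockIdx_succ_of_notMem ht] at h)

theorem succ_mod_two_of_ascent (hf : IsAdmissible n d f) {s : ℕ} (hs : s + 1 < n)
    (hsS : s ∉ breakSet n f) (hd : d s = false) : f (s + 1) % 2 = 1 := by
  have := div_two_eq_succ_of_notMem_breakSet hs hsS
  rcases hf s hs with h | h
  · omega
  · simp only [hd, Bool.false_eq_true, if_false] at h; omega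

theorem mod_two_of_descent (hf : IsAdmissible n d f) {s : ℕ} (hs : s + 1 < n)
    (hsS : s ∉ breakSet n f) (hd : d s = true) : f s % 2 = 0 := by
  have := div_two_eq_succ_of_notMem_breakSet hs hsS
  rcases hf s hs with h | h
  · omega
  · simp only [hd, if_true] at h; omega

theorem mod_two_of_ascBefore (hf : IsAdmissible n d f) {i : ℕ} (hi : i < n)
    (h : AscBefore d (breakSet n f) i) : f i % 2 = 1 := by
  obtain ⟨s, hsi, hbs, hds⟩ := h
  have hs := notMem_of_blockIdx_eq le_rfl (Nat.lt_of_succ_le hsi) hbs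
  have h1 := hf.succ_mod_two_of_ascent (by omega) hs hds
  have h2 := hf.le_of_le hsi hi
  have h3 := div_two_eq_of_blockIdx_eq (f := f) (show s + 1 < n by omega) hi
    ((blockIdx_eq_of_le_of_le (Nat.le_succ s) hsi hbs).trans hbs)
  omega

theorem mod_two_of_descFrom (hf : IsAdmissible n d f) {i : ℕ} (hi : i < n)
    (h : DescFrom n d (breakSet n f) i) : f i % 2 = 0 := by
  obtain ⟨t, hit, htn, hbt, hdt⟩ := h
  have ht := notMem_of_blockIdx_eq hit (Nat.lt_succ_self t) hbt.symm
  have h1 := hf.mod_two_of_descent htn ht hdt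
  have h2 := hf.le_of_le hit (by omega)
  have h3 := div_two_eq_of_blockIdx_eq (f := f) hi (show t < n by omega)
    (blockIdx_eq_of_le_of_le hit (Nat.le_succ t) hbt.symm).symm
  omega

theorem breakSet_mem_hittingSets (hf : IsAdmissible n d f) : breakSet n f ∈ hittingSets n d := by
  refine mem_filter.2 ⟨mem_powerset.2 (filter_subset _ _), fun s hs => ?_⟩
  obtain ⟨hsn, hasc, hdesc⟩ := mem_filter.1 hs
  have hsn := mem_range.1 hsn
  by_contra! h
  have := hf.succ_mod_two_of_ascent (by omega) h.1 hasc
  have := hf.mod_two_of_descent (by omega) h.2 hdesc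
  omega

end IsAdmissible

end Admissible

section Decode

variable {n k : ℕ} {d : ℕ → Bool} {S : Finset ℕ}

variable {f : ℕ → ℕ} {v : Fin (#S + 1) → ℕ} {σ : ℕ → ℕ}

theorem isAdmissible_of_blockwise (hv : StrictMono v) (hσ : ∀ i, σ i ≤ 1)
    (hasc : ∀ i < n, AscBefore d S i → σ i = 1) (hdesc : ∀ i < n, DescFrom n d S i → σ i = 0)
    (hf : ∀ i < n, f i = 2 * v (blockOf S i) + σ i) : IsAdmissible n d f := by
  intro s hs
  rw [hf s (by omega), hf (s + 1) hs]
  have := hσ s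
  have := hσ (s + 1)
  by_cases hsS : s ∈ S
  · have := hv (blockOf_lt_succ_of_mem hsS)
    omega
  · have hblock := blockOf_succ_of_notMem hsS
    rw [hblock]
    cases hd : d s
    · have := hasc (s + 1) hs ⟨s, le_rfl, congrArg Fin.val hblock.symm, hd⟩
      simp only [Bool.false_eq_true, if_false]
      omega
    · have := hdesc s (by omega) ⟨s, le_rfl, hs, congrArg Fin.val hblock, hd⟩
      simp only [if_true]
      omega

theorem breakSet_eq_of_blockwise (hS : S ⊆ range (n - 1)) (hv : StrictMono v)
    (hσ : ∀ i, σ i ≤ 1) (hf : ∀ i < n, f i = 2 * v (blockOf S i) + σ i) : breakSet n f = S := by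
  have hdiv (i : ℕ) (hi : i < n) : f i / 2 = v (blockOf S i) := by
    have := hσ i
    rw [hf i hi]
    omega
  ext s
  refine ⟨fun h => ?_, fun h => ?_⟩
  · obtain ⟨hs, hne⟩ := mem_filter.1 h
    have hs := mem_range.1 hs
    by_contra hsS
    rw [hdiv s (by omega), hdiv (s + 1) (by omega), blockOf_succ_of_notMem hsS] at hne
    exact hne rfl
  · have hs := mem_range.1 (hS h)
    refine mem_filter.2 ⟨hS h, ?_⟩
    rw [hdiv s (by omega), hdiv (s + 1) (by omega)]
    exact (hv (blockOf_lt_succ_of_mem h)).ne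

end Decode

section Fiber

variable {n k m : ℕ} {d : ℕ → Bool} {S : Finset ℕ}

def natSeq (e : Fin n → Fin m) (i : ℕ) : ℕ := if h : i < n then e ⟨i, h⟩ else 0

theorem natSeq_of_lt (e : Fin n → Fin m) {i : ℕ} (h : i < n) : natSeq e i = e ⟨i, h⟩ :=
  dif_pos h

theorem natSeq_lt (hn : 1 ≤ n) (e : Fin n → Fin m) (i : ℕ) : natSeq e i < m := by
  unfold natSeq
  split_ifs
  · exact Fin.isLt _
  · exact Nat.pos_of_ne_zero fun hm => (hm ▸ e ⟨0, hn⟩).elim0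

variable (n d S) in
def blockSign (ε : Fin (#S + 1) → Bool) (i : ℕ) : ℕ :=
  if AscBefore d S i then 1 else if DescFrom n d S i then 0 else (ε (blockOf S i)).toNat

theorem blockSign_le_one (ε : Fin (#S + 1) → Bool) (i : ℕ) : blockSign n d S ε i ≤ 1 := by
  unfold blockSign
  split_ifs <;> simp [Bool.toNat_le]

theorem blockSign_of_isFree {ε : Fin (#S + 1) → Bool} {i : ℕ} (hi : IsFree n d S i) :
    blockSign n d S ε i = (ε (blockOf S i)).toNat := by
  rw [blockSign, if_neg hi.1, if_neg hi.2]

theorem blockSign_eq_mod_two {f : ℕ → ℕ} (hn : 1 ≤ n) (hf : IsAdmissible n d f)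
    (hS : breakSet n f = S) {ε : Fin (#S + 1) → Bool}
    (hε : ∀ j, ε j = decide (f (freePos n d S j) % 2 = 1)) {i : ℕ} (hi : i < n) :
    blockSign n d S ε i = f i % 2 := by
  subst hS
  unfold blockSign
  split_ifs with hA hD
  · exact (hf.mod_two_of_ascBefore hi hA).symm
  · exact (hf.mod_two_of_descFrom hi hD).symm
  · have hfree := IsFree.eq_freePos hn hf.breakSet_mem_hittingSets hi ⟨hA, hD⟩
    rw [hε, show ((blockOf _ i : Fin _) : ℕ) = blockIdx _ i from rfl, ← hfree]
    rcases Nat.mod_two_eq_zero_or_one (f i) with h | h <;> simp [h]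

variable (n d S) in
def decodeSeq (ε : Fin (#S + 1) → Bool) (g : Fin (#S + 1) ↪o Fin k) (i : ℕ) : ℕ :=
  2 * g (blockOf S i) + blockSign n d S ε i

theorem decodeSeq_lt (ε : Fin (#S + 1) → Bool) (g : Fin (#S + 1) ↪o Fin k) (i : ℕ) :
    decodeSeq n d S ε g i < 2 * k := by
  have := blockSign_le_one (n := n) (d := d) ε i
  have := (g (blockOf S i)).isLt
  unfold decodeSeq
  omega

theorem isAdmissible_decodeSeq (hS : S ∈ hittingSets n d) (ε : Fin (#S + 1) → Bool)
    (g : Fin (#S + 1) ↪o Fin k) {f : ℕ → ℕ} (hf : ∀ i < n, f i = decodeSeq n d S ε g i) :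
    IsAdmissible n d f ∧ breakSet n f = S := by
  have hg : StrictMono fun j => (g j : ℕ) := fun _ _ h => g.strictMono h
  refine ⟨isAdmissible_of_blockwise hg (blockSign_le_one ε) (fun i _ hA => if_pos hA)
    (fun i _ hD => ?_) hf,
    breakSet_eq_of_blockwise (subset_range_of_mem_hittingSets hS) hg (blockSign_le_one ε) hf⟩
  rw [blockSign, if_neg (not_ascBefore_of_descFrom hS hD), if_pos hD]

variable (n k d S) in
abbrev AdmissibleFiber :=
  {e : Fin n → Fin (2 * k) // IsAdmissible n d (natSeq e) ∧ breakSet n (natSeq e) = S}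

variable (n d S) in
def freeSigns (e : Fin n → Fin (2 * k)) (j : Fin (#S + 1)) : Bool :=
  decide (natSeq e (freePos n d S j) % 2 = 1)

theorem strictMono_div_two_freePos (hn : 1 ≤ n) (hS : S ∈ hittingSets n d)
    (e : AdmissibleFiber n k d S) :
    StrictMono fun j : Fin (#S + 1) => natSeq e.1 (freePos n d S j) / 2 := fun j j' hjj' => by
  obtain ⟨hf, hbreak⟩ := e.2
  obtain ⟨-, hj, -⟩ := freePos_spec hn hS (Nat.lt_succ_iff.1 j.isLt)
  obtain ⟨hj'n, hj', -⟩ := freePos_spec hn hS (Nat.lt_succ_iff.1 j'.isLt)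
  exact hf.div_two_lt_of_blockIdx_lt hj'n (by rw [hbreak, hj, hj']; exact hjj')

def blockValues (hn : 1 ≤ n) (hS : S ∈ hittingSets n d) (e : AdmissibleFiber n k d S) :
    Fin (#S + 1) ↪o Fin k :=
  OrderEmbedding.ofStrictMono
    (fun j => ⟨natSeq e.1 (freePos n d S j) / 2,
      by have := natSeq_lt hn e.1 (freePos n d S j); omega⟩)
    fun _ _ h => Fin.mk_lt_mk.2 (strictMono_div_two_freePos hn hS e h)

def decodeFiber (hS : S ∈ hittingSets n d) (ε : Fin (#S + 1) → Bool)
    (g : Fin (#S + 1) ↪o Fin k) : AdmissibleFiber n k d S :=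
  ⟨fun i => ⟨decodeSeq n d S ε g i, decodeSeq_lt ε g i⟩,
    isAdmissible_decodeSeq hS ε g fun _ hi => natSeq_of_lt _ hi⟩

theorem decodeSeq_freeSigns_blockValues (hn : 1 ≤ n) (hS : S ∈ hittingSets n d)
    (e : AdmissibleFiber n k d S) {i : ℕ} (hi : i < n) :
    decodeSeq n d S (freeSigns n d S e.1) (blockValues hn hS e) i = natSeq e.1 i := by
  obtain ⟨hf, hbreak⟩ := e.2
  have hsign := blockSign_eq_mod_two hn hf hbreak (ε := freeSigns n d S e.1) (fun _ => rfl) hi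
  have hval : natSeq e.1 (freePos n d S (blockIdx S i)) / 2 = natSeq e.1 i / 2 := by
    obtain ⟨hpn, hpb, -⟩ := freePos_spec hn hS (blockIdx_le_card (S := S) i)
    exact div_two_eq_of_blockIdx_eq hpn hi (by rwa [hbreak])
  rw [decodeSeq, hsign]
  show 2 * (natSeq e.1 (freePos n d S (blockIdx S i)) / 2) + natSeq e.1 i % 2 = natSeq e.1 i
  omega

theorem natSeq_decodeFiber_freePos (hn : 1 ≤ n) (hS : S ∈ hittingSets n d)
    (ε : Fin (#S + 1) → Bool) (g : Fin (#S + 1) ↪o Fin k) (j : Fin (#S + 1)) :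
    natSeq (decodeFiber hS ε g).1 (freePos n d S j) = 2 * g j + (ε j).toNat := by
  obtain ⟨hjn, hjb, hjfree⟩ := freePos_spec hn hS (Nat.lt_succ_iff.1 j.isLt)
  rw [natSeq_of_lt _ hjn]
  have hj : blockOf S (freePos n d S j) = j := Fin.ext hjb
  simp only [decodeFiber, decodeSeq, blockSign_of_isFree hjfree, hj]

/-- The sign at the free position of each block, and the increasing block values. -/
def fiberEquiv (hn : 1 ≤ n) (hS : S ∈ hittingSets n d) :
    AdmissibleFiber n k d S ≃ (Fin (#S + 1) → Bool) × (Fin (#S + 1) ↪o Fin k) where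
  toFun e := (freeSigns n d S e.1, blockValues hn hS e)
  invFun p := decodeFiber hS p.1 p.2
  left_inv e := Subtype.ext <| funext fun i => Fin.ext <| by
    rw [← natSeq_of_lt e.1 i.isLt, ← decodeSeq_freeSigns_blockValues hn hS e i.isLt]
    rfl
  right_inv p := by
    refine Prod.ext (funext fun j => ?_) (DFunLike.ext _ _ fun j => Fin.ext ?_)
    · simp only [freeSigns, natSeq_decodeFiber_freePos hn hS]
      cases p.1 j <;> simp
    · simp only [blockValues, OrderEmbedding.coe_ofStrictMono, natSeq_decodeFiber_freePos hn hS]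
      have := Bool.toNat_le (p.1 j)
      omega

theorem card_admissibleFiber (hn : 1 ≤ n) (hS : S ∈ hittingSets n d) :
    Nat.card (AdmissibleFiber n k d S) = 2 ^ (#S + 1) * k.choose (#S + 1) := by
  rw [Nat.card_congr (fiberEquiv hn hS), Nat.card_prod, Nat.card_fun,
    Nat.card_congr Set.powersetCard.ofFinEmbEquiv, Set.powersetCard.card]
  simp

theorem card_admissible (hn : 1 ≤ n) (d : ℕ → Bool) :
    Nat.card {e : Fin n → Fin (2 * k) // IsAdmissible n d (natSeq e)} =
      ∑ S ∈ hittingSets n d, 2 ^ (#S + 1) * k.choose (#S + 1) := by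
  rw [Nat.card_eq_fintype_card, Fintype.card_subtype,
    card_eq_sum_card_fiberwise fun e he => (mem_filter.1 he).2.breakSet_mem_hittingSets]
  refine sum_congr rfl fun S hS => ?_
  rw [← card_admissibleFiber hn hS, filter_filter, Nat.card_eq_fintype_card,
    Fintype.card_subtype]

end Fiber

section HittingSum

theorem two_mul_card_le_of_pairs {P U : Finset ℕ} (hPU : ∀ s ∈ P, s ∈ U ∧ s + 1 ∈ U)
    (hP : ∀ s ∈ P, s + 1 ∉ P) : 2 * #P ≤ #U := by
  have hdisj : Disjoint P (P.image (· + 1)) := disjoint_left.2 fun s hs hs' => by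
    obtain ⟨t, ht, rfl⟩ := mem_image.1 hs'
    exact hP t ht hs
  calc 2 * #P = #(P ∪ P.image (· + 1)) := by
        rw [card_union_of_disjoint hdisj, card_image_of_injective _ (add_left_injective 1)]
        ring
    _ ≤ #U := card_le_card (union_subset (fun s hs => (hPU s hs).1) fun s hs => by
        obtain ⟨t, ht, rfl⟩ := mem_image.1 hs
        exact (hPU t ht).2)

theorem hits_insert_iff {P S : Finset ℕ} {x : ℕ} (hx : ∀ s ∈ P, s ≠ x ∧ s + 1 ≠ x) :
    (∀ s ∈ P, s ∈ insert x S ∨ s + 1 ∈ insert x S) ↔ ∀ s ∈ P, s ∈ S ∨ s + 1 ∈ S :=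
  forall₂_congr fun s hs => by
    rw [mem_insert, mem_insert, or_iff_right (hx s hs).1, or_iff_right (hx s hs).2]

variable {R : Type*} [CommRing R] (y : R)

theorem sum_pow_card_hitting_insert_pair {P U : Finset ℕ} {a : ℕ} (ha : a ∉ insert (a + 1) U)
    (ha1 : a + 1 ∉ U) (hsep : ∀ s ∈ P, s ≠ a ∧ s ≠ a + 1 ∧ s + 1 ≠ a) :
    ∑ S ∈ (insert a (insert (a + 1) U)).powerset with ∀ s ∈ insert a P, s ∈ S ∨ s + 1 ∈ S,
        y ^ #S =
      (y ^ 2 + 2 * y) * ∑ S ∈ U.powerset with ∀ s ∈ P, s ∈ S ∨ s + 1 ∈ S, y ^ #S := by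
  have hhit_a (S : Finset ℕ) := hits_insert_iff (S := S) (x := a) fun s hs =>
    ⟨(hsep s hs).1, (hsep s hs).2.2⟩
  have hhit_a1 (S : Finset ℕ) := hits_insert_iff (S := S) (x := a + 1) fun s hs =>
    ⟨(hsep s hs).2.1, fun h => (hsep s hs).1 (by omega)⟩
  rw [sum_filter, sum_powerset_insert ha, sum_powerset_insert ha1, sum_powerset_insert ha1,
    ← sum_add_distrib, ← sum_add_distrib, ← sum_add_distrib, sum_filter, mul_sum]
  refine sum_congr rfl fun S hS => ?_
  have hSU := mem_powerset.1 hS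
  have haS : a ∉ S := fun h => ha (mem_insert_of_mem (hSU h))
  have ha1S : a + 1 ∉ S := fun h => ha1 (hSU h)
  have ha1S' : a ∉ insert (a + 1) S := by simp [haS]
  simp only [forall_mem_insert]
  simp only [hhit_a, hhit_a1, card_insert_of_notMem haS, card_insert_of_notMem ha1S,
    card_insert_of_notMem ha1S', mem_insert_self, haS, ha1S, mem_insert_of_mem, or_true, true_or,
    or_self, true_and, false_and, if_false, zero_add]
  split_ifs <;> ring

/-- Each pair `{s, s + 1}` contributes the factor `(1 + y) ^ 2 - 1` of its nonempty subsets. -/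
theorem sum_pow_card_hitting_pairs (P : Finset ℕ) :
    ∀ U : Finset ℕ, (∀ s ∈ P, s ∈ U ∧ s + 1 ∈ U) → (∀ s ∈ P, s + 1 ∉ P) →
      ∑ S ∈ U.powerset with ∀ s ∈ P, s ∈ S ∨ s + 1 ∈ S, y ^ #S =
        (y ^ 2 + 2 * y) ^ #P * (1 + y) ^ (#U - 2 * #P) := by
  induction P using Finset.induction_on with
  | empty =>
    intro U _ _
    simpa [add_comm] using sum_pow_mul_eq_add_pow y 1 U
  | @insert a P ha ih =>
    intro U hPU hP
    have haU := hPU a (mem_insert_self a P)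
    have hsep : ∀ s ∈ P, s ≠ a ∧ s ≠ a + 1 ∧ s + 1 ≠ a := fun s hs =>
      ⟨fun h => ha (h ▸ hs), fun h => hP a (mem_insert_self a P) (h ▸ mem_insert_of_mem hs),
        fun h => hP s (mem_insert_of_mem hs) (h ▸ mem_insert_self a P)⟩
    set U' := (U.erase a).erase (a + 1)
    have ha1 : a + 1 ∉ U' := notMem_erase _ _
    have haU' : a ∉ insert (a + 1) U' := by simp [U']
    have hU : U = insert a (insert (a + 1) U') := by
      rw [insert_erase (mem_erase.2 ⟨by omega, haU.2⟩), insert_erase haU.1]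
    have hPU' : ∀ s ∈ P, s ∈ U' ∧ s + 1 ∈ U' := fun s hs => by
      have hsU := hPU s (mem_insert_of_mem hs)
      have := hsep s hs
      exact ⟨mem_erase.2 ⟨by omega, mem_erase.2 ⟨by omega, hsU.1⟩⟩,
        mem_erase.2 ⟨by omega, mem_erase.2 ⟨by omega, hsU.2⟩⟩⟩
    have hcard : #U = #U' + 2 := by
      rw [hU, card_insert_of_notMem haU', card_insert_of_notMem ha1]
    rw [hcard, hU, sum_pow_card_hitting_insert_pair y haU' ha1 hsep,
      ih U' hPU' fun s hs hs1 => hP s (mem_insert_of_mem hs) (mem_insert_of_mem hs1),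
      card_insert_of_notMem ha, show #U' + 2 - 2 * (#P + 1) = #U' - 2 * #P by omega]
    ring

end HittingSum

section PeakSlots

variable {n : ℕ} {d : ℕ → Bool}

theorem pair_mem_range_of_mem_peakSlots {s : ℕ} (hs : s ∈ peakSlots n d) :
    s ∈ range (n - 1) ∧ s + 1 ∈ range (n - 1) := by
  have := mem_range.1 (mem_filter.1 hs).1
  exact ⟨mem_range.2 (by omega), mem_range.2 (by omega)⟩

theorem succ_notMem_peakSlots {s : ℕ} (hs : s ∈ peakSlots n d) : s + 1 ∉ peakSlots n d :=
  fun hs1 => by simp_all [peakSlots]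

theorem two_mul_card_peakSlots_le : 2 * #(peakSlots n d) ≤ n - 1 := by
  simpa using two_mul_card_le_of_pairs (fun _ => pair_mem_range_of_mem_peakSlots)
    fun _ => succ_notMem_peakSlots (d := d)

theorem sum_hittingSets_pow_card {R : Type*} [CommRing R] (y : R) :
    ∑ S ∈ hittingSets n d, y ^ #S =
      (y ^ 2 + 2 * y) ^ #(peakSlots n d) * (1 + y) ^ (n - 1 - 2 * #(peakSlots n d)) := by
  convert sum_pow_card_hitting_pairs y (peakSlots n d) (range (n - 1))
    (fun _ => pair_mem_range_of_mem_peakSlots) (fun _ => succ_notMem_peakSlots) using 3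
  · ext; simp [hittingSets]
  · rw [card_range]

end PeakSlots

section GeneratingFunction

open PowerSeries

variable {K : Type*} [Field K]

theorem one_sub_X_mul_inv : (1 - X : K⟦X⟧) * (1 - X)⁻¹ = 1 :=
  PowerSeries.mul_inv_cancel _ (by simp)

theorem inv_one_sub_X_pow (m : ℕ) : ((1 - X : K⟦X⟧) ^ m)⁻¹ = (1 - X)⁻¹ ^ m :=
  (PowerSeries.inv_eq_iff_mul_eq_one (by simp)).2 <| by
    rw [← mul_pow, mul_comm, one_sub_X_mul_inv, one_pow]

theorem mk_choose_eq (m : ℕ) :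
    (mk fun k => (k.choose m : K)) = X ^ m * (1 - X)⁻¹ ^ (m + 1) := by
  have hinv : (mk fun j => ((m + j).choose m : K)) = (1 - X)⁻¹ ^ (m + 1) := by
    calc _ = (mk fun j => ((m + j).choose m : K)) * ((1 - X) * (1 - X)⁻¹) ^ (m + 1) := by
          rw [one_sub_X_mul_inv, one_pow, mul_one]
      _ = (mk fun j => ((m + j).choose m : K)) * (1 - X) ^ (m + 1) * (1 - X)⁻¹ ^ (m + 1) := by
          rw [mul_pow, mul_assoc]
      _ = _ := by rw [mk_add_choose_mul_one_sub_pow_eq_one, one_mul]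
  ext k
  rw [← hinv, coeff_mk, coeff_X_pow_mul', coeff_mk]
  split_ifs with h
  · rw [Nat.add_sub_cancel' h]
  · rw [Nat.choose_eq_zero_of_lt (not_le.1 h), Nat.cast_zero]

theorem mk_sum_two_pow_mul_choose {ι : Type*} (T : Finset ι) (c : ι → ℕ) :
    mk (fun k => ((∑ i ∈ T, 2 ^ (c i + 1) * k.choose (c i + 1) : ℕ) : K)) =
      (1 - X)⁻¹ * (2 * X * (1 - X)⁻¹) * ∑ i ∈ T, (2 * X * (1 - X)⁻¹) ^ c i := by
  have hterm (m : ℕ) : (1 - X)⁻¹ * (2 * X * (1 - X)⁻¹) * (2 * X * (1 - X)⁻¹) ^ m =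
      C (2 ^ (m + 1) : K) * mk fun k => (k.choose (m + 1) : K) := by
    rw [mk_choose_eq, map_pow, map_ofNat]
    ring
  ext k
  simp only [mul_sum, hterm, map_sum, coeff_C_mul, coeff_mk, Nat.cast_sum, Nat.cast_mul,
    Nat.cast_pow, Nat.cast_ofNat]

/-- With `y = 2X / (1 - X)` one has `1 + y = (1 + X) / (1 - X)` and
`y ^ 2 + 2 * y = 4X / (1 - X) ^ 2`. -/
theorem two_mul_mk_sum_hittingSets {n : ℕ} (hn : 1 ≤ n) (d : ℕ → Bool) :
    (2 : K⟦X⟧) *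
        mk (fun k => ((∑ S ∈ hittingSets n d, 2 ^ (#S + 1) * k.choose (#S + 1) : ℕ) : K)) =
      (1 + X) ^ (n + 1) * ((1 - X) ^ (n + 1))⁻¹ *
        (4 * X * ((1 + X) ^ 2)⁻¹) ^ (#(peakSlots n d) + 1) := by
  have hp := two_mul_card_peakSlots_le (n := n) (d := d)
  have hu : X * (1 - X : K⟦X⟧)⁻¹ = (1 - X)⁻¹ - 1 := by
    linear_combination -(one_sub_X_mul_inv (K := K))
  have hw : (1 + X : K⟦X⟧) ^ 2 * ((1 + X) ^ 2)⁻¹ = 1 := PowerSeries.mul_inv_cancel _ (by simp)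
  rw [mk_sum_two_pow_mul_choose, sum_hittingSets_pow_card, inv_one_sub_X_pow]
  generalize (1 - X : K⟦X⟧)⁻¹ = u at hu ⊢
  generalize ((1 + X : K⟦X⟧) ^ 2)⁻¹ = w at hw ⊢
  generalize #(peakSlots n d) = p at hp ⊢
  obtain ⟨e, rfl⟩ : ∃ e, n = e + 2 * p + 1 := ⟨n - 1 - 2 * p, by omega⟩
  rw [show e + 2 * p + 1 - 1 - 2 * p = e by omega, show e + 2 * p + 1 + 1 = e + 2 * p + 2 by ring]
  calc _ = (1 + X) ^ e * u ^ (e + 2 * p + 2) * (4 * X) ^ (p + 1) := by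
        rw [show (2 * X * u) ^ 2 + 2 * (2 * X * u) = 4 * X * u ^ 2 by
            linear_combination 4 * X * u * hu,
          show 1 + 2 * X * u = (1 + X) * u by linear_combination hu, mul_pow (1 + X) u e]
        ring
    _ = (1 + X) ^ e * u ^ (e + 2 * p + 2) * (4 * X) ^ (p + 1) * ((1 + X) ^ 2 * w) ^ (p + 1) := by
        rw [hw, one_pow, mul_one]
    _ = _ := by
        generalize (1 + X : K⟦X⟧) = v
        ring

end GeneratingFunction

section Permutation

variable {n : ℕ}

def descentWord (π : Equiv.Perm (Fin n)) (s : ℕ) : Bool :=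
  if h : s + 1 < n then decide (π ⟨s + 1, h⟩ < π ⟨s, Nat.lt_of_succ_lt h⟩) else false

def partCode (a : ℤ) : ℕ := (ek a).toNat

def partDecode (x : ℕ) : ℤ := if x % 2 = 1 then ((x + 1) / 2 : ℕ) else -((x / 2 : ℕ) + 1)

theorem partDecode_partCode {a : ℤ} (ha : a ≠ 0) : partDecode (partCode a) = a := by
  unfold partDecode partCode ek
  split_ifs <;> omega

theorem partCode_partDecode (x : ℕ) : partCode (partDecode x) = x := by
  unfold partDecode partCode ek
  split_ifs <;> omega

theorem partDecode_ne_zero (x : ℕ) : partDecode x ≠ 0 := by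
  unfold partDecode
  split_ifs <;> omega

theorem abs_partDecode_le {k x : ℕ} (hx : x < 2 * k) : |partDecode x| ≤ k := by
  rw [abs_le]
  unfold partDecode
  split_ifs <;> omega

theorem partCode_lt {k : ℕ} {a : ℤ} (ha : a ≠ 0) (hak : |a| ≤ k) : partCode a < 2 * k := by
  have := abs_le.1 hak
  unfold partCode ek
  split_ifs <;> omega

theorem enriched_step_iff (c : Prop) [Decidable c] {a b : ℤ} (ha : a ≠ 0) (hb : b ≠ 0) :
    (if c then ek a < ek b ∨ (a = b ∧ b < 0) else ek a < ek b ∨ (a = b ∧ 0 < b)) ↔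
      partCode a < partCode b ∨
        (partCode a = partCode b ∧ partCode a % 2 = if c then 0 else 1) := by
  unfold partCode ek
  split_ifs <;> omega

theorem enrichedCount_eq_card_admissible (π : Equiv.Perm (Fin n)) (k : ℕ) :
    enrichedCount π k =
      Nat.card {e : Fin n → Fin (2 * k) // IsAdmissible n (descentWord π) (natSeq e)} := by
  have hd (s : ℕ) (hs : s + 1 < n) :
      descentWord π s = decide (π ⟨s + 1, hs⟩ < π ⟨s, Nat.lt_of_succ_lt hs⟩) :=
    dif_pos hs
  refine Nat.card_congr
    { toFun a := ⟨fun i => ⟨partCode (a.1 i), partCode_lt (a.2.1 i).1 (a.2.1 i).2⟩,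
        fun s hs => by
          rw [natSeq_of_lt _ (Nat.lt_of_succ_lt hs), natSeq_of_lt _ hs, hd s hs]
          simp only [decide_eq_true_eq]
          exact (enriched_step_iff _ (a.2.1 _).1 (a.2.1 _).1).1 (a.2.2 s hs)⟩
      invFun e := ⟨fun i => partDecode (e.1 i),
        fun i => ⟨partDecode_ne_zero _, abs_partDecode_le (e.1 i).isLt⟩, fun s hs => by
          have := e.2 s hs
          rw [natSeq_of_lt _ (Nat.lt_of_succ_lt hs), natSeq_of_lt _ hs, hd s hs] at this
          simp only [decide_eq_true_eq] at this
          rw [enriched_step_iff _ (partDecode_ne_zero _) (partDecode_ne_zero _),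
            partCode_partDecode, partCode_partDecode]
          exact this⟩
      left_inv a := Subtype.ext (funext fun i => partDecode_partCode (a.2.1 i).1)
      right_inv e := Subtype.ext (funext fun i => Fin.ext (partCode_partDecode _)) }

theorem pval_succ (π : Equiv.Perm (Fin n)) {s : ℕ} (hs : s < n) :
    pval π (s + 1) = π ⟨s, hs⟩ + 1 := by
  rw [pval, dif_pos ⟨by omega, by omega⟩]
  rfl

theorem descentWord_eq_true_iff (π : Equiv.Perm (Fin n)) {s : ℕ} (hs : s + 1 < n) :
    descentWord π s = true ↔ pval π (s + 2) < pval π (s + 1) := by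
  rw [descentWord, dif_pos hs, decide_eq_true_iff, pval_succ π hs, pval_succ π (by omega),
    Fin.lt_def]
  omega

theorem descentWord_eq_false_iff (π : Equiv.Perm (Fin n)) {s : ℕ} (hs : s + 1 < n) :
    descentWord π s = false ↔ pval π (s + 1) < pval π (s + 2) := by
  have hne : (π ⟨s, by omega⟩ : ℕ) ≠ π ⟨s + 1, hs⟩ := fun h =>
    absurd (Fin.mk.inj_iff.1 (π.injective (Fin.ext h))) (by omega)
  rw [← Bool.not_eq_true, descentWord_eq_true_iff π hs, pval_succ π hs, pval_succ π (by omega)]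
  omega

theorem add_two_mem_intPk_iff (π : Equiv.Perm (Fin n)) {s : ℕ} (hs : s + 2 < n) :
    s + 2 ∈ intPk π ↔ s ∈ peakSlots n (descentWord π) := by
  rw [intPk, mem_filter, mem_Ioo, isPk, peakSlots, mem_filter, mem_range,
    descentWord_eq_false_iff π (by omega), descentWord_eq_true_iff π (by omega)]
  simp only [show s + 2 - 1 = s + 1 by omega, show s + 1 + 2 = s + 2 + 1 by omega,
    show s + 1 + 1 = s + 2 by omega]
  omega

theorem card_intPk (π : Equiv.Perm (Fin n)) : #(intPk π) = #(peakSlots n (descentWord π)) := by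
  have hIoo {i : ℕ} (hi : i ∈ intPk π) : 1 < i ∧ i < n := mem_Ioo.1 (mem_filter.1 hi).1
  have hrange {s : ℕ} (hs : s ∈ peakSlots n (descentWord π)) : s + 2 < n := by
    have := mem_range.1 (mem_filter.1 hs).1
    omega
  refine card_nbij' (· - 2) (· + 2) (fun i hi => ?_) (fun s hs => ?_) (fun i hi => ?_)
    fun s _ => by simp
  · have := hIoo hi
    simp only [mem_coe]
    rwa [← add_two_mem_intPk_iff π (by omega), Nat.sub_add_cancel this.1]
  · exact (add_two_mem_intPk_iff π (hrange hs)).2 hs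
  · have := hIoo hi
    simp only
    omega

open PowerSeries in
theorem two_mul_mk_enrichedCount (hn : 1 ≤ n) (π : Equiv.Perm (Fin n)) :
    (2 : ℚ⟦X⟧) * mk (fun k => (enrichedCount π k : ℚ)) =
      (1 + X) ^ (n + 1) * ((1 - X) ^ (n + 1))⁻¹ * (4 * X * ((1 + X) ^ 2)⁻¹) ^ (#(intPk π) + 1) := by
  simp_rw [enrichedCount_eq_card_admissible, card_admissible hn, card_intPk]
  exact two_mul_mk_sum_hittingSets hn _

end Permutation

end EnrichedPartition

open PowerSeries in
theorem stmt9 (n : ℕ) (hn : 1 ≤ n) (π : Equiv.Perm (Fin n)) :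
    ((2 : PowerSeries ℚ) * PowerSeries.mk (fun k => (enrichedCount π k : ℚ)) =
      (1 + X) ^ (n + 1) * ((1 - X) ^ (n + 1))⁻¹ *
        (4 * X * (((1 + X) ^ 2)⁻¹)) ^ ((intPk π).card + 1)) ∧
    ∀ π' : Equiv.Perm (Fin n), (intPk π').card = (intPk π).card →
      ∀ k, enrichedCount π' k = enrichedCount π k := by
  refine ⟨EnrichedPartition.two_mul_mk_enrichedCount hn π, fun π' hpk k => ?_⟩
  have h := EnrichedPartition.two_mul_mk_enrichedCount hn π'
  rw [hpk, ← EnrichedPartition.two_mul_mk_enrichedCount hn π] at h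
  have h2 : (2 : PowerSeries ℚ) ≠ 0 := by
    rw [← map_ofNat (C (R := ℚ)) 2]
    simp
  simpa using congrArg (coeff k) (mul_left_cancel₀ h2 h)
end
end

section
/- The generating function Σ_{k ≥ 0} Ω^{(ℓ)}(π; k) t^k for the left enriched order polynomial of a permutation π of [n] equals ((1+t)^n/(1-t)^{n+1})·(4t/(1+t)^2)^{lpe(π)}. In particular, Ω^{(ℓ)}(π; k) depends only on the number of left peaks of π. -/
open scoped Classical

noncomputable section

/-!
Rank the entries of a left enriched `π`-partition in the order `0 < -1 < 1 < -2 < 2 < ⋯`, so that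
negative entries get odd ranks. The ranks form a weakly increasing chain of naturals in which a
value may repeat across a descent of `π` iff it is odd and across an ascent iff it is even, and
`Ω^{(ℓ)}(π; k)` counts those chains whose last rank is at most `2k`.

Split the chains by the parity of their last rank, with generating functions `E` and `O`. Appending
an entry acts linearly on `(E, O)`, and leaves `E = O` after an ascent and `E = X O` after a
descent. With this shape, the generating function of `Ω^{(ℓ)}` gets multiplied by
`(1 + X)/(1 - X)` at each step, except at the first descent of a run of descents (a left peak),
where the factor is `4X/((1 - X)(1 + X))`.
-/

def leftRank (a : ℤ) : ℕ := (el a).toNat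

lemma leftRank_cast (a : ℤ) : (leftRank a : ℤ) = el a := by
  unfold leftRank el; split_ifs <;> omega

def leftRankEquiv : ℤ ≃ ℕ where
  toFun := leftRank
  invFun v := if v % 2 = 0 then ((v / 2 : ℕ) : ℤ) else -((v + 1) / 2 : ℕ)
  left_inv a := by
    have := leftRank_cast a
    unfold el at this
    dsimp only
    split_ifs at this ⊢ <;> omega
  right_inv v := by
    dsimp only
    split_ifs with h
    · have := leftRank_cast (v / 2 : ℕ)
      unfold el at this
      split_ifs at this <;> omega
    · have := leftRank_cast (-((v + 1) / 2 : ℕ))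
      unfold el at this
      split_ifs at this <;> omega

lemma odd_leftRank_iff (a : ℤ) : Odd (leftRank a) ↔ a < 0 := by
  have := leftRank_cast a
  unfold el at this
  rw [Nat.odd_iff]
  split_ifs at this <;> omega

lemma leftRank_le_iff (a : ℤ) (k : ℕ) : leftRank a ≤ 2 * k ↔ |a| ≤ k := by
  have := leftRank_cast a
  unfold el at this
  rw [abs_le]
  split_ifs at this <;> omega

def ChainStep (d : Prop) (v' v : ℕ) : Prop := v' < v ∨ v' = v ∧ (d ↔ Odd v)

lemma ChainStep.le {d : Prop} {v' v : ℕ} (h : ChainStep d v' v) : v' ≤ v := by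
  rcases h with h | ⟨rfl, -⟩ <;> omega

lemma chainStep_iff_mem_range {d : Prop} {v' v : ℕ} :
    ChainStep d v' v ↔ v' ∈ Finset.range (if (d ↔ Odd v) then v + 1 else v) := by
  unfold ChainStep
  split_ifs with h
  · simp only [h, and_true, Finset.mem_range]
    omega
  · simp only [h, and_false, or_false, Finset.mem_range]

lemma leftStep_iff_chainStep {d d' : Prop} [Decidable d] (hd : d ↔ d') (p q : ℤ) :
    (if d then el p < el q ∨ (p = q ∧ q < 0) else el p < el q ∨ (p = q ∧ 0 ≤ q)) ↔
      ChainStep d' (leftRank p) (leftRank q) := by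
  have hlt : el p < el q ↔ leftRank p < leftRank q := by
    rw [← leftRank_cast, ← leftRank_cast, Nat.cast_lt]
  have heq : p = q ↔ leftRank p = leftRank q := leftRankEquiv.injective.eq_iff.symm
  rw [ChainStep, ← hd, hlt, heq, odd_leftRank_iff]
  split_ifs with h <;> simp [h]

section Chains

variable (D : ℕ → Prop)

def IsWordChain {m : ℕ} (b : Fin (m + 1) → ℕ) : Prop :=
  ∀ i : Fin m, ChainStep (D i) (b i.castSucc) (b i.succ)

variable {D}

lemma IsWordChain.monotone {m : ℕ} {b : Fin (m + 1) → ℕ} (h : IsWordChain D b) : Monotone b :=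
  Fin.monotone_iff_le_succ.2 fun i => (h i).le

lemma isWordChain_snoc_iff {m : ℕ} {c : Fin (m + 1) → ℕ} {v : ℕ} :
    IsWordChain D (Fin.snoc c v : Fin (m + 2) → ℕ) ↔
      IsWordChain D c ∧ ChainStep (D m) (c (Fin.last m)) v := by
  unfold IsWordChain
  rw [Fin.forall_fin_succ']
  simp only [Fin.succ_castSucc, Fin.snoc_castSucc, Fin.succ_last, Fin.snoc_last, Fin.val_castSucc,
    Fin.val_last]

variable (D)

def wordChainCount (m v : ℕ) : ℕ :=
  Nat.card {b : Fin (m + 1) → ℕ // IsWordChain D b ∧ b (Fin.last m) = v}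

instance (m v : ℕ) : Finite {b : Fin (m + 1) → ℕ // IsWordChain D b ∧ b (Fin.last m) = v} :=
  Finite.of_injective
    (fun b i => (⟨b.1 i, by have := b.2.1.monotone (Fin.le_last i); omega⟩ : Fin (v + 1)))
    fun b c h => Subtype.ext <| funext fun i => congrArg Fin.val (congrFun h i)

lemma natCard_subtype_mem_eq_sum {α : Type*} (P : α → Prop) (f : α → ℕ) (s : Finset ℕ)
    [∀ v, Finite {x // P x ∧ f x = v}] :
    Nat.card {x // P x ∧ f x ∈ s} = ∑ v ∈ s, Nat.card {x // P x ∧ f x = v} := by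
  let e : {x // P x ∧ f x ∈ s} ≃ Σ v : s, {x // P x ∧ f x = v} :=
    { toFun x := ⟨⟨f x, x.2.2⟩, x.1, x.2.1, rfl⟩
      invFun y := ⟨y.2.1, y.2.2.1, by rw [y.2.2.2]; exact y.1.2⟩
      left_inv _ := rfl
      right_inv := by
        rintro ⟨⟨v, hv⟩, x, hx, hxv⟩
        simp only at hxv
        subst hxv
        rfl }
  rw [Nat.card_congr e, Nat.card_sigma,
    Finset.sum_coe_sort s fun v => Nat.card {x // P x ∧ f x = v}]

lemma wordChainCount_zero (v : ℕ) : wordChainCount D 0 v = 1 := by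
  refine Nat.card_eq_one_iff_exists.2 ⟨⟨fun _ => v, finZeroElim, rfl⟩, ?_⟩
  rintro ⟨b, -, hb⟩
  ext i
  rw [Fin.fin_one_eq_zero i]
  exact hb

def snocChainEquiv (m v : ℕ) :
    {b : Fin (m + 2) → ℕ // IsWordChain D b ∧ b (Fin.last (m + 1)) = v} ≃
      {c : Fin (m + 1) → ℕ // IsWordChain D c ∧ ChainStep (D m) (c (Fin.last m)) v} where
  toFun b := ⟨Fin.init b.1, by
    obtain ⟨b, hb, rfl⟩ := b
    exact isWordChain_snoc_iff.1 (by rwa [Fin.snoc_init_self])⟩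
  invFun c := ⟨Fin.snoc c.1 v, isWordChain_snoc_iff.2 c.2, Fin.snoc_last _ _⟩
  left_inv b := by
    obtain ⟨b, hb, rfl⟩ := b
    exact Subtype.ext (Fin.snoc_init_self b)
  right_inv c := Subtype.ext (Fin.init_snoc (α := fun _ => ℕ) v c.1)

lemma wordChainCount_succ (m v : ℕ) :
    wordChainCount D (m + 1) v =
      ∑ v' ∈ Finset.range (if (D m ↔ Odd v) then v + 1 else v), wordChainCount D m v' := by
  rw [wordChainCount, Nat.card_congr (snocChainEquiv D m v)]
  simp only [chainStep_iff_mem_range]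
  exact natCard_subtype_mem_eq_sum (IsWordChain D) (fun c => c (Fin.last m)) _

end Chains

section Series

open PowerSeries

lemma mk_sum_range_succ {R : Type*} [Semiring R] (f : ℕ → R) :
    mk (fun u => ∑ i ∈ Finset.range (u + 1), f i) = mk f * mk 1 := by
  ext u
  simp [coeff_mul, Finset.Nat.sum_antidiagonal_eq_sum_range_succ_mk]

lemma sum_range_two_mul {M : Type*} [AddCommMonoid M] (g : ℕ → M) (u : ℕ) :
    ∑ v ∈ Finset.range (2 * u), g v =
      ∑ i ∈ Finset.range u, (g (2 * i) + g (2 * i + 1)) := by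
  induction u with
  | zero => simp
  | succ u ih =>
    rw [mul_add, mul_one, Finset.sum_range_succ, Finset.sum_range_succ, Finset.sum_range_succ, ih,
      add_assoc]

variable (D : ℕ → Prop)

def evenSeries (m : ℕ) : ℚ⟦X⟧ := mk fun u => (wordChainCount D m (2 * u) : ℚ)

def oddSeries (m : ℕ) : ℚ⟦X⟧ := mk fun u => (wordChainCount D m (2 * u + 1) : ℚ)

def pairSeries (m : ℕ) : ℚ⟦X⟧ :=
  mk fun u => ∑ v ∈ Finset.range (2 * u + 2), (wordChainCount D m v : ℚ)

def chainSeries (m : ℕ) : ℚ⟦X⟧ :=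
  mk fun u => ∑ v ∈ Finset.range (2 * u + 1), (wordChainCount D m v : ℚ)

lemma evenSeries_zero : evenSeries D 0 = mk 1 := by
  ext u; simp [evenSeries, wordChainCount_zero]

lemma oddSeries_zero : oddSeries D 0 = mk 1 := by
  ext u; simp [oddSeries, wordChainCount_zero]

lemma pairSeries_eq (m : ℕ) : pairSeries D m = (evenSeries D m + oddSeries D m) * mk 1 := by
  have : evenSeries D m + oddSeries D m =
      mk fun i => (wordChainCount D m (2 * i) + wordChainCount D m (2 * i + 1) : ℚ) := by
    ext; simp [evenSeries, oddSeries]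
  rw [this, ← mk_sum_range_succ]
  ext u
  rw [pairSeries, coeff_mk, coeff_mk, show 2 * u + 2 = 2 * (u + 1) by ring, sum_range_two_mul]

lemma chainSeries_eq (m : ℕ) : chainSeries D m = evenSeries D m + X * pairSeries D m := by
  ext u
  rcases u with _ | u
  · simp [chainSeries, evenSeries]
  · rw [map_add, coeff_succ_X_mul, chainSeries, evenSeries, pairSeries, coeff_mk, coeff_mk,
      coeff_mk, Finset.sum_range_succ, add_comm]
    ring_nf

variable {D}

lemma evenSeries_succ_of_not_descent {m : ℕ} (hD : ¬D m) :
    evenSeries D (m + 1) = chainSeries D m := by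
  ext u; simp [evenSeries, chainSeries, wordChainCount_succ, hD]

lemma oddSeries_succ_of_not_descent {m : ℕ} (hD : ¬D m) :
    oddSeries D (m + 1) = chainSeries D m := by
  ext u; simp [oddSeries, chainSeries, wordChainCount_succ, hD]

lemma oddSeries_succ_of_descent {m : ℕ} (hD : D m) : oddSeries D (m + 1) = pairSeries D m := by
  ext u; simp [oddSeries, pairSeries, wordChainCount_succ, hD]

lemma evenSeries_succ_of_descent {m : ℕ} (hD : D m) :
    evenSeries D (m + 1) = X * pairSeries D m := by
  ext u
  rcases u with _ | u
  · simp [evenSeries, wordChainCount_succ, hD]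
  · rw [coeff_succ_X_mul]
    simp [evenSeries, pairSeries, wordChainCount_succ, hD, mul_add, Nat.odd_iff]

end Series

section ClosedForm

open PowerSeries

def IsRunStart (D : ℕ → Prop) : ℕ → Prop
  | 0 => D 0
  | j + 1 => ¬D j ∧ D (j + 1)

variable {D : ℕ → Prop}

lemma IsRunStart.descent {m : ℕ} (h : IsRunStart D m) : D m := by
  cases m with
  | zero => exact h
  | succ j => exact h.2

lemma chainSeries_succ_of_not_descent {m : ℕ} (hD : ¬D m) :
    chainSeries D (m + 1) = mk 1 * (1 + X) * chainSeries D m := by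
  rw [chainSeries_eq D (m + 1), pairSeries_eq, evenSeries_succ_of_not_descent hD,
    oddSeries_succ_of_not_descent hD]
  linear_combination (-chainSeries D m) * mk_one_mul_one_sub_eq_one ℚ

lemma chainSeries_succ_of_runStart {m : ℕ} (h : IsRunStart D m) :
    (1 + X) * chainSeries D (m + 1) = 4 * mk 1 * X * chainSeries D m := by
  have hshape : evenSeries D m = oddSeries D m := by
    cases m with
    | zero => rw [evenSeries_zero, oddSeries_zero]
    | succ j => rw [evenSeries_succ_of_not_descent h.1, oddSeries_succ_of_not_descent h.1]
  rw [chainSeries_eq D (m + 1), pairSeries_eq D (m + 1), evenSeries_succ_of_descent h.descent,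
    oddSeries_succ_of_descent h.descent, chainSeries_eq D m, pairSeries_eq D m, hshape]
  linear_combination 2 * mk 1 * oddSeries D m * X * (1 - X) * mk_one_mul_one_sub_eq_one ℚ

lemma chainSeries_succ_of_not_runStart {m : ℕ} (h : ¬IsRunStart D m) :
    chainSeries D (m + 1) = mk 1 * (1 + X) * chainSeries D m := by
  by_cases hD : D m
  · obtain ⟨j, rfl⟩ : ∃ j, m = j + 1 :=
      Nat.exists_eq_succ_of_ne_zero (by rintro rfl; exact h hD)
    have hDj : D j := by_contra fun hj => h ⟨hj, hD⟩
    rw [chainSeries_eq D (j + 2), pairSeries_eq D (j + 2), evenSeries_succ_of_descent hD,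
      oddSeries_succ_of_descent hD, chainSeries_eq D (j + 1), pairSeries_eq D (j + 1),
      evenSeries_succ_of_descent hDj, oddSeries_succ_of_descent hDj]
    ring
  · exact chainSeries_succ_of_not_descent hD

variable (D)

def runCount (m : ℕ) : ℕ := ((Finset.range m).filter (IsRunStart D)).card

lemma runCount_succ (m : ℕ) :
    runCount D (m + 1) = runCount D m + if IsRunStart D m then 1 else 0 := by
  simp only [runCount, Finset.card_filter, Finset.sum_range_succ]

lemma one_add_X_pow_mul_chainSeries (m : ℕ) :
    (1 + X) ^ (2 * runCount D m) * chainSeries D m =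
      mk 1 ^ (m + 2) * (1 + X) ^ (m + 1) * (4 * X) ^ runCount D m := by
  induction m with
  | zero =>
    rw [chainSeries_eq, pairSeries_eq, evenSeries_zero, oddSeries_zero]
    simp only [runCount, Finset.range_zero, Finset.filter_empty, Finset.card_empty]
    linear_combination (-mk 1) * mk_one_mul_one_sub_eq_one ℚ
  | succ m ih =>
    rw [runCount_succ]
    by_cases h : IsRunStart D m
    · rw [if_pos h]
      linear_combination (1 + X) ^ (2 * runCount D m + 1) * chainSeries_succ_of_runStart h +
        4 * mk 1 * X * (1 + X) * ih
    · rw [if_neg h, add_zero, chainSeries_succ_of_not_runStart h]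
      linear_combination mk 1 * (1 + X) * ih

lemma eq_of_one_add_X_pow_mul_eq {G : ℚ⟦X⟧} {n p : ℕ}
    (h : (1 + X) ^ (2 * p) * G = mk 1 ^ (n + 1) * (1 + X) ^ n * (4 * X) ^ p) :
    G = (1 + X) ^ n * ((1 - X) ^ (n + 1))⁻¹ * (4 * X * ((1 + X) ^ 2)⁻¹) ^ p := by
  have hinv : ((1 - X : ℚ⟦X⟧) ^ (n + 1))⁻¹ = mk 1 ^ (n + 1) := by
    rw [PowerSeries.inv_eq_iff_mul_eq_one (by simp), ← mul_pow, mk_one_mul_one_sub_eq_one,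
      one_pow]
  have hsq : ((1 + X : ℚ⟦X⟧) ^ 2) * ((1 + X) ^ 2)⁻¹ = 1 :=
    PowerSeries.mul_inv_cancel _ (by simp)
  have hne : (1 + X : ℚ⟦X⟧) ≠ 0 := fun h0 => by simpa using congrArg constantCoeff h0
  refine mul_left_cancel₀ (pow_ne_zero (2 * p) hne) ?_
  rw [h, hinv]
  generalize ((1 + X : ℚ⟦X⟧) ^ 2)⁻¹ = J at hsq ⊢
  calc (mk 1 ^ (n + 1) * (1 + X) ^ n * (4 * X) ^ p : ℚ⟦X⟧)
      = mk 1 ^ (n + 1) * (1 + X) ^ n * (4 * X) ^ p * ((1 + X) ^ 2 * J) ^ p := by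
        rw [hsq, one_pow, mul_one]
    _ = _ := by rw [mul_pow ((1 + X) ^ 2) J p, ← pow_mul]; ring

end ClosedForm

section Permutations

open PowerSeries

/-- Position `s + 1` of `π` is a descent: this is the condition between the entries with 0-based
indices `s` and `s + 1` of a `π`-partition. -/
def descentWord {n : ℕ} (π : Equiv.Perm (Fin n)) (s : ℕ) : Prop :=
  pval π (s + 2) < pval π (s + 1)

lemma pval_zero {n : ℕ} (π : Equiv.Perm (Fin n)) : pval π 0 = 0 := by
  simp [pval]

lemma pval_succ {n : ℕ} (π : Equiv.Perm (Fin n)) {s : ℕ} (hs : s < n) :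
    pval π (s + 1) = π ⟨s, hs⟩ + 1 := by
  simp [pval, hs]

lemma lt_iff_descentWord {n : ℕ} (π : Equiv.Perm (Fin n)) {s : ℕ} (hs : s + 1 < n) :
    π ⟨s + 1, hs⟩ < π ⟨s, Nat.lt_of_succ_lt hs⟩ ↔ descentWord π s := by
  rw [descentWord, pval_succ π hs, pval_succ π (Nat.lt_of_succ_lt hs), Fin.lt_def]
  omega

lemma leftEnrichedCount_eq_natCard {m : ℕ} (π : Equiv.Perm (Fin (m + 1))) (k : ℕ) :
    leftEnrichedCount π k = Nat.card {b : Fin (m + 1) → ℕ //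
      IsWordChain (descentWord π) b ∧ b (Fin.last m) ∈ Finset.range (2 * k + 1)} := by
  refine Nat.card_congr (Equiv.subtypeEquiv (Equiv.piCongrRight fun _ => leftRankEquiv) fun a => ?_)
  change _ ↔ IsWordChain (descentWord π) (fun i => leftRank (a i)) ∧
    leftRank (a (Fin.last m)) ∈ _
  rw [Finset.mem_range, Nat.lt_succ_iff, leftRank_le_iff]
  constructor
  · rintro ⟨hbound, hsteps⟩
    exact ⟨fun i => (leftStep_iff_chainStep (lt_iff_descentWord π (by omega)) _ _).1
      (hsteps i (by omega)), hbound _⟩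
  · rintro ⟨hchain, hlast⟩
    refine ⟨fun s => ?_, fun s hs =>
      (leftStep_iff_chainStep (lt_iff_descentWord π hs) _ _).2 (hchain ⟨s, by omega⟩)⟩
    rw [← leftRank_le_iff] at hlast ⊢
    exact (hchain.monotone (Fin.le_last s)).trans hlast

lemma mk_leftEnrichedCount {m : ℕ} (π : Equiv.Perm (Fin (m + 1))) :
    mk (fun k => (leftEnrichedCount π k : ℚ)) = chainSeries (descentWord π) m := by
  ext k
  rw [chainSeries, coeff_mk, coeff_mk, leftEnrichedCount_eq_natCard,
    natCard_subtype_mem_eq_sum (IsWordChain (descentWord π)) (fun b => b (Fin.last m))]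
  push_cast
  rfl

lemma isPk_succ_iff {m : ℕ} (π : Equiv.Perm (Fin (m + 1))) {j : ℕ} (hj : j < m) :
    isPk π (j + 1) ↔ IsRunStart (descentWord π) j := by
  rw [isPk, Nat.add_sub_cancel]
  cases j with
  | zero => simp [IsRunStart, descentWord, pval_zero, pval_succ π (Nat.zero_lt_succ m)]
  | succ t =>
    have hne : pval π (t + 1) ≠ pval π (t + 2) := by
      rw [pval_succ π (by omega), pval_succ π (by omega), Ne, add_left_inj, Fin.val_inj,
        π.injective.eq_iff, Fin.mk.injEq]
      omega
    simp only [IsRunStart, descentWord, add_assoc, Nat.reduceAdd] at hne ⊢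
    omega

lemma leftPk_eq_map {m : ℕ} (π : Equiv.Perm (Fin (m + 1))) :
    leftPk π =
      ((Finset.range m).filter (IsRunStart (descentWord π))).map (addRightEmbedding 1) := by
  ext i
  rcases i with _ | j
  · simp [leftPk]
  · simp only [leftPk, Finset.mem_filter, Finset.mem_Ico, Finset.mem_map, Finset.mem_range,
      addRightEmbedding_apply, Nat.add_right_cancel_iff, exists_eq_right]
    constructor
    · rintro ⟨⟨-, hj⟩, hpk⟩
      exact ⟨by omega, (isPk_succ_iff π (by omega)).1 hpk⟩
    · rintro ⟨hj, hrun⟩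
      exact ⟨⟨by omega, by omega⟩, (isPk_succ_iff π hj).2 hrun⟩

lemma card_leftPk {m : ℕ} (π : Equiv.Perm (Fin (m + 1))) :
    (leftPk π).card = runCount (descentWord π) m := by
  rw [leftPk_eq_map, Finset.card_map, runCount]

lemma leftEnrichedCount_fin_zero (π : Equiv.Perm (Fin 0)) (k : ℕ) : leftEnrichedCount π k = 1 :=
  Nat.card_eq_one_iff_exists.2
    ⟨⟨finZeroElim, finZeroElim, fun _ hs => absurd hs (Nat.not_lt_zero _)⟩,
      fun _ => Subtype.ext (funext finZeroElim)⟩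

end Permutations

open PowerSeries in
theorem stmt10 (n : ℕ) (π : Equiv.Perm (Fin n)) :
    (PowerSeries.mk (fun k => (leftEnrichedCount π k : ℚ)) =
      (1 + X) ^ n * ((1 - X) ^ (n + 1))⁻¹ *
        (4 * X * (((1 + X) ^ 2)⁻¹)) ^ (leftPk π).card) ∧
    ∀ π' : Equiv.Perm (Fin n), (leftPk π').card = (leftPk π).card →
      ∀ k, leftEnrichedCount π' k = leftEnrichedCount π k := by
  have key : ∀ σ : Equiv.Perm (Fin n), mk (fun k => (leftEnrichedCount σ k : ℚ)) =
      (1 + X) ^ n * ((1 - X) ^ (n + 1))⁻¹ * (4 * X * ((1 + X) ^ 2)⁻¹) ^ (leftPk σ).card := by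
    intro σ
    apply eq_of_one_add_X_pow_mul_eq
    cases n with
    | zero => simp [leftPk, leftEnrichedCount_fin_zero]; rfl
    | succ m => rw [mk_leftEnrichedCount, card_leftPk]; exact one_add_X_pow_mul_chainSeries _ m
  refine ⟨key π, fun π' hcard k => ?_⟩
  have hseries := key π'
  rw [hcard, ← key π] at hseries
  simpa using congrArg (coeff k) hseries
end
end

section
/- The enriched order polynomial satisfies the reciprocity Ω'(π; -x) = (-1)^n Ω'(π; x), and the left enriched order polynomial satisfies Ω^{(ℓ)}(π; -x - 1/2) = (-1)^n Ω^{(ℓ)}(π; x - 1/2), for any permutation π of [n]. -/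
open scoped Classical

noncomputable section

/-!
Splitting a (left) enriched `π`-partition `a` into its sign vector `ε` and its absolute values
`m = |a|` turns it into a chain `m₀, …, m_{n-1}` of naturals with lower bounds `δᵢ ∈ {0, 1}` and
steps `m_{i-1} + ιᵢ ≤ mᵢ`, `ιᵢ ∈ {0, 1}`, where `δ` and `ι` depend only on `π` and `ε`. The number
of such chains with entries below `v` is a polynomial `H_{δ,ι}(v)`, obtained by iterated discrete
integration, and it satisfies the chain reciprocity `H_{δ,ι}(1 - x) = (-1)ⁿ H_{1-δ,1-ι}(x)`, by
induction on `n` from the difference equation and the vanishing at `δ_{n-1}`. Flipping all signs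
complements `ι`, and complements `δ` in the left enriched case (in the enriched case `δ ≡ 1` and a
shift by one restores it). Summing over `ε`, `Ω'(π; x) = G(x + 1)` with `G(2 - x) = (-1)ⁿ G(x)`
and `Ω^{(ℓ)}(π; x) = G^ℓ(x + 1)` with `G^ℓ(1 - x) = (-1)ⁿ G^ℓ(x)`.
-/

open Polynomial

namespace Polynomial

theorem eq_of_eval_add_natCast_eq {R : Type*} [CommRing R] [IsDomain R] [CharZero R]
    {p q : R[X]} (c : R) (h : ∀ k : ℕ, p.eval (c + k) = q.eval (c + k)) : p = q :=
  eq_of_infinite_eval_eq p q <|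
    Set.infinite_of_injective_forall_mem (fun _ _ hkl => by simpa using hkl) h

theorem eq_of_eval_add_one_sub_eval_eq {R : Type*} [CommRing R] [IsDomain R] [CharZero R]
    {p q : R[X]} (c : R) (hΔ : ∀ x, p.eval (x + 1) - p.eval x = q.eval (x + 1) - q.eval x)
    (hc : p.eval c = q.eval c) : p = q := by
  refine eq_of_eval_add_natCast_eq c fun k => ?_
  induction k with
  | zero => simpa using hc
  | succ k ih =>
    have := hΔ (c + k)
    rw [Nat.cast_succ, ← add_assoc]
    linear_combination this + ih

theorem eval_eq_eval_add_one_of_eval_natCast {R : Type*} [CommRing R] [IsDomain R] [CharZero R]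
    {p q : R[X]} {f : ℕ → R} (hp : ∀ k : ℕ, 0 < k → p.eval (k : R) = f k)
    (hq : ∀ k : ℕ, q.eval ((k : R) + 1) = f k) (x : R) : p.eval x = q.eval (x + 1) := by
  suffices h : p = q.comp (X + 1) by simp [h]
  refine eq_of_eval_add_natCast_eq 1 fun k => ?_
  rw [add_comm, ← Nat.cast_succ, hp _ k.succ_pos, eval_comp, eval_add, eval_X, eval_one, hq]

/-- The discrete antiderivative, built from the Bernoulli polynomials,
which satisfy `B_{j+1}(x + 1) - B_{j+1}(x) = (j + 1) x ^ j`. -/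
def antidiff (p : ℚ[X]) : ℚ[X] :=
  p.sum fun j a => C (a / (j + 1)) * bernoulli (j + 1)

theorem eval_antidiff_add_one_sub (p : ℚ[X]) (x : ℚ) :
    (antidiff p).eval (x + 1) - (antidiff p).eval x = p.eval x := by
  rw [antidiff, eval_sum, eval_sum, eval_eq_sum, Polynomial.sum_def, Polynomial.sum_def,
    Polynomial.sum_def, ← Finset.sum_sub_distrib]
  refine Finset.sum_congr rfl fun j _ => ?_
  rw [eval_mul, eval_mul, eval_C, eval_C, ← mul_sub, add_comm x 1, bernoulli_eval_one_add,
    add_sub_cancel_left, Nat.add_sub_cancel]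
  push_cast
  field_simp

end Polynomial

/-- `chainPoly n δ ι` interpolates the number of chains `m : Fin n → ℕ` with `δ i ≤ m i`,
`m (i - 1) + ι i ≤ m i` and all entries below the argument; see `chainPoly_eval_natCast`. -/
def chainPoly : (n : ℕ) → (Fin n → ℚ) → (Fin n → ℚ) → ℚ[X]
  | 0, _, _ => 1
  | n + 1, δ, ι =>
    let A := antidiff ((chainPoly n (Fin.init δ) (Fin.init ι)).comp (X + C (1 - ι (Fin.last n))))
    A - C (A.eval (δ (Fin.last n)))

section chainPoly

variable {n : ℕ}

theorem chainPoly_succ_eval_add_one_sub (δ ι : Fin (n + 1) → ℚ) (x : ℚ) :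
    (chainPoly (n + 1) δ ι).eval (x + 1) - (chainPoly (n + 1) δ ι).eval x =
      (chainPoly n (Fin.init δ) (Fin.init ι)).eval (x + 1 - ι (Fin.last n)) := by
  simp only [chainPoly, eval_sub, eval_C, sub_sub_sub_cancel_right, eval_antidiff_add_one_sub,
    eval_comp, eval_add, eval_X]
  ring_nf

theorem chainPoly_succ_eval_last (δ ι : Fin (n + 1) → ℚ) :
    (chainPoly (n + 1) δ ι).eval (δ (Fin.last n)) = 0 := by
  simp [chainPoly]

theorem eq_chainPoly_succ {δ ι : Fin (n + 1) → ℚ} {p : ℚ[X]}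
    (hΔ : ∀ x, p.eval (x + 1) - p.eval x =
      (chainPoly n (Fin.init δ) (Fin.init ι)).eval (x + 1 - ι (Fin.last n)))
    (hlast : p.eval (δ (Fin.last n)) = 0) : p = chainPoly (n + 1) δ ι :=
  eq_of_eval_add_one_sub_eval_eq (δ (Fin.last n))
    (fun x => by rw [hΔ, chainPoly_succ_eval_add_one_sub])
    (by rw [hlast, chainPoly_succ_eval_last])

theorem chainPoly_eval_one_sub (δ ι : Fin n → ℚ) (x : ℚ) :
    (chainPoly n δ ι).eval (1 - x) = (-1) ^ n * (chainPoly n (1 - δ) (1 - ι)).eval x := by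
  induction n generalizing x with
  | zero => simp [chainPoly]
  | succ n ih =>
    suffices h : chainPoly (n + 1) δ ι =
        (-1 : ℚ) ^ (n + 1) • (chainPoly (n + 1) (1 - δ) (1 - ι)).comp (1 - X) by
      simp [h]
    refine (eq_chainPoly_succ (fun x => ?_) ?_).symm
    · have h := chainPoly_succ_eval_add_one_sub (1 - δ) (1 - ι) (-x)
      have hih := ih (Fin.init δ) (Fin.init ι) (ι (Fin.last n) - x)
      change _ = _ * (chainPoly n (Fin.init (1 - δ)) (Fin.init (1 - ι))).eval _ at hih
      simp only [eval_smul, eval_comp, eval_sub, eval_one, eval_X, smul_eq_mul]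
      rw [show -x + 1 - (1 - ι) (Fin.last n) = ι (Fin.last n) - x by
        rw [Pi.sub_apply, Pi.one_apply]; ring] at h
      rw [show 1 - (ι (Fin.last n) - x) = x + 1 - ι (Fin.last n) by ring] at hih
      rw [show 1 - (x + 1) = -x by ring, sub_eq_neg_add 1 x]
      linear_combination (-1 : ℚ) ^ n * h - hih
    · simp only [eval_smul, eval_comp, eval_sub, eval_one, eval_X, smul_eq_mul]
      exact mul_eq_zero_of_right _ (chainPoly_succ_eval_last (1 - δ) (1 - ι))

theorem chainPoly_eval_add (δ ι : Fin n → ℚ) (c x : ℚ) :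
    (chainPoly n (fun i => δ i + c) ι).eval (x + c) = (chainPoly n δ ι).eval x := by
  induction n generalizing x with
  | zero => simp [chainPoly]
  | succ n ih =>
    suffices h : chainPoly (n + 1) δ ι = (chainPoly (n + 1) (fun i => δ i + c) ι).comp (X + C c) by
      simp [h]
    refine (eq_chainPoly_succ (fun x => ?_) ?_).symm
    · have h := chainPoly_succ_eval_add_one_sub (fun i => δ i + c) ι (x + c)
      simp only [eval_comp, eval_add, eval_X, eval_C]
      rw [add_right_comm, h, ← ih (Fin.init δ) (Fin.init ι)]
      congr 1
      ring
    · simpa using chainPoly_succ_eval_last (fun i => δ i + c) ι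

end chainPoly

section chains

variable {n : ℕ}

def chains (δ ι : Fin n → ℕ) (v : ℕ) : Finset (Fin n → ℕ) :=
  {m ∈ Fintype.piFinset fun i => Finset.Ico (δ i) v |
    ∀ s (hs : s + 1 < n), m ⟨s, by omega⟩ + ι ⟨s + 1, hs⟩ ≤ m ⟨s + 1, hs⟩}

variable {δ ι : Fin n → ℕ} {v : ℕ} {m : Fin n → ℕ}

theorem mem_chains : m ∈ chains δ ι v ↔ (∀ i, δ i ≤ m i ∧ m i < v) ∧
    ∀ s (hs : s + 1 < n), m ⟨s, by omega⟩ + ι ⟨s + 1, hs⟩ ≤ m ⟨s + 1, hs⟩ := by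
  simp [chains]

theorem monotone_of_mem_chains (hm : m ∈ chains δ ι v) : Monotone m := by
  rintro ⟨i, hi⟩ ⟨j, hj⟩ (hij : i ≤ j)
  induction j, hij using Nat.le_induction with
  | base => rfl
  | succ j hij ih =>
    exact (ih (by omega)).trans (le_of_add_le_left ((mem_chains.1 hm).2 j hj))

theorem add_le_last_of_mem_chains {δ ι : Fin (n + 1) → ℕ} {m : Fin (n + 1) → ℕ}
    (hm : m ∈ chains δ ι v) (i : Fin n) : m i.castSucc + ι (Fin.last n) ≤ m (Fin.last n) := by
  obtain ⟨k, rfl⟩ : ∃ k, n = k + 1 := Nat.exists_eq_add_one.2 (Nat.zero_lt_of_lt i.2)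
  have hi := monotone_of_mem_chains hm (Fin.le_def.2 (Nat.le_of_lt_succ i.2) :
    i.castSucc ≤ ⟨k, by omega⟩)
  exact (Nat.add_le_add_right hi _).trans ((mem_chains.1 hm).2 k (by omega))

theorem init_mem_chains {δ ι : Fin (n + 1) → ℕ} {m : Fin (n + 1) → ℕ}
    (hm : m ∈ chains δ ι v) :
    Fin.init m ∈ chains (Fin.init δ) (Fin.init ι) (m (Fin.last n) + 1 - ι (Fin.last n)) := by
  obtain ⟨hbound, hstep⟩ := mem_chains.1 hm
  refine mem_chains.2 ⟨fun i => ⟨(hbound _).1, ?_⟩, fun s hs => hstep s (by omega)⟩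
  have := add_le_last_of_mem_chains hm i
  simp only [Fin.init]
  omega

theorem snoc_mem_chains {δ ι : Fin (n + 1) → ℕ} {m : Fin n → ℕ} {w : ℕ}
    (hm : m ∈ chains (Fin.init δ) (Fin.init ι) (w + 1 - ι (Fin.last n)))
    (hδw : δ (Fin.last n) ≤ w) (hwv : w < v) :
    (Fin.snoc m w : Fin (n + 1) → ℕ) ∈ chains δ ι v := by
  obtain ⟨hbound, hstep⟩ := mem_chains.1 hm
  refine mem_chains.2 ⟨fun i => ?_, fun s hs => ?_⟩
  · refine Fin.lastCases ?_ (fun i => ?_) i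
    · simpa using ⟨hδw, hwv⟩
    · have := hbound i
      simp only [Fin.snoc_castSucc, Fin.init] at this ⊢
      omega
  · rcases Nat.lt_or_ge (s + 1) n with h | h
    · change (Fin.snoc m w : Fin (n + 1) → ℕ) (Fin.castSucc ⟨s, by omega⟩) +
        ι (Fin.castSucc ⟨s + 1, h⟩) ≤ (Fin.snoc m w : Fin (n + 1) → ℕ) (Fin.castSucc ⟨s + 1, h⟩)
      simpa only [Fin.snoc_castSucc, Fin.init] using hstep s h
    · obtain rfl : n = s + 1 := by omega
      change (Fin.snoc m w : Fin (s + 2) → ℕ) (Fin.castSucc ⟨s, by omega⟩) + ι (Fin.last _) ≤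
        (Fin.snoc m w : Fin (s + 2) → ℕ) (Fin.last _)
      have := hbound ⟨s, by omega⟩
      simp only [Fin.snoc_castSucc, Fin.snoc_last]
      omega

theorem card_chains_succ (δ ι : Fin (n + 1) → ℕ) (v : ℕ) :
    (chains δ ι v).card = ∑ w ∈ Finset.Ico (δ (Fin.last n)) v,
      (chains (Fin.init δ) (Fin.init ι) (w + 1 - ι (Fin.last n))).card := by
  rw [Finset.card_eq_sum_card_fiberwise (f := fun m => m (Fin.last n))
    fun m hm => Finset.mem_Ico.2 ((mem_chains.1 hm).1 _)]
  refine Finset.sum_congr rfl fun w hw => ?_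
  rw [Finset.mem_Ico] at hw
  refine Finset.card_nbij' Fin.init (fun m => Fin.snoc m w) (fun m hm => ?_) (fun m hm => ?_)
    (fun m hm => ?_) (fun m _ => by simp)
  · obtain ⟨hmc, rfl⟩ := Finset.mem_filter.1 (Finset.mem_coe.1 hm)
    exact init_mem_chains hmc
  · exact Finset.mem_filter.2 ⟨snoc_mem_chains hm hw.1 hw.2, by simp⟩
  · rw [← (Finset.mem_filter.1 (Finset.mem_coe.1 hm)).2]
    exact Fin.snoc_init_self m

theorem chainPoly_eval_natCast (δ ι : Fin n → ℕ) (hι : ∀ i, ι i ≤ 1)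
    (hδι : ∀ s (hs : s + 1 < n), δ ⟨s, by omega⟩ + ι ⟨s + 1, hs⟩ ≤ δ ⟨s + 1, hs⟩ + 1)
    (hv : ∀ i : Fin n, (i : ℕ) + 1 = n → δ i ≤ v) :
    (chainPoly n (fun i => (δ i : ℚ)) (fun i => (ι i : ℚ))).eval (v : ℚ) = (chains δ ι v).card := by
  induction n generalizing v with
  | zero => simp [chainPoly, chains]
  | succ n ih =>
    have hδv := hv (Fin.last n) rfl
    clear hv
    induction v, hδv using Nat.le_induction with
    | base => simpa [card_chains_succ] using chainPoly_succ_eval_last (fun i => (δ i : ℚ)) _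
    | succ v hδv hcard =>
      have hΔ := chainPoly_succ_eval_add_one_sub (fun i => (δ i : ℚ)) (fun i => (ι i : ℚ)) v
      have hιv : ι (Fin.last n) ≤ v + 1 := by have := hι (Fin.last n); omega
      have hinit : (chainPoly n (Fin.init fun i => (δ i : ℚ)) (Fin.init fun i => (ι i : ℚ))).eval
          ((v + 1 - ι (Fin.last n) : ℕ) : ℚ) =
            (chains (Fin.init δ) (Fin.init ι) (v + 1 - ι (Fin.last n))).card :=
        ih (Fin.init δ) (Fin.init ι) (fun i => hι _) (fun s hs => hδι s (by omega))
          fun ⟨k, hk⟩ hkn => by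
            have := hδι k (by omega)
            rw [show (⟨k + 1, by omega⟩ : Fin (n + 1)) = Fin.last n from Fin.ext hkn] at this
            change δ ⟨k, _⟩ ≤ _
            omega
      rw [card_chains_succ, Finset.sum_Ico_succ_top hδv, ← card_chains_succ]
      push_cast [Nat.cast_sub hιv] at hinit ⊢
      linear_combination hΔ + hcard + hinit

end chains

/-- `sgn` may give `0` either sign: enriched partitions have no zero entries, while left enriched
ones count `0` as positive. -/
theorem natCard_eq_sum_card_of_sign_natAbs {n : ℕ} (sgn : ℤ → Bool)
    (hsgn : ∀ x, x ≠ 0 → sgn x = decide (0 < x)) (C : (Fin n → ℤ) → Prop)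
    (S : (Fin n → Bool) → Finset (Fin n → ℕ))
    (hC : ∀ a, C a ↔ (fun i => (a i).natAbs) ∈ S fun i => sgn (a i))
    (hS : ∀ ε, ∀ m ∈ S ε, ∀ i, m i = 0 → sgn 0 = ε i) :
    Nat.card {a // C a} = ∑ ε, (S ε).card := by
  have hdec (x : ℤ) : (if sgn x then (x.natAbs : ℤ) else -x.natAbs) = x := by
    rcases eq_or_ne x 0 with rfl | hx
    · simp
    · rw [hsgn x hx]
      split_ifs with h <;> simp at h <;> omega
  have hsgn_dec {ε m} (hm : m ∈ S ε) (i) : sgn (if ε i then (m i : ℤ) else -m i) = ε i := by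
    rcases eq_or_ne (m i) 0 with h | h
    · simpa [h] using hS ε m hm i h
    · rw [hsgn _ (by split_ifs <;> omega)]
      cases ε i <;> simp
      omega
  have habs (b : Bool) (k : ℕ) : (if b then (k : ℤ) else -k).natAbs = k := by cases b <;> simp
  let e : {a // C a} ≃ Σ ε, {m // m ∈ S ε} :=
    { toFun a := ⟨fun i => sgn (a.1 i), fun i => (a.1 i).natAbs, (hC a.1).1 a.2⟩
      invFun p := ⟨fun i => if p.1 i then (p.2.1 i : ℤ) else -p.2.1 i, (hC _).2 <| by
        simpa only [habs, hsgn_dec p.2.2] using p.2.2⟩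
      left_inv a := Subtype.ext (funext fun i => hdec (a.1 i))
      right_inv p := Sigma.subtype_ext (funext fun i => hsgn_dec p.2.2 i)
        (funext fun i => habs _ _) }
  rw [Nat.card_congr e, Nat.card_eq_fintype_card, Fintype.card_sigma]
  simp

section enriched

variable {n : ℕ}

/-- The strictness `ι` of the chain of absolute values of a signed `π`-partition with sign
vector `ε`: the step into position `s + 1` is strict at a descent of `π` iff entry `s` is
positive, and at an ascent iff entry `s + 1` is negative. The value at `0` never matters; it is
chosen so that flipping all signs complements every value. -/
def stepGap (π : Equiv.Perm (Fin n)) (ε : Fin n → Bool) : Fin n → ℕ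
  | ⟨0, h⟩ => if ε ⟨0, h⟩ then 0 else 1
  | ⟨s + 1, h⟩ =>
    if π ⟨s + 1, h⟩ < π ⟨s, by omega⟩ then (if ε ⟨s, by omega⟩ then 1 else 0)
    else (if ε ⟨s + 1, h⟩ then 0 else 1)

theorem stepGap_le_one (π : Equiv.Perm (Fin n)) (ε : Fin n → Bool) (i : Fin n) :
    stepGap π ε i ≤ 1 := by
  rcases i with ⟨_ | s, h⟩ <;> simp only [stepGap] <;> split_ifs <;> omega

theorem one_sub_stepGap (π : Equiv.Perm (Fin n)) (ε : Fin n → Bool) :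
    (1 - fun i => (stepGap π ε i : ℚ)) = fun i => (stepGap π (fun j => !ε j) i : ℚ) := by
  ext ⟨_ | s, h⟩ <;> simp only [Pi.sub_apply, Pi.one_apply, stepGap] <;> split_ifs <;> simp_all

theorem ek_step_iff (d : Prop) [Decidable d] (a : ℤ) {b : ℤ} (hb : b ≠ 0) :
    (if d then ek a < ek b ∨ a = b ∧ b < 0 else ek a < ek b ∨ a = b ∧ 0 < b) ↔
      a.natAbs + (if d then (if 0 < a then 1 else 0) else (if 0 < b then 0 else 1)) ≤ b.natAbs := by
  unfold ek
  split_ifs <;> omega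

theorem el_step_iff (d : Prop) [Decidable d] (a b : ℤ) :
    (if d then el a < el b ∨ a = b ∧ b < 0 else el a < el b ∨ a = b ∧ 0 ≤ b) ↔
      a.natAbs + (if d then (if 0 ≤ a then 1 else 0) else (if 0 ≤ b then 0 else 1)) ≤ b.natAbs := by
  unfold el
  split_ifs <;> omega

theorem enrichedCount_eq_sum_card_chains (π : Equiv.Perm (Fin n)) (k : ℕ) :
    enrichedCount π k = ∑ ε, (chains (fun _ => 1) (stepGap π ε) (k + 1)).card := by
  refine natCard_eq_sum_card_of_sign_natAbs (fun x => decide (0 < x)) (fun _ _ => rfl) _ _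
    (fun a => ?_) fun ε m hm i hi => absurd ((mem_chains.1 hm).1 i).1 (by omega)
  have hbound (i) : (a i ≠ 0 ∧ |a i| ≤ k) ↔ (1 ≤ (a i).natAbs ∧ (a i).natAbs < k + 1) := by
    rw [Int.abs_eq_natAbs]
    omega
  rw [mem_chains, forall_congr' hbound]
  refine and_congr_right fun h => forall₂_congr fun s hs => ?_
  rw [ek_step_iff _ _ (Int.natAbs_pos.1 (h _).1)]
  simp only [stepGap, decide_eq_true_eq]

theorem leftEnrichedCount_eq_sum_card_chains (π : Equiv.Perm (Fin n)) (k : ℕ) :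
    leftEnrichedCount π k =
      ∑ ε, (chains (fun i => if ε i then 0 else 1) (stepGap π ε) (k + 1)).card := by
  refine natCard_eq_sum_card_of_sign_natAbs (fun x => decide (0 ≤ x))
    (fun x hx => by simp only [decide_eq_decide]; omega) _ _ (fun a => ?_)
    fun ε m hm i hi => ?_
  · have hbound (i) : |a i| ≤ k ↔
        ((if 0 ≤ a i then 0 else 1) ≤ (a i).natAbs ∧ (a i).natAbs < k + 1) := by
      rw [Int.abs_eq_natAbs]
      split_ifs <;> omega
    simp only [mem_chains, forall_congr' hbound, decide_eq_true_eq]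
    refine and_congr_right fun _ => forall₂_congr fun s hs => ?_
    rw [el_step_iff]
    simp only [stepGap, decide_eq_true_eq]
  · have := ((mem_chains.1 hm).1 i).1
    cases h : ε i <;> simp_all

def enrichedPoly (π : Equiv.Perm (Fin n)) : ℚ[X] :=
  ∑ ε, chainPoly n 1 fun i => (stepGap π ε i : ℚ)

def leftEnrichedPoly (π : Equiv.Perm (Fin n)) : ℚ[X] :=
  ∑ ε, chainPoly n (fun i => if ε i then 0 else 1) fun i => (stepGap π ε i : ℚ)

theorem enrichedPoly_eval_natCast_add_one (π : Equiv.Perm (Fin n)) (k : ℕ) :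
    (enrichedPoly π).eval ((k : ℚ) + 1) = enrichedCount π k := by
  rw [enrichedCount_eq_sum_card_chains, enrichedPoly, eval_finsetSum, Nat.cast_sum]
  refine Finset.sum_congr rfl fun ε _ => ?_
  have hgap := stepGap_le_one π ε
  have h := chainPoly_eval_natCast (fun _ => 1) (stepGap π ε) hgap
    (fun s hs => by have := hgap ⟨s + 1, hs⟩; omega) (v := k + 1) fun _ _ => by omega
  push_cast at h
  exact h

theorem leftEnrichedPoly_eval_natCast_add_one (π : Equiv.Perm (Fin n)) (k : ℕ) :
    (leftEnrichedPoly π).eval ((k : ℚ) + 1) = leftEnrichedCount π k := by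
  rw [leftEnrichedCount_eq_sum_card_chains, leftEnrichedPoly, eval_finsetSum, Nat.cast_sum]
  refine Finset.sum_congr rfl fun ε _ => ?_
  have h := chainPoly_eval_natCast (fun i => if ε i then 0 else 1) (stepGap π ε)
    (stepGap_le_one π ε) (fun s hs => ?_) (v := k + 1) fun _ _ => by split_ifs <;> omega
  · simpa [apply_ite (Nat.cast : ℕ → ℚ)] using h
  · simp only [stepGap]
    split_ifs <;> simp_all

theorem enrichedPoly_eval_two_sub (π : Equiv.Perm (Fin n)) (x : ℚ) :
    (enrichedPoly π).eval (2 - x) = (-1) ^ n * (enrichedPoly π).eval x := by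
  rw [enrichedPoly, eval_finsetSum, eval_finsetSum, Finset.mul_sum]
  refine Fintype.sum_equiv (Equiv.piCongrRight fun _ => Equiv.boolNot) _ _ fun ε => ?_
  have hshift := chainPoly_eval_add 0 (fun i => (stepGap π (fun j => !ε j) i : ℚ)) 1 (x - 1)
  simp only [Pi.zero_apply, zero_add, sub_add_cancel] at hshift
  rw [show 2 - x = 1 - (x - 1) by ring, chainPoly_eval_one_sub, sub_self, one_sub_stepGap,
    ← hshift]
  rfl

theorem leftEnrichedPoly_eval_one_sub (π : Equiv.Perm (Fin n)) (x : ℚ) :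
    (leftEnrichedPoly π).eval (1 - x) = (-1) ^ n * (leftEnrichedPoly π).eval x := by
  rw [leftEnrichedPoly, eval_finsetSum, eval_finsetSum, Finset.mul_sum]
  refine Fintype.sum_equiv (Equiv.piCongrRight fun _ => Equiv.boolNot) _ _ fun ε => ?_
  have hδ : (1 - fun i => if ε i then (0 : ℚ) else 1) = fun i => if !ε i then 0 else 1 :=
    funext fun i => by cases h : ε i <;> simp [h]
  rw [chainPoly_eval_one_sub, hδ, one_sub_stepGap]
  rfl

end enriched

theorem stmt11 (n : ℕ) (π : Equiv.Perm (Fin n)) (P Q : Polynomial ℚ)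
    (hP : ∀ k : ℕ, 0 < k → P.eval (k : ℚ) = (enrichedCount π k : ℚ))
    (hQ : ∀ k : ℕ, 0 < k → Q.eval (k : ℚ) = (leftEnrichedCount π k : ℚ)) :
    (∀ x : ℚ, P.eval (-x) = (-1) ^ n * P.eval x) ∧
    (∀ x : ℚ, Q.eval (-x - 1 / 2) = (-1) ^ n * Q.eval (x - 1 / 2)) := by
  have hP' := eval_eq_eval_add_one_of_eval_natCast hP (enrichedPoly_eval_natCast_add_one π)
  have hQ' := eval_eq_eval_add_one_of_eval_natCast hQ (leftEnrichedPoly_eval_natCast_add_one π)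
  refine ⟨fun x => ?_, fun x => ?_⟩
  · rw [hP', hP', ← enrichedPoly_eval_two_sub, show 2 - (x + 1) = -x + 1 by ring]
  · rw [hQ', hQ', ← leftEnrichedPoly_eval_one_sub,
      show 1 - (x - 1 / 2 + 1) = -x - 1 / 2 + 1 by ring]
end
end

section
/- The interior peak polynomial W_n(t) = Σ_{π ∈ S_n} t^{pe(π)+1} satisfies W_n(4t/(1+t)^2) = (2^{n+1}/(1+t)^{n+1})·A_n(t), where A_n(t) = Σ_{π ∈ S_n} t^{des(π)+1} is the Eulerian polynomial. -/
/-!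
Split an arrangement `w` of a finite linearly ordered set `S` at its largest letter `m`, as
`w = a ++ m :: b`. Descents of `w` are those of `a` and `b`, plus one (`m` followed by a smaller
letter) when `b ≠ []`; peaks of `w` are those of `a` and `b`, plus the peak at `m` when both
`a` and `b` are nonempty. Summing over the set `A` of letters of `a`, the descent polynomial
`D(S) = ∑ t ^ des w` and the peak polynomial `P(S) = ∑ q ^ pk w` therefore satisfy recurrences
over `A ⊆ S \ {m}` with the same interior terms up to the weights `t` and `q`. For
`q = 4t/(1+t)^2` induction on `|S|` gives `P(S) = (2/(1+t))^(|S|-1) D(S)`: the interior terms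
match term by term, and the two boundary terms `A = ∅` and `A = S \ {m}` contribute
`2 P(S \ {m})` and `(1+t) D(S \ {m})`. Applied to `S = {1, …, n}` through one-line notation,
this is the theorem.
-/

open scoped Classical

noncomputable section

section ListStatistics

variable {α : Type*} [LinearOrder α]

def descentCount : List α → ℕ
  | a :: b :: l => (if b < a then 1 else 0) + descentCount (b :: l)
  | _ => 0

def peakCount : List α → ℕ
  | a :: b :: c :: l => (if a < b ∧ c < b then 1 else 0) + peakCount (b :: c :: l)
  | _ => 0

lemma descentCount_cons_of_forall_lt {m : α} {b : List α} (hb : ∀ x ∈ b, x < m) :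
    descentCount (m :: b) = descentCount b + if b = [] then 0 else 1 := by
  rcases b with _ | ⟨x, b⟩
  · rfl
  · simp [descentCount, hb x (by simp), add_comm]

lemma descentCount_append_cons_of_forall_lt {a b : List α} {m : α}
    (ha : ∀ x ∈ a, x < m) (hb : ∀ x ∈ b, x < m) :
    descentCount (a ++ m :: b) = descentCount a + descentCount b + if b = [] then 0 else 1 := by
  induction a with
  | nil => simp [descentCount_cons_of_forall_lt hb, descentCount]
  | cons p a ih =>
    rcases a with _ | ⟨q, a⟩
    · simp [descentCount, descentCount_cons_of_forall_lt hb, (ha p (by simp)).le]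
    · simp only [List.cons_append, descentCount] at ih ⊢
      rw [ih (fun x hx => ha x (List.mem_cons_of_mem _ hx))]
      omega

lemma peakCount_cons_of_forall_lt {m : α} {b : List α} (hb : ∀ x ∈ b, x < m) :
    peakCount (m :: b) = peakCount b := by
  rcases b with _ | ⟨x, _ | ⟨y, b⟩⟩
  · rfl
  · rfl
  · simp [peakCount, (hb x (by simp)).le]

lemma peakCount_append_cons_of_forall_lt {a b : List α} {m : α}
    (ha : ∀ x ∈ a, x < m) (hb : ∀ x ∈ b, x < m) :
    peakCount (a ++ m :: b) =
      peakCount a + peakCount b + if a ≠ [] ∧ b ≠ [] then 1 else 0 := by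
  induction a with
  | nil => simp [peakCount_cons_of_forall_lt hb, peakCount]
  | cons p a ih =>
    have ha' := fun x hx => ha x (List.mem_cons_of_mem p hx)
    rcases a with _ | ⟨q, _ | ⟨r, a⟩⟩
    · rcases b with _ | ⟨x, b⟩
      · rfl
      · simp [peakCount, peakCount_cons_of_forall_lt hb, ha p, hb x, add_comm]
    · simp only [List.cons_append, List.nil_append] at ih ⊢
      simp [peakCount, ih ha', (ha' q (by simp)).le]
    · simp only [List.cons_append, peakCount] at ih ⊢
      rw [ih ha']
      simp [add_assoc]

lemma descentCount_map_range (f : ℕ → α) (n : ℕ) :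
    descentCount ((List.range n).map f) =
      ((Finset.range (n - 1)).filter fun i => f (i + 1) < f i).card := by
  induction n generalizing f with
  | zero => rfl
  | succ n ih =>
    rcases n with _ | n
    · rfl
    · have ih' := ih (f ∘ Nat.succ)
      rw [List.range_succ_eq_map, List.map_cons, List.map_map] at ih' ⊢
      rw [List.range_succ_eq_map, List.map_cons, List.map_map, descentCount, ih',
        Finset.card_filter, Finset.card_filter, Nat.add_sub_cancel, Nat.add_sub_cancel,
        Finset.sum_range_succ', add_comm]
      rfl

lemma peakCount_map_range (f : ℕ → α) (n : ℕ) :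
    peakCount ((List.range n).map f) =
      ((Finset.range (n - 2)).filter fun i => f i < f (i + 1) ∧ f (i + 2) < f (i + 1)).card := by
  induction n generalizing f with
  | zero => rfl
  | succ n ih =>
    rcases n with _ | _ | n
    · rfl
    · rfl
    · have ih' := ih (f ∘ Nat.succ)
      simp only [List.range_succ_eq_map, List.map_cons, List.map_map, Function.comp_def] at ih' ⊢
      rw [peakCount, ih', Finset.card_filter, Finset.card_filter,
        show n + 1 + 1 + 1 - 2 = n + 1 by omega, Finset.sum_range_succ', add_comm]
      rfl

end ListStatistics

section Arrangements

variable {α : Type*} [DecidableEq α]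

def arrangements (S : Finset α) : Finset (List α) :=
  S.toList.permutations.toFinset

lemma mem_arrangements {S : Finset α} {l : List α} :
    l ∈ arrangements S ↔ l.Nodup ∧ l.toFinset = S := by
  rw [arrangements, List.mem_toFinset, List.mem_permutations]
  refine ⟨fun h => ⟨h.nodup_iff.2 S.nodup_toList, ?_⟩, fun ⟨hl, hS⟩ => ?_⟩
  · rw [List.toFinset_eq_of_perm _ _ h, S.toList_toFinset]
  · exact List.perm_of_nodup_nodup_toFinset_eq hl S.nodup_toList (by rw [hS, S.toList_toFinset])

lemma arrangements_empty : arrangements (∅ : Finset α) = {[]} := by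
  ext l
  simp only [mem_arrangements, List.toFinset_eq_empty_iff, Finset.mem_singleton]
  exact ⟨And.right, by rintro rfl; simp⟩

lemma card_arrangements (S : Finset α) :
    (arrangements S).card = S.card.factorial := by
  rw [arrangements, List.toFinset_card_of_nodup (List.nodup_permutations _ S.nodup_toList),
    List.length_permutations, Finset.length_toList]

lemma eq_nil_iff_of_mem_arrangements {A : Finset α} {a : List α} (ha : a ∈ arrangements A) :
    a = [] ↔ A = ∅ := by
  rw [← (mem_arrangements.1 ha).2, List.toFinset_eq_empty_iff]

lemma mem_of_mem_arrangements {A : Finset α} {a : List α} {x : α} (ha : a ∈ arrangements A)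
    (hx : x ∈ a) : x ∈ A :=
  (mem_arrangements.1 ha).2 ▸ List.mem_toFinset.2 hx

lemma eq_nil_iff_of_mem_arrangements_sdiff {S A : Finset α} {b : List α} (hA : A ⊆ S)
    (hb : b ∈ arrangements (S \ A)) : b = [] ↔ A = S := by
  rw [eq_nil_iff_of_mem_arrangements hb, Finset.sdiff_eq_empty_iff_subset]
  exact ⟨hA.antisymm, fun h => h.ge⟩

lemma append_cons_mem_arrangements {S A : Finset α} {m : α} {a b : List α} (hm : m ∈ S)
    (hA : A ⊆ S.erase m) (ha : a ∈ arrangements A) (hb : b ∈ arrangements (S.erase m \ A)) :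
    a ++ m :: b ∈ arrangements S := by
  obtain ⟨hna, rfl⟩ := mem_arrangements.1 ha
  obtain ⟨hnb, hbA⟩ := mem_arrangements.1 hb
  have hmb : m ∉ b := fun h => by simpa [hbA] using List.mem_toFinset.2 h
  refine mem_arrangements.2 ⟨List.nodup_append.2 ⟨hna, List.nodup_cons.2 ⟨hmb, hnb⟩, ?_⟩, ?_⟩
  · rintro x hxa _ (_ | ⟨_, hxb⟩) rfl
    · simpa using hA (List.mem_toFinset.2 hxa)
    · simpa [hbA, hxa] using List.mem_toFinset.2 hxb
  · rw [List.toFinset_append, List.toFinset_cons, hbA, Finset.union_insert,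
      Finset.union_sdiff_of_subset hA, Finset.insert_erase hm]

lemma mem_arrangements_of_append_cons_mem {S : Finset α} {m : α} {a b : List α}
    (h : a ++ m :: b ∈ arrangements S) :
    a.toFinset ⊆ S.erase m ∧ a ∈ arrangements a.toFinset ∧
      b ∈ arrangements (S.erase m \ a.toFinset) := by
  obtain ⟨hnd, rfl⟩ := mem_arrangements.1 h
  obtain ⟨ha, hmb', hab⟩ := List.nodup_append.1 hnd
  obtain ⟨hmb, hb⟩ := List.nodup_cons.1 hmb'
  refine ⟨fun x hx => ?_, mem_arrangements.2 ⟨ha, rfl⟩, mem_arrangements.2 ⟨hb, ?_⟩⟩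
  · rw [List.mem_toFinset] at hx
    simp [hx, hab x hx m (by simp)]
  · ext x
    simp only [List.mem_toFinset, Finset.mem_sdiff, Finset.mem_erase, List.mem_append,
      List.mem_cons]
    constructor
    · intro hx
      exact ⟨⟨ne_of_mem_of_not_mem hx hmb, .inr (.inr hx)⟩,
        fun hxa => hab x hxa x (List.mem_cons_of_mem m hx) rfl⟩
    · rintro ⟨⟨hxm, hxa | rfl | hxb⟩, hxa'⟩
      exacts [(hxa' hxa).elim, (hxm rfl).elim, hxb]

lemma sum_arrangements_eq_sum_powerset {M : Type*} [AddCommMonoid M] {S : Finset α} {m : α}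
    (hm : m ∈ S) (f : List α → M) :
    ∑ w ∈ arrangements S, f w =
      ∑ A ∈ (S.erase m).powerset, ∑ a ∈ arrangements A, ∑ b ∈ arrangements (S.erase m \ A),
        f (a ++ m :: b) := by
  rw [Finset.sum_congr rfl fun A _ =>
    (Finset.sum_product' (f := fun a b => f (a ++ m :: b)) _ _).symm, Finset.sum_sigma']
  symm
  refine Finset.sum_bij (fun x _ => x.2.1 ++ m :: x.2.2) ?_ ?_ ?_ (fun _ _ => rfl)
  · simp only [Finset.mem_sigma, Finset.mem_powerset, Finset.mem_product]
    exact fun x ⟨hA, ha, hb⟩ => append_cons_mem_arrangements hm hA ha hb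
  · simp only [Finset.mem_sigma, Finset.mem_powerset, Finset.mem_product]
    rintro ⟨A, a, b⟩ ⟨hA, ha, hb⟩ ⟨A', a', b'⟩ ⟨-, ha', -⟩ h
    dsimp only at hA ha hb ha' h
    have hma : m ∉ a := fun h => by simpa using hA (mem_of_mem_arrangements ha h)
    have hmb : m ∉ b := fun h => by simpa using mem_of_mem_arrangements hb h
    obtain ⟨rfl, -, rfl⟩ := (List.append_cons_inj_of_notMem hma hmb).1 h
    rw [← (mem_arrangements.1 ha).2, ← (mem_arrangements.1 ha').2]
  · intro w hw
    obtain ⟨a, b, rfl⟩ :=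
      List.mem_iff_append.1 (List.mem_toFinset.1 ((mem_arrangements.1 hw).2 ▸ hm))
    exact ⟨⟨a.toFinset, a, b⟩, by simpa using mem_arrangements_of_append_cons_mem hw, rfl⟩

lemma sum_arrangements_eq_sum_powerset_mul {R : Type*} [CommSemiring R] {S : Finset α} {m : α}
    (hm : m ∈ S) {f : List α → R} {c : Finset α → R}
    (hf : ∀ A ⊆ S.erase m, ∀ a ∈ arrangements A, ∀ b ∈ arrangements (S.erase m \ A),
      f (a ++ m :: b) = f a * f b * c A) :
    ∑ w ∈ arrangements S, f w = ∑ A ∈ (S.erase m).powerset,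
      (∑ a ∈ arrangements A, f a) * (∑ b ∈ arrangements (S.erase m \ A), f b) * c A := by
  rw [sum_arrangements_eq_sum_powerset hm]
  refine Finset.sum_congr rfl fun A hA => ?_
  rw [Finset.sum_mul_sum, Finset.sum_mul]
  refine Finset.sum_congr rfl fun a ha => ?_
  rw [Finset.sum_mul]
  exact Finset.sum_congr rfl fun b hb => hf A (Finset.mem_powerset.1 hA) a ha b hb

end Arrangements

lemma Finset.sum_powerset_eq_add_add_sum {α M : Type*} [DecidableEq α] [AddCommMonoid M]
    {s : Finset α} (hs : s.Nonempty) (f : Finset α → M) :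
    ∑ A ∈ s.powerset, f A = f ∅ + f s + ∑ A ∈ (s.powerset.erase ∅).erase s, f A := by
  rw [← Finset.add_sum_erase s.powerset f (Finset.empty_mem_powerset s),
    ← Finset.add_sum_erase (s.powerset.erase ∅) f
      (Finset.mem_erase.2 ⟨hs.ne_empty, Finset.mem_powerset_self s⟩),
    add_assoc]

section GeneratingFunctions

variable {α R : Type*} [LinearOrder α] [CommSemiring R]

def descentSum (t : R) (S : Finset α) : R := ∑ w ∈ arrangements S, t ^ descentCount w

def peakSum (q : R) (S : Finset α) : R := ∑ w ∈ arrangements S, q ^ peakCount w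

@[simp] lemma descentSum_empty (t : R) : descentSum t (∅ : Finset α) = 1 := by
  simp [descentSum, arrangements_empty, descentCount]

@[simp] lemma peakSum_empty (q : R) : peakSum q (∅ : Finset α) = 1 := by
  simp [peakSum, arrangements_empty, peakCount]

lemma forall_lt_max'_of_mem_arrangements {S A : Finset α} (hS : S.Nonempty)
    (hA : A ⊆ S.erase (S.max' hS)) {a : List α} (ha : a ∈ arrangements A) :
    ∀ x ∈ a, x < S.max' hS := by
  intro x hx
  obtain ⟨hxm, hxS⟩ := Finset.mem_erase.1 (hA (mem_of_mem_arrangements ha hx))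
  exact lt_of_le_of_ne (S.le_max' x hxS) hxm

lemma descentSum_eq_sum_powerset (t : R) {S : Finset α} (hS : S.Nonempty) :
    descentSum t S = ∑ A ∈ (S.erase (S.max' hS)).powerset,
      descentSum t A * descentSum t (S.erase (S.max' hS) \ A) *
        if A = S.erase (S.max' hS) then 1 else t := by
  refine sum_arrangements_eq_sum_powerset_mul (S.max'_mem hS) fun A hA a ha b hb => ?_
  have hb' := eq_nil_iff_of_mem_arrangements_sdiff hA hb
  rw [descentCount_append_cons_of_forall_lt (forall_lt_max'_of_mem_arrangements hS hA ha)
    (forall_lt_max'_of_mem_arrangements hS Finset.sdiff_subset hb)]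
  by_cases h : A = S.erase (S.max' hS) <;> simp [h, hb', pow_add]

lemma peakSum_eq_sum_powerset (q : R) {S : Finset α} (hS : S.Nonempty) :
    peakSum q S = ∑ A ∈ (S.erase (S.max' hS)).powerset,
      peakSum q A * peakSum q (S.erase (S.max' hS) \ A) *
        if A = ∅ ∨ A = S.erase (S.max' hS) then 1 else q := by
  refine sum_arrangements_eq_sum_powerset_mul (S.max'_mem hS) fun A hA a ha b hb => ?_
  have hb' := eq_nil_iff_of_mem_arrangements_sdiff hA hb
  rw [peakCount_append_cons_of_forall_lt (forall_lt_max'_of_mem_arrangements hS hA ha)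
    (forall_lt_max'_of_mem_arrangements hS Finset.sdiff_subset hb)]
  by_cases h₁ : A = ∅ <;> by_cases h₂ : A = S.erase (S.max' hS) <;>
    simp [h₁, h₂, eq_nil_iff_of_mem_arrangements ha, hb', pow_add]

lemma peakSum_mul_peakSum_mul_eq {t u : R} {A B : Finset α} (hA : A.Nonempty) (hB : B.Nonempty)
    (hPA : peakSum (4 * t * u ^ 2) A = (2 * u) ^ (A.card - 1) * descentSum t A)
    (hPB : peakSum (4 * t * u ^ 2) B = (2 * u) ^ (B.card - 1) * descentSum t B) :
    peakSum (4 * t * u ^ 2) A * peakSum (4 * t * u ^ 2) B * (4 * t * u ^ 2) =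
      (2 * u) ^ (A.card + B.card) * (descentSum t A * descentSum t B * t) := by
  obtain ⟨i, hi⟩ := Nat.exists_eq_add_one.2 hA.card_pos
  obtain ⟨j, hj⟩ := Nat.exists_eq_add_one.2 hB.card_pos
  rw [hPA, hPB, hi, hj, Nat.add_sub_cancel, Nat.add_sub_cancel]
  ring

theorem peakSum_eq_mul_descentSum {t u : R} (hu : (1 + t) * u = 1) {S : Finset α}
    (hS : S.Nonempty) :
    peakSum (4 * t * u ^ 2) S = (2 * u) ^ (S.card - 1) * descentSum t S := by
  induction S using Finset.strongInduction with
  | H S ih =>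
  set S' := S.erase (S.max' hS) with hS'
  have hcard : S.card - 1 = S'.card := (Finset.card_erase_of_mem (S.max'_mem hS)).symm
  rw [peakSum_eq_sum_powerset _ hS, descentSum_eq_sum_powerset _ hS, hcard, ← hS']
  rcases S'.eq_empty_or_nonempty with hS'e | hS'ne
  · simp [hS'e]
  obtain ⟨k, hk⟩ : ∃ k, S'.card = k + 1 := Nat.exists_eq_add_one.2 hS'ne.card_pos
  have hP' : peakSum (4 * t * u ^ 2) S' = (2 * u) ^ k * descentSum t S' := by
    simpa [hk] using ih S' (Finset.erase_ssubset (S.max'_mem hS)) hS'ne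
  have hmid : ∀ A ∈ (S'.powerset.erase ∅).erase S',
      peakSum (4 * t * u ^ 2) A * peakSum (4 * t * u ^ 2) (S' \ A) *
          (if A = ∅ ∨ A = S' then 1 else 4 * t * u ^ 2) =
        (2 * u) ^ (k + 1) * (descentSum t A * descentSum t (S' \ A) * if A = S' then 1 else t) := by
    intro A hA
    simp only [Finset.mem_erase, Finset.mem_powerset] at hA
    obtain ⟨hAS', hAe, hAsub⟩ := hA
    have hA : A.Nonempty := Finset.nonempty_iff_ne_empty.2 hAe
    have hB : (S' \ A).Nonempty := Finset.sdiff_nonempty.2 fun h => hAS' (hAsub.antisymm h)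
    have hAB : A.card + (S' \ A).card = k + 1 := by
      rw [add_comm, Finset.card_sdiff_add_card_eq_card hAsub, hk]
    have hS'S := Finset.erase_ssubset (S.max'_mem hS)
    rw [if_neg (by tauto), if_neg hAS', ← hAB]
    exact peakSum_mul_peakSum_mul_eq hA hB (ih A (hAsub.trans_ssubset hS'S) hA)
      (ih _ (Finset.sdiff_subset.trans_ssubset hS'S) hB)
  have hboundary : (2 * u) ^ (k + 1) * (descentSum t S' * t + descentSum t S') =
      (2 * u) ^ k * descentSum t S' + (2 * u) ^ k * descentSum t S' :=
    calc _ = 2 * (2 * u) ^ k * descentSum t S' * ((1 + t) * u) := by ring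
      _ = _ := by rw [hu]; ring
  rw [Finset.sum_powerset_eq_add_add_sum hS'ne, Finset.sum_powerset_eq_add_add_sum hS'ne,
    Finset.sum_congr rfl hmid, ← Finset.mul_sum]
  simp only [peakSum_empty, descentSum_empty, Finset.sdiff_empty, Finset.sdiff_self, hP', hk,
    if_true, true_or, or_true, if_neg hS'ne.ne_empty.symm, one_mul, mul_one]
  rw [mul_add _ (_ + _), hboundary]

end GeneratingFunctions

section Permutations

variable {n : ℕ}

def oneLine (π : Equiv.Perm (Fin n)) : List ℕ := (List.range n).map fun i => pval π (i + 1)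

lemma pval_add_one (π : Equiv.Perm (Fin n)) {i : ℕ} (hi : i < n) :
    pval π (i + 1) = π ⟨i, hi⟩ + 1 := by
  simp [pval, hi]

lemma des_eq_descentCount_oneLine (π : Equiv.Perm (Fin n)) :
    des π = descentCount (oneLine π) := by
  rw [oneLine, descentCount_map_range, des, desSet, Finset.card_filter, Finset.card_filter,
    Finset.sum_Ico_eq_sum_range]
  simp only [add_comm 1]

lemma card_intPk_eq_peakCount_oneLine (π : Equiv.Perm (Fin n)) :
    (intPk π).card = peakCount (oneLine π) := by
  rw [oneLine, peakCount_map_range, intPk, Finset.card_filter, Finset.card_filter,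
    show Finset.Ioo 1 n = Finset.Ico 2 n by ext; simp; omega, Finset.sum_Ico_eq_sum_range]
  refine Finset.sum_congr rfl fun i _ => ?_
  unfold isPk
  rw [show 2 + i - 1 = i + 1 by omega, show 2 + i + 1 = i + 2 + 1 by omega,
    show 2 + i = i + 1 + 1 by omega]
  -- `intPk` decides `isPk` classically, so only the `Decidable` instances differ
  congr

lemma oneLine_injective : Function.Injective (oneLine (n := n)) := by
  intro π σ h
  ext i
  have := congrArg (fun l => l[i.val]?) h
  simpa [oneLine, pval_add_one _ i.isLt] using this

lemma image_oneLine : Finset.univ.image (oneLine (n := n)) = arrangements (Finset.Icc 1 n) := by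
  refine Finset.eq_of_subset_of_card_le (fun w hw => ?_) ?_
  · obtain ⟨π, -, rfl⟩ := Finset.mem_image.1 hw
    refine mem_arrangements.2 ⟨List.Nodup.map_on (fun i hi j hj h => ?_) List.nodup_range, ?_⟩
    · rw [List.mem_range] at hi hj
      have := π.injective (Fin.ext (by simpa [pval_add_one π hi, pval_add_one π hj] using h))
      exact Fin.mk.inj_iff.1 this
    · ext x
      simp only [oneLine, List.mem_toFinset, List.mem_map, List.mem_range, Finset.mem_Icc]
      constructor
      · rintro ⟨i, hi, rfl⟩
        simp [pval_add_one π hi]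
      · rintro ⟨h1, h2⟩
        refine ⟨π.symm ⟨x - 1, by omega⟩, Fin.isLt _, ?_⟩
        rw [pval_add_one π (Fin.isLt _), Fin.eta, Equiv.apply_symm_apply, Fin.val_mk]
        omega
  · rw [card_arrangements, Finset.card_image_of_injective _ oneLine_injective, Nat.card_Icc,
      Finset.card_univ, Fintype.card_perm, Fintype.card_fin, Nat.add_sub_cancel]

lemma sum_perm_oneLine {M : Type*} [AddCommMonoid M] (g : List ℕ → M) :
    ∑ π : Equiv.Perm (Fin n), g (oneLine π) = ∑ w ∈ arrangements (Finset.Icc 1 n), g w := by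
  rw [← image_oneLine, Finset.sum_image oneLine_injective.injOn]

lemma descentSum_Icc {R : Type*} [CommSemiring R] (t : R) :
    descentSum t (Finset.Icc 1 n) = ∑ π : Equiv.Perm (Fin n), t ^ des π := by
  simp only [descentSum, ← sum_perm_oneLine, des_eq_descentCount_oneLine]

lemma peakSum_Icc {R : Type*} [CommSemiring R] (q : R) :
    peakSum q (Finset.Icc 1 n) = ∑ π : Equiv.Perm (Fin n), q ^ (intPk π).card := by
  simp only [peakSum, ← sum_perm_oneLine, card_intPk_eq_peakCount_oneLine]

end Permutations

lemma PowerSeries.inv_pow {k : Type*} [Field k] (φ : PowerSeries k) (m : ℕ) :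
    (φ ^ m)⁻¹ = φ⁻¹ ^ m := by
  induction m with
  | zero => simp
  | succ m ih => rw [pow_succ, PowerSeries.mul_inv_rev, ih, pow_succ']

open PowerSeries in
theorem stmt12 (n : ℕ) (hn : 1 ≤ n) :
    ∑ π : Equiv.Perm (Fin n),
        ((4 : PowerSeries ℚ) * X * (((1 + X) ^ 2)⁻¹)) ^ ((intPk π).card + 1) =
      2 ^ (n + 1) * ((1 + X) ^ (n + 1))⁻¹ *
        ∑ π : Equiv.Perm (Fin n), (X : PowerSeries ℚ) ^ (des π + 1) := by
  have hu : (1 + X : PowerSeries ℚ) * (1 + X)⁻¹ = 1 := PowerSeries.mul_inv_cancel _ (by simp)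
  have key := peakSum_eq_mul_descentSum hu (Finset.nonempty_Icc.2 hn)
  rw [peakSum_Icc, descentSum_Icc, Nat.card_Icc, Nat.add_sub_cancel] at key
  obtain ⟨k, rfl⟩ := Nat.exists_eq_add_of_le' hn
  simp only [pow_succ _ (intPk _).card, pow_succ _ (des _), ← Finset.sum_mul, PowerSeries.inv_pow,
    key, Nat.add_sub_cancel]
  ring
end
end
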